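/- arXiv:2208.07295 — 12 statements merged into one kernel-verified Lean document; each statement's English description precedes it below -/
import Mathlib

section
/- Let C be a non-degenerate [n,k] rank metric code over F_{q^m}/F_q with generator matrix G, and let X be the q-system associated to G (the F_q-span of the columns of G in F_{q^m}^k). Then for every codeword c = x·G with x ∈ F_{q^m}^k, one has rank(c) = n − dim_{F_q}(X ∩ H_x), where H_x is the kernel of the F_{q^m}-linear map e ↦ x·e on F_{q^m}^k. -/
/-- The rank (over the base field `K`) of a vector `c ∈ L^n`. -/
noncomputable def rankWeight (K : Type*) [Field K] {L : Type*} [Field L] [Algebra K L]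
    {n : ℕ} (c : Fin n → L) : ℕ :=
  Module.finrank K (Submodule.span K (Set.range c))

/-- If `C` is a non-degenerate `[n,k]` rank metric code over `F_{q^m}/F_q`
with generator matrix `G` and associated `q`-system `X` (the `F_q`-span of the columns of `G`
in `F_{q^m}^k`), then for every codeword `c = x·G`,
`rank(c) = n - dim_{F_q}(X ∩ H_x)` where `H_x = ker (e ↦ x·e)`. -/
theorem rank_eq_sub_finrank_inter_hyperplane
    {K L : Type*} [Field K] [Fintype K] [Field L] [Algebra K L]
    {n k : ℕ} (C : Submodule L (Fin n → L)) (hk : Module.finrank L C = k)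
    (G : Matrix (Fin k) (Fin n) L)
    (hG : C = Submodule.span L (Set.range fun i => G i))
    (hnondeg : ∀ a : Fin n → K, a ≠ 0 → ∃ c ∈ C, ∑ i, c i * algebraMap K L (a i) ≠ 0)
    (X : Submodule K (Fin k → L))
    (hX : X = Submodule.span K (Set.range fun j => fun i => G i j))
    (x : Fin k → L) (ψ : (Fin k → L) →ₗ[L] L)
    (hψ : ∀ e : Fin k → L, ψ e = ∑ i, x i * e i) :
    rankWeight K (Matrix.vecMul x G) =
      n - Module.finrank K ↥(X ⊓ (LinearMap.ker ψ).restrictScalars K) := by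
  classical
  set col : Fin n → (Fin k → L) := fun j => fun i => G i j with hcol
  -- columns are K-linearly independent
  have hli : LinearIndependent K col := by
    rw [Fintype.linearIndependent_iff]
    intro a ha
    by_contra h
    push_neg at h
    obtain ⟨j₀, hj₀⟩ := h
    have hane : a ≠ 0 := fun h0 => hj₀ (by simp [h0])
    obtain ⟨c, hcC, hc⟩ := hnondeg a hane
    apply hc
    -- linear functional vanishing on rows
    let φ : (Fin n → L) →ₗ[L] L :=
      { toFun := fun c => ∑ j, c j * algebraMap K L (a j)
        map_add' := by intro u v; simp [add_mul, Finset.sum_add_distrib]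
        map_smul' := by intro r v; simp [mul_assoc, Finset.mul_sum] }
    have hrow : ∀ i, φ (G i) = 0 := by
      intro i
      have := congrFun ha i
      simpa [φ, col, Algebra.smul_def, mul_comm] using this
    have hsub : C ≤ LinearMap.ker φ := by
      rw [hG, Submodule.span_le]
      rintro _ ⟨i, rfl⟩
      simpa using hrow i
    have := hsub hcC
    simpa [φ] using this
  have hXfin : FiniteDimensional K X := by
    rw [hX]; exact FiniteDimensional.span_of_finite K (Set.finite_range _)
  have hdimX : Module.finrank K X = n := by
    rw [hX]
    simpa using finrank_span_eq_card hli
  -- the K-linear map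
  set ψK := ψ.restrictScalars K with hψK
  set f : X →ₗ[K] L := ψK.comp X.subtype with hf
  have hrange : LinearMap.range f = Submodule.map ψK X := by
    rw [hf, LinearMap.range_comp, Submodule.range_subtype]
  -- span of codeword = image of X
  have hc_eq : Set.range (Matrix.vecMul x G) = ψK '' Set.range col := by
    ext y
    simp only [Set.mem_range, Set.mem_image]
    constructor
    · rintro ⟨j, rfl⟩
      exact ⟨col j, ⟨j, rfl⟩, by simp [Matrix.vecMul, dotProduct, hψ, col, ψK]⟩
    · rintro ⟨v, ⟨j, rfl⟩, rfl⟩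
      exact ⟨j, by simp [Matrix.vecMul, dotProduct, hψ, col, ψK]⟩
  have hspan : Submodule.span K (Set.range (Matrix.vecMul x G)) = Submodule.map ψK X := by
    rw [hc_eq, ← Submodule.map_span, ← hX]
  -- kernel
  have hker : LinearMap.ker f = Submodule.comap X.subtype
      ((X ⊓ (LinearMap.ker ψ).restrictScalars K : Submodule K (Fin k → L))) := by
    rw [hf, LinearMap.ker_comp, Submodule.comap_inf, Submodule.comap_subtype_self, top_inf_eq]
    rfl
  have hkerdim : Module.finrank K (LinearMap.ker f) =
      Module.finrank K ↥(X ⊓ (LinearMap.ker ψ).restrictScalars K) := by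
    rw [hker]
    exact (Submodule.comapSubtypeEquivOfLe inf_le_left).finrank_eq
  have hrn := LinearMap.finrank_range_add_finrank_ker f
  rw [hrange, hkerdim, hdimX] at hrn
  unfold rankWeight
  rw [hspan]
  omega
end

section
/- Let C be a non-degenerate [n,k,d] antipodal two-weight rank metric code over F_{q^m}/F_q with k ≥ 2. Then there exist an invertible matrix M ∈ F_q^{n×n}, an integer r with 1 ≤ r ≤ n−1, vectors c₁ ∈ F_{q^m}^{n−r} and c₂ ∈ F_{q^m}^{r} with rank(c₁|c₂) = n, and a matrix A ∈ F_{q^m}^{(k−1)×(n−r)} generating a non-degenerate rank metric code of dimension k−1 all of whose nonzero codewords have rank exactly d, such that the code C·M = {c·M : c ∈ C} is generated by the block matrix with first row (c₁ | c₂) and remaining rows (A | 0). -/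
section ATWaux

variable {K L : Type*} [Field K] [Field L] [Algebra K L] {n : ℕ}

/-- The `L`-linear pairing functional `c ↦ ∑ i, c i * algebraMap K L (a i)`. -/
noncomputable def pairF (L : Type*) [Field L] [Algebra K L] (a : Fin n → K) :
    (Fin n → L) →ₗ[L] L where
  toFun c := ∑ i, c i * algebraMap K L (a i)
  map_add' c d := by
    simp only [Pi.add_apply, add_mul]
    rw [Finset.sum_add_distrib]
  map_smul' r c := by
    simp only [Pi.smul_apply, smul_eq_mul, RingHom.id_apply, Finset.mul_sum, mul_assoc]

@[simp] lemma pairF_apply (a : Fin n → K) (c : Fin n → L) :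
    pairF L a c = ∑ i, c i * algebraMap K L (a i) := rfl

/-- The `K`-linear pairing `a ↦ ∑ i, c i * algebraMap K L (a i)`. -/
noncomputable def pairK (c : Fin n → L) : (Fin n → K) →ₗ[K] L where
  toFun a := ∑ i, c i * algebraMap K L (a i)
  map_add' a b := by
    simp only [Pi.add_apply, map_add, mul_add]
    rw [Finset.sum_add_distrib]
  map_smul' r a := by
    simp only [Pi.smul_apply, smul_eq_mul, map_mul, RingHom.id_apply, Algebra.smul_def,
      Finset.mul_sum]
    exact Finset.sum_congr rfl fun i _ => by ring

@[simp] lemma pairK_apply (c : Fin n → L) (a : Fin n → K) :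
    pairK c a = ∑ i, c i * algebraMap K L (a i) := rfl

lemma rankWeight_zero : rankWeight K (0 : Fin n → L) = 0 := by
  have h : Submodule.span K (Set.range (0 : Fin n → L)) = ⊥ := by
    rw [Submodule.span_eq_bot]
    rintro x ⟨i, rfl⟩; rfl
  rw [rankWeight, h, finrank_bot]

lemma linearIndependent_of_rankWeight_eq (c : Fin n → L) (h : rankWeight K c = n) :
    LinearIndependent K c := by
  rw [linearIndependent_iff_card_eq_finrank_span]
  have h2 : (Set.range c).finrank K = rankWeight K c := rfl
  rw [Fintype.card_fin, h2, h]

lemma pair_eq_zero_imp (c : Fin n → L) (h : rankWeight K c = n) (a : Fin n → K)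
    (ha : ∑ i, c i * algebraMap K L (a i) = 0) : a = 0 := by
  have hli := linearIndependent_of_rankWeight_eq (K := K) c h
  have hsum : ∑ i, a i • c i = 0 := by
    rw [← ha]
    exact Finset.sum_congr rfl fun i _ => by rw [Algebra.smul_def, mul_comm]
  have := Fintype.linearIndependent_iff.mp hli a hsum
  funext i; exact this i

lemma span_vecMul_le (c : Fin n → L) (M : Matrix (Fin n) (Fin n) K) :
    Submodule.span K (Set.range (Matrix.vecMul c (M.map (algebraMap K L)))) ≤
      Submodule.span K (Set.range c) := by
  rw [Submodule.span_le]
  rintro _ ⟨j, rfl⟩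
  have h : Matrix.vecMul c (M.map (algebraMap K L)) j = ∑ i, M i j • c i := by
    simp only [Matrix.vecMul, dotProduct, Matrix.map_apply]
    exact Finset.sum_congr rfl fun i _ => by rw [Algebra.smul_def, mul_comm]
  rw [h]
  exact Submodule.sum_mem _ fun i _ =>
    Submodule.smul_mem _ _ (Submodule.subset_span ⟨i, rfl⟩)

lemma rankWeight_vecMul (c : Fin n → L) {M N : Matrix (Fin n) (Fin n) K} (hMN : M * N = 1) :
    rankWeight K (Matrix.vecMul c (M.map (algebraMap K L))) = rankWeight K c := by
  have h1 : Matrix.vecMul (Matrix.vecMul c (M.map (algebraMap K L))) (N.map (algebraMap K L))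
      = c := by
    rw [Matrix.vecMul_vecMul, ← Matrix.map_mul, hMN,
      Matrix.map_one _ (map_zero _) (map_one _), Matrix.vecMul_one]
  have h2 := span_vecMul_le (K := K) (Matrix.vecMul c (M.map (algebraMap K L))) N
  rw [h1] at h2
  rw [rankWeight, rankWeight, le_antisymm (span_vecMul_le c M) h2]

end ATWaux

set_option maxHeartbeats 2000000 in
/-- A non-degenerate `[n,k,d]` antipodal two-weight rank metric code with
`k ≥ 2` is, after multiplication by an invertible matrix `M` over `F_q`, generated by a block
matrix whose first row `(c₁ | c₂)` has full rank `n` and whose remaining rows are of the form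
`(A | 0)`, where `A` generates a non-degenerate constant-weight-`d` code of dimension `k-1`. -/
theorem atw_generator_block_form
    {K L : Type*} [Field K] [Fintype K] [Field L] [Algebra K L]
    {n k d : ℕ} (hk : 2 ≤ k)
    (C : Submodule L (Fin n → L)) (hdim : Module.finrank L C = k)
    (hnondeg : ∀ a : Fin n → K, a ≠ 0 → ∃ c ∈ C, ∑ i, c i * algebraMap K L (a i) ≠ 0)
    (hmin : ∀ c ∈ C, c ≠ 0 → d ≤ rankWeight K c)
    (hdex : ∃ c ∈ C, c ≠ 0 ∧ rankWeight K c = d)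
    (hdn : d < n)
    (htw : ∀ c ∈ C, c ≠ 0 → rankWeight K c = d ∨ rankWeight K c = n)
    (hfull : ∃ c ∈ C, rankWeight K c = n) :
    ∃ M : Matrix (Fin n) (Fin n) K, IsUnit M ∧
    ∃ r : ℕ, 1 ≤ r ∧ r ≤ n - 1 ∧
    ∃ G : Matrix (Fin k) (Fin n) L,
      -- the code C·M is generated by G
      ((fun c : Fin n → L => fun j : Fin n => ∑ i, c i * algebraMap K L (M i j)) ''
          (C : Set (Fin n → L)) =
        (Submodule.span L (Set.range fun i => G i) : Set (Fin n → L))) ∧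
      -- the first row (c₁ | c₂) has full rank n
      rankWeight K (G ⟨0, by omega⟩) = n ∧
      -- the other rows have zero entries in the last r coordinates: shape (A | 0)
      (∀ i : Fin k, (i : ℕ) ≠ 0 → ∀ j : Fin n, n - r ≤ (j : ℕ) → G i j = 0) ∧
      -- A (the rows i ≠ 0 truncated to the first n - r coordinates) generates
      -- a non-degenerate constant weight [n-r, k-1] rank metric code of weight d
      (∀ hr : n - r ≤ n,
        let A : Fin (k - 1) → (Fin (n - r) → L) :=
          fun i => fun j => G ⟨(i : ℕ) + 1, by omega⟩ (Fin.castLE hr j)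
        let D : Submodule L (Fin (n - r) → L) := Submodule.span L (Set.range A)
        Module.finrank L D = k - 1 ∧
        (∀ a : Fin (n - r) → K, a ≠ 0 → ∃ v ∈ D, ∑ j, v j * algebraMap K L (a j) ≠ 0) ∧
        (∀ v ∈ D, v ≠ 0 → rankWeight K v = d)) := by
  classical
  have npos : 0 < n := Nat.lt_of_le_of_lt (Nat.zero_le d) hdn
  -- the distinguished nonzero K-vector
  set j₀ : Fin n := ⟨0, npos⟩ with hj₀
  set a₀ : Fin n → K := Pi.single j₀ 1 with ha₀def
  have ha₀ : a₀ ≠ 0 := by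
    intro h
    have := congrFun h j₀
    simp [ha₀def] at this
  -- the hyperplane H of C
  set H : Submodule L (Fin n → L) := C ⊓ LinearMap.ker (pairF L a₀) with hHdef
  have hHle : H ≤ C := inf_le_left
  have hmemH : ∀ x, x ∈ H ↔ x ∈ C ∧ ∑ i, x i * algebraMap K L (a₀ i) = 0 := by
    intro x
    rw [hHdef, Submodule.mem_inf, LinearMap.mem_ker, pairF_apply]
  have hfrH : Module.finrank L H = k - 1 := by
    set ev : C →ₗ[L] L := (pairF L a₀).comp C.subtype with hev
    obtain ⟨c, hcC, hcne⟩ := hnondeg a₀ ha₀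
    have h1 : ev ⟨c, hcC⟩ ≠ 0 := by simpa [hev] using hcne
    have hrange : LinearMap.range ev = ⊤ := by
      rw [LinearMap.range_eq_top]
      intro y
      refine ⟨(y * (ev ⟨c, hcC⟩)⁻¹) • ⟨c, hcC⟩, ?_⟩
      rw [map_smul, smul_eq_mul, mul_assoc, inv_mul_cancel₀ h1, mul_one]
    have h2 := LinearMap.finrank_range_add_finrank_ker ev
    rw [hrange, finrank_top, Module.finrank_self, hdim] at h2
    have h3 : H = Submodule.map C.subtype (LinearMap.ker ev) := by
      ext x
      rw [hmemH]
      constructor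
      · rintro ⟨hxC, hx0⟩
        exact ⟨⟨x, hxC⟩, by simpa [hev] using hx0, rfl⟩
      · rintro ⟨⟨y, hy⟩, hky, rfl⟩
        exact ⟨hy, by simpa [hev] using hky⟩
    rw [h3, Submodule.finrank_map_subtype_eq]
    omega
  have hk1 : 1 ≤ k - 1 := by omega
  -- the kernel space V
  set V : Submodule K (Fin n → K) := ⨅ (c : H), LinearMap.ker (pairK (c : Fin n → L)) with hVdef
  have hmemV : ∀ a, a ∈ V ↔ ∀ x ∈ H, ∑ i, x i * algebraMap K L (a i) = 0 := by
    intro a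
    simp only [hVdef, Submodule.mem_iInf, LinearMap.mem_ker, pairK_apply]
    exact ⟨fun h x hx => h ⟨x, hx⟩, fun h x => h x x.2⟩
  have ha₀V : a₀ ∈ V := (hmemV a₀).2 fun x hx => ((hmemH x).1 hx).2
  set r : ℕ := Module.finrank K V with hrdef
  have hr1 : 1 ≤ r := by
    rw [hrdef]
    rw [Nat.one_le_iff_ne_zero, ← Nat.pos_iff_ne_zero]
    rw [Module.finrank_pos_iff_exists_ne_zero]
    refine ⟨⟨a₀, ha₀V⟩, ?_⟩
    intro h
    exact ha₀ (congrArg Subtype.val h)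
  obtain ⟨h₁, hh₁H, hh₁ne⟩ : ∃ x ∈ H, x ≠ 0 := by
    by_contra hcon
    push_neg at hcon
    have hHbot : H = ⊥ := by
      rw [eq_bot_iff]
      intro x hx
      rw [Submodule.mem_bot]
      exact hcon x hx
    rw [hHbot, finrank_bot] at hfrH
    omega
  have hrn : r ≤ n - 1 := by
    have hle : r ≤ n := by
      rw [hrdef]
      have := Submodule.finrank_le V
      rwa [Module.finrank_fin_fun] at this
    have hne : r ≠ n := by
      intro h
      have hVtop : V = ⊤ := by
        apply Submodule.eq_top_of_finrank_eq
        rw [← hrdef, h, Module.finrank_fin_fun]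
      have : h₁ = 0 := by
        funext j
        have hj : Pi.single j (1 : K) ∈ V := hVtop ▸ Submodule.mem_top
        have hz := (hmemV _).1 hj h₁ hh₁H
        rw [Finset.sum_eq_single j] at hz
        · simpa using hz
        · intro b _ hb
          simp [Pi.single_eq_of_ne hb]
        · intro hj'
          exact absurd (Finset.mem_univ j) hj'
      exact hh₁ne this
    omega
  -- the adapted basis B of K^n
  obtain ⟨U, hUV⟩ := Submodule.exists_isCompl V
  have hUfr : Module.finrank K U = n - r := by
    have := Submodule.finrank_add_eq_of_isCompl hUV
    rw [Module.finrank_fin_fun, ← hrdef] at this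
    omega
  let bv : Module.Basis (Fin r) K V := Module.finBasisOfFinrankEq K V hrdef.symm
  let bu : Module.Basis (Fin (n - r)) K U := Module.finBasisOfFinrankEq K U hUfr
  let e : (Fin (n - r) ⊕ Fin r) ≃ Fin n := finSumFinEquiv.trans (finCongr (by omega))
  let B : Module.Basis (Fin n) K (Fin n → K) :=
    ((bu.prod bv).map (Submodule.prodEquivOfIsCompl U V hUV.symm)).reindex e
  have heval : ∀ t : Fin r, ((e (Sum.inr t)) : ℕ) = (n - r) + (t : ℕ) := by
    intro t
    simp [e, finSumFinEquiv_apply_right]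
  have hBinr : ∀ t : Fin r, B (e (Sum.inr t)) = (bv t : Fin n → K) := by
    intro t
    simp only [B, Module.Basis.reindex_apply, Equiv.symm_apply_apply, Module.Basis.map_apply]
    have h : (bu.prod bv) (Sum.inr t) = (0, bv t) :=
      Prod.ext (Module.Basis.prod_apply_inr_fst _ _ _) (Module.Basis.prod_apply_inr_snd _ _ _)
    rw [h, Submodule.coe_prodEquivOfIsCompl']
    simp
  have hBV : ∀ j : Fin n, n - r ≤ (j : ℕ) → B j ∈ V := by
    intro j hj
    have hjlt := j.isLt
    set t : Fin r := ⟨(j : ℕ) - (n - r), by omega⟩ with ht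
    have het : e (Sum.inr t) = j := by
      apply Fin.ext
      rw [heval t]
      simp only [ht]
      omega
    rw [← het, hBinr t]
    exact (bv t).2
  have hVspan : Submodule.span K (Set.range fun t => ((bv t : Fin n → K))) = V := by
    conv_rhs => rw [← Submodule.map_subtype_top V, ← bv.span_eq, Submodule.map_span]
    congr 1
    rw [← Set.range_comp]
    rfl
  -- the matrix M
  set M : Matrix (Fin n) (Fin n) K := (Pi.basisFun K (Fin n)).toMatrix ⇑B with hMdef
  have hMapp : ∀ i j, M i j = B j i := by
    intro i j
    simp [hMdef, Module.Basis.toMatrix_apply]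
  have hMunit : IsUnit M := by
    haveI := (Pi.basisFun K (Fin n)).invertibleToMatrix B
    exact isUnit_of_invertible M
  obtain ⟨Mu, hMu⟩ := hMunit
  set N : Matrix (Fin n) (Fin n) K := ↑Mu⁻¹ with hNdef
  have hMN : M * N = 1 := by rw [← hMu, hNdef]; exact Mu.mul_inv
  have hNM : N * M = 1 := by rw [← hMu, hNdef]; exact Mu.inv_mul
  -- the linear map T = (· ᵥ* M) over L
  set T : (Fin n → L) →ₗ[L] (Fin n → L) := Matrix.vecMulLinear (M.map (algebraMap K L))
    with hTdef
  have hTapp : ∀ (c : Fin n → L) (j : Fin n), T c j = ∑ i, c i * algebraMap K L (M i j) := by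
    intro c j
    simp [hTdef, Matrix.vecMulLinear_apply, Matrix.vecMul, dotProduct, Matrix.map_apply]
  have hTvec : ∀ c : Fin n → L, T c = Matrix.vecMul c (M.map (algebraMap K L)) := fun c => rfl
  have hTinv : ∀ c : Fin n → L, Matrix.vecMul (T c) (N.map (algebraMap K L)) = c := by
    intro c
    rw [hTvec, Matrix.vecMul_vecMul, ← Matrix.map_mul, hMN,
      Matrix.map_one _ (map_zero _) (map_one _), Matrix.vecMul_one]
  have hTinj : Function.Injective T := by
    intro x y hxy
    have h := congrArg (fun z => Matrix.vecMul z (N.map (algebraMap K L))) hxy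
    simpa [hTinv] using h
  have hTzero : ∀ x ∈ H, ∀ j : Fin n, n - r ≤ (j : ℕ) → T x j = 0 := by
    intro x hx j hj
    rw [hTapp]
    have hcol : (fun i => M i j) ∈ V := by
      have h := hBV j hj
      have : (fun i => M i j) = B j := by funext i; rw [hMapp]
      rw [this]
      exact h
    simpa using (hmemV _).1 hcol x hx
  -- the full-rank codeword
  obtain ⟨c₀, hc₀C, hc₀rank⟩ := hfull
  have hc₀ne : c₀ ≠ 0 := by
    intro h
    rw [h, rankWeight_zero] at hc₀rank
    omega
  have hc₀H : c₀ ∉ H := by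
    intro hc
    exact ha₀ (pair_eq_zero_imp (K := K) c₀ hc₀rank a₀ ((hmemH c₀).1 hc).2)
  -- basis of H
  let bH : Module.Basis (Fin (k - 1)) L H := Module.finBasisOfFinrankEq L H hfrH
  -- the generator matrix G
  set G : Matrix (Fin k) (Fin n) L := (fun i =>
    if h : (i : ℕ) = 0 then T c₀
    else T ((bH ⟨(i : ℕ) - 1, by have := i.isLt; omega⟩ : Fin n → L)) :
      (Fin k) → (Fin n) → L) with hGdef
  have hG0 : ∀ (h0 : (0 : ℕ) < k), G ⟨0, h0⟩ = T c₀ := by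
    intro h0
    rw [hGdef]
    exact dif_pos rfl
  have hGi : ∀ (i : Fin k) (hi : (i : ℕ) ≠ 0),
      G i = T ((bH ⟨(i : ℕ) - 1, by have := i.isLt; omega⟩ : Fin n → L)) := by
    intro i hi
    rw [hGdef]
    exact dif_neg hi
  have hHspan : Submodule.span L (Set.range fun t => ((bH t : Fin n → L))) = H := by
    conv_rhs => rw [← Submodule.map_subtype_top H, ← bH.span_eq, Submodule.map_span]
    congr 1
    rw [← Set.range_comp]
    rfl
  have hCspan : C = Submodule.span L (insert c₀ (Set.range fun t => ((bH t : Fin n → L)))) := by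
    have hSle : Submodule.span L (insert c₀ (Set.range fun t => ((bH t : Fin n → L)))) ≤ C := by
      rw [Submodule.span_le]
      intro x hx
      rcases Set.mem_insert_iff.1 hx with rfl | ⟨t, rfl⟩
      · exact hc₀C
      · exact hHle (bH t).2
    have hfrS : Module.finrank L
        (Submodule.span L (insert c₀ (Set.range fun t => ((bH t : Fin n → L))))) = k := by
      rw [Submodule.span_insert, hHspan]
      have hdisj : (Submodule.span L {c₀}) ⊓ H = ⊥ := by
        rw [eq_bot_iff]
        intro x hx
        obtain ⟨hx1, hx2⟩ := Submodule.mem_inf.1 hx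
        obtain ⟨l, rfl⟩ := Submodule.mem_span_singleton.1 hx1
        rcases eq_or_ne l 0 with rfl | hl
        · simp
        · exfalso
          apply hc₀H
          have : c₀ = l⁻¹ • (l • c₀) := by rw [smul_smul, inv_mul_cancel₀ hl, one_smul]
          rw [this]
          exact H.smul_mem _ hx2
      have hsum := Submodule.finrank_sup_add_finrank_inf_eq (Submodule.span L {c₀}) H
      rw [hdisj, finrank_bot, finrank_span_singleton hc₀ne, hfrH] at hsum
      omega
    refine (Submodule.eq_of_le_of_finrank_le hSle ?_).symm
    rw [hdim, hfrS]
  have hrangeG : (Set.range fun i => G i) =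
      ⇑T '' (insert c₀ (Set.range fun t => ((bH t : Fin n → L)))) := by
    ext x
    constructor
    · rintro ⟨i, rfl⟩
      by_cases hi : (i : ℕ) = 0
      · refine ⟨c₀, Set.mem_insert _ _, ?_⟩
        rw [hGdef]
        symm
        exact dif_pos hi
      · refine ⟨(bH ⟨(i : ℕ) - 1, by have := i.isLt; omega⟩ : Fin n → L),
          Set.mem_insert_of_mem _ ⟨_, rfl⟩, (hGi i hi).symm⟩
    · rintro ⟨y, hy, rfl⟩
      rcases Set.mem_insert_iff.1 hy with rfl | ⟨t, rfl⟩
      · exact ⟨⟨0, by omega⟩, hG0 (by omega)⟩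
      · refine ⟨⟨(t : ℕ) + 1, by have := t.isLt; omega⟩, ?_⟩
        show G ⟨(t : ℕ) + 1, by have := t.isLt; omega⟩ = _
        rw [hGi ⟨(t : ℕ) + 1, by have := t.isLt; omega⟩ (by simp)]
        have hidx : (⟨((⟨(t : ℕ) + 1, by have := t.isLt; omega⟩ : Fin k) : ℕ) - 1,
            by have := t.isLt; omega⟩ : Fin (k - 1)) = t := Fin.ext (by simp)
        rw [hidx]
  refine ⟨M, ⟨Mu, hMu⟩, r, hr1, hrn, G, ?_, ?_, ?_, ?_⟩
  · -- image equality
    have hfun : (fun c : Fin n → L => fun j : Fin n => ∑ i, c i * algebraMap K L (M i j))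
        = ⇑T := by
      funext c j
      rw [hTapp]
    rw [hfun, hrangeG, hCspan, ← Submodule.map_coe T, Submodule.map_span]
  · -- first row has rank n
    rw [hG0 (by omega), hTvec, rankWeight_vecMul c₀ hMN]
    exact hc₀rank
  · -- other rows vanish on last r coordinates
    intro i hi j hj
    rw [hGi i hi]
    exact hTzero _ (bH _).2 j hj
  · -- the truncated code
    intro hr
    intro AA DD
    set tr : (Fin n → L) →ₗ[L] (Fin (n - r) → L) := LinearMap.funLeft L L (Fin.castLE hr)
      with htrdef
    have hAA : ∀ i : Fin (k - 1), AA i = tr (T ((bH i : Fin n → L))) := by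
      intro i
      funext j
      show G ⟨(i : ℕ) + 1, by have := i.isLt; omega⟩ (Fin.castLE hr j) = _
      rw [hGi ⟨(i : ℕ) + 1, by have := i.isLt; omega⟩ (by simp)]
      have hidx : (⟨((⟨(i : ℕ) + 1, by have := i.isLt; omega⟩ : Fin k) : ℕ) - 1,
          by have := i.isLt; omega⟩ : Fin (k - 1)) = i := by
        apply Fin.ext
        simp
      rw [hidx]
      rfl
    have hDeq : DD = Submodule.map (tr ∘ₗ T) H := by
      show Submodule.span L (Set.range AA) = _
      have h : Set.range AA = ⇑(tr ∘ₗ T) '' (Set.range fun t => ((bH t : Fin n → L))) := by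
        rw [← Set.range_comp]
        exact congrArg Set.range (funext fun i => by rw [hAA i]; rfl)
      rw [h, ← Submodule.map_span, hHspan]
    have hinj : Function.Injective ((tr ∘ₗ T) ∘ₗ H.subtype) := by
      rw [← LinearMap.ker_eq_bot, eq_bot_iff]
      rintro ⟨x, hxH⟩ hx
      rw [LinearMap.mem_ker] at hx
      have hTx : T x = 0 := by
        funext j
        by_cases hj : (j : ℕ) < n - r
        · have h := congrFun hx ⟨(j : ℕ), hj⟩
          have hcast : Fin.castLE hr ⟨(j : ℕ), hj⟩ = j := Fin.ext rfl
          simpa [htrdef, LinearMap.funLeft_apply, hcast] using h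
        · exact hTzero x hxH j (by omega)
      have hx0 : x = 0 := hTinj (by rw [hTx, map_zero])
      rw [Submodule.mem_bot]
      exact Subtype.ext hx0
    have hDrange : DD = LinearMap.range ((tr ∘ₗ T) ∘ₗ H.subtype) := by
      rw [LinearMap.range_comp, Submodule.range_subtype, ← hDeq]
    refine ⟨?_, ?_, ?_⟩
    · rw [hDrange, LinearMap.finrank_range_of_inj hinj, hfrH]
    · -- non-degeneracy
      intro a ha
      by_contra hcon
      push_neg at hcon
      set b : Fin n → K := fun j => if hj : (j : ℕ) < n - r then a ⟨(j : ℕ), hj⟩ else 0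
        with hbdef
      have key : ∀ x ∈ H, ∑ j, (T x) j * algebraMap K L (b j) = 0 := by
        intro x hx
        have hv : tr (T x) ∈ DD := by
          rw [hDeq]
          exact ⟨x, hx, rfl⟩
        have h0 := hcon _ hv
        have himg : ∀ j : Fin n, j ∉ Finset.image (Fin.castLE hr) Finset.univ →
            (T x) j * algebraMap K L (b j) = 0 := by
          intro j hj
          have hnlt : ¬ (j : ℕ) < n - r := by
            intro hlt
            exact hj (Finset.mem_image.2 ⟨⟨(j : ℕ), hlt⟩, Finset.mem_univ _, Fin.ext rfl⟩)
          rw [hbdef]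
          simp [hnlt]
        calc ∑ j, (T x) j * algebraMap K L (b j)
            = ∑ j ∈ Finset.image (Fin.castLE hr) Finset.univ,
              (T x) j * algebraMap K L (b j) :=
              (Finset.sum_subset (Finset.subset_univ _) (fun j _ hj => himg j hj)).symm
          _ = ∑ j' : Fin (n - r), (T x) (Fin.castLE hr j')
              * algebraMap K L (b (Fin.castLE hr j')) :=
              Finset.sum_image (fun p _ q _ hpq => Fin.castLE_injective hr hpq)
          _ = ∑ j', tr (T x) j' * algebraMap K L (a j') := by
              refine Finset.sum_congr rfl fun j' _ => ?_
              have hblt : ((Fin.castLE hr j' : Fin n) : ℕ) < n - r := j'.isLt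
              rw [hbdef]
              simp only [dif_pos hblt]
              have : (⟨((Fin.castLE hr j' : Fin n) : ℕ), hblt⟩ : Fin (n - r)) = j' :=
                Fin.ext rfl
              rw [this]
              rfl
          _ = 0 := h0
      have hMb : M.mulVec b ∈ V := by
        rw [hmemV]
        intro x hx
        have hcalc : ∑ i, x i * algebraMap K L ((M.mulVec b) i)
            = ∑ j, (T x) j * algebraMap K L (b j) := by
          calc ∑ i, x i * algebraMap K L ((M.mulVec b) i)
              = ∑ i, ∑ j, x i * (algebraMap K L (M i j) * algebraMap K L (b j)) := by
                refine Finset.sum_congr rfl fun i _ => ?_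
                rw [Matrix.mulVec, dotProduct, map_sum, Finset.mul_sum]
                exact Finset.sum_congr rfl fun j _ => by rw [map_mul]
            _ = ∑ j, ∑ i, (x i * algebraMap K L (M i j)) * algebraMap K L (b j) := by
                rw [Finset.sum_comm]
                exact Finset.sum_congr rfl fun j _ =>
                  Finset.sum_congr rfl fun i _ => by ring
            _ = ∑ j, (T x) j * algebraMap K L (b j) := by
                refine Finset.sum_congr rfl fun j _ => ?_
                rw [hTapp, Finset.sum_mul]
        rw [hcalc]
        exact key x hx
      set P : Submodule K (Fin n → K) :=
        Submodule.span K (Set.range fun t : Fin r =>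
          (Pi.single (e (Sum.inr t)) (1 : K) : Fin n → K)) with hPdef
      have hsingle : ∀ t : Fin r,
          (Matrix.mulVecLin M) (Pi.single (e (Sum.inr t)) (1 : K)) = (bv t : Fin n → K) := by
        intro t
        rw [← hBinr t]
        funext i
        rw [Matrix.mulVecLin_apply, Matrix.mulVec_single_one]
        rw [Matrix.col_apply, hMapp]
      have hVP : V = Submodule.map (Matrix.mulVecLin M) P := by
        rw [hPdef, Submodule.map_span]
        have himg2 : ⇑(Matrix.mulVecLin M) '' (Set.range fun t : Fin r =>
            (Pi.single (e (Sum.inr t)) (1 : K) : Fin n → K))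
            = Set.range fun t : Fin r => ((bv t : Fin n → K)) := by
          rw [← Set.range_comp]
          exact congrArg Set.range (funext fun t => hsingle t)
        rw [himg2, hVspan]
      have hbP : b ∈ P := by
        rw [hVP] at hMb
        obtain ⟨p, hpP, hp⟩ := hMb
        have hpb : p = b := by
          have h1 : N.mulVec (M.mulVec p) = p := by
            rw [Matrix.mulVec_mulVec, hNM, Matrix.one_mulVec]
          have h2 : N.mulVec (M.mulVec b) = b := by
            rw [Matrix.mulVec_mulVec, hNM, Matrix.one_mulVec]
          rw [Matrix.mulVecLin_apply] at hp
          rw [← h1, hp, h2]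
        rwa [hpb] at hpP
      have hbzero : ∀ j : Fin n, (j : ℕ) < n - r → b j = 0 := by
        intro j hj
        have hP_le : P ≤ LinearMap.ker (LinearMap.proj j : (Fin n → K) →ₗ[K] K) := by
          rw [hPdef, Submodule.span_le]
          rintro _ ⟨t, rfl⟩
          rw [SetLike.mem_coe, LinearMap.mem_ker, LinearMap.proj_apply]
          have hne : j ≠ e (Sum.inr t) := by
            intro hh
            have := heval t
            rw [← hh] at this
            omega
          exact Pi.single_eq_of_ne hne 1
        have := hP_le hbP
        rwa [LinearMap.mem_ker, LinearMap.proj_apply] at this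
      apply ha
      funext j'
      have hb' : b (Fin.castLE hr j') = a j' := by
        have hblt : ((Fin.castLE hr j' : Fin n) : ℕ) < n - r := j'.isLt
        rw [hbdef]
        simp only [dif_pos hblt]
        exact congrArg a (Fin.ext rfl)
      rw [Pi.zero_apply, ← hb', hbzero _ j'.isLt]
    · -- constant weight d
      intro v hvD hvne
      rw [hDeq] at hvD
      obtain ⟨x, hxH, rfl⟩ := Submodule.mem_map.1 hvD
      have hxne : x ≠ 0 := by
        rintro rfl
        rw [map_zero] at hvne
        exact hvne rfl
      have hrx : rankWeight K x = d := by
        rcases htw x (hHle hxH) hxne with h | h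
        · exact h
        · exact absurd (pair_eq_zero_imp (K := K) x h a₀ ((hmemH x).1 hxH).2) ha₀
      have hspan : Submodule.span K (Set.range ((tr ∘ₗ T) x))
          = Submodule.span K (Set.range (T x)) := by
        apply le_antisymm
        · rw [Submodule.span_le]
          rintro _ ⟨j', rfl⟩
          exact Submodule.subset_span ⟨Fin.castLE hr j', rfl⟩
        · rw [Submodule.span_le]
          rintro _ ⟨j, rfl⟩
          by_cases hj : (j : ℕ) < n - r
          · refine Submodule.subset_span ⟨⟨(j : ℕ), hj⟩, ?_⟩
            have hcast : Fin.castLE hr ⟨(j : ℕ), hj⟩ = j := Fin.ext rfl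
            show T x (Fin.castLE hr ⟨(j : ℕ), hj⟩) = T x j
            rw [hcast]
          · rw [hTzero x hxH j (by omega)]
            exact Submodule.zero_mem _
      have h2 : rankWeight K ((tr ∘ₗ T) x) = rankWeight K (T x) := by
        rw [rankWeight, rankWeight, hspan]
      rw [h2, hTvec, rankWeight_vecMul x hMN]
      exact hrx
end

section
/- There is no antipodal two-weight rank metric code of dimension k ≥ 3. Precisely, if C ⊆ F_{q^m}ⁿ is an F_{q^m}-linear subspace of dimension k ≥ 3 and d < n is such that every nonzero codeword of C has rank d or n, then no codeword of C has rank n. -/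
set_option linter.unusedSectionVars false

section Aux

variable (K : Type*) [Field K] [Fintype K] {L : Type*} [Field L] [Algebra K L] {n : ℕ}

/-- The `K`-linear combination map attached to `z : L^n`. -/
noncomputable def combo (z : Fin n → L) : (Fin n → K) →ₗ[K] L where
  toFun v := ∑ i, algebraMap K L (v i) * z i
  map_add' v w := by
    simp [add_mul, Finset.sum_add_distrib]
  map_smul' a v := by
    simp only [Pi.smul_apply, smul_eq_mul, map_mul, RingHom.id_apply, Algebra.smul_def,
      Finset.mul_sum, mul_assoc]

lemma combo_apply (z : Fin n → L) (v : Fin n → K) :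
    combo K z v = ∑ i, algebraMap K L (v i) * z i := rfl

lemma combo_add (z w : Fin n → L) (v : Fin n → K) :
    combo K (z + w) v = combo K z v + combo K w v := by
  simp [combo_apply, mul_add, Finset.sum_add_distrib]

lemma combo_sub (z w : Fin n → L) (v : Fin n → K) :
    combo K (z - w) v = combo K z v - combo K w v := by
  simp [combo_apply, mul_sub, Finset.sum_sub_distrib]

lemma combo_smulL (a : L) (z : Fin n → L) (v : Fin n → K) :
    combo K (a • z) v = a * combo K z v := by
  rw [combo_apply, combo_apply, Finset.mul_sum]
  refine Finset.sum_congr rfl fun i _ => ?_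
  simp only [Pi.smul_apply, smul_eq_mul]
  ring

lemma range_combo (z : Fin n → L) :
    LinearMap.range (combo K z) = Submodule.span K (Set.range z) := by
  apply le_antisymm
  · rintro w ⟨v, rfl⟩
    rw [combo_apply]
    apply Submodule.sum_mem
    intro i _
    rw [← Algebra.smul_def]
    exact Submodule.smul_mem _ _ (Submodule.subset_span ⟨i, rfl⟩)
  · rw [Submodule.span_le]
    rintro w ⟨i, rfl⟩
    refine ⟨Pi.single i 1, ?_⟩
    simp [combo_apply, Pi.single_apply, apply_ite (algebraMap K L)]

lemma finrank_ker_combo (z : Fin n → L) :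
    Module.finrank K (LinearMap.ker (combo K z)) = n - rankWeight K z := by
  have h := LinearMap.finrank_range_add_finrank_ker (combo K z)
  rw [range_combo, Module.finrank_pi, Fintype.card_fin] at h
  unfold rankWeight
  omega

lemma card_ker_combo (z : Fin n → L) :
    Nat.card (LinearMap.ker (combo K z)) = Fintype.card K ^ (n - rankWeight K z) := by
  classical
  rw [Nat.card_eq_fintype_card, Module.card_eq_pow_finrank (K := K), finrank_ker_combo]

lemma ker_combo_eq_zero (z : Fin n → L) (h : rankWeight K z = n) :
    ∀ v : Fin n → K, combo K z v = 0 → v = 0 := by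
  intro v hv
  have h0 : Module.finrank K (LinearMap.ker (combo K z)) = 0 := by
    rw [finrank_ker_combo, h, Nat.sub_self]
  rw [Submodule.finrank_eq_zero] at h0
  have hm : v ∈ LinearMap.ker (combo K z) := LinearMap.mem_ker.2 hv
  rw [h0] at hm
  simpa using hm

lemma rankWeight_eq_zero (z : Fin n → L) (h : rankWeight K z = 0) : z = 0 := by
  haveI : FiniteDimensional K (Submodule.span K (Set.range z)) :=
    FiniteDimensional.span_of_finite K (Set.finite_range z)
  unfold rankWeight at h
  rw [Submodule.finrank_eq_zero] at h
  funext i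
  have : z i ∈ (⊥ : Submodule K L) := h ▸ Submodule.subset_span ⟨i, rfl⟩
  simpa using this

end Aux

/-- There is no antipodal two-weight rank metric code of dimension `k ≥ 3`:
if `C ⊆ F_{q^m}^n` has `F_{q^m}`-dimension `k ≥ 3`, `d < n`, and every nonzero codeword has
rank `d` or `n`, then no codeword of `C` has rank `n`. -/
theorem no_atw_of_three_le_dim
    {K L : Type*} [Field K] [Fintype K] [Field L] [Algebra K L]
    {n k d : ℕ} (hk : 3 ≤ k)
    (C : Submodule L (Fin n → L)) (hdim : Module.finrank L C = k)
    (hdn : d < n)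
    (htw : ∀ c ∈ C, c ≠ 0 → rankWeight K c = d ∨ rankWeight K c = n) :
    ∀ c ∈ C, rankWeight K c ≠ n := by
  classical
  intro c hc hcn
  set q := Fintype.card K with hq
  have hq2 : 2 ≤ q := Fintype.one_lt_card
  have hn1 : 1 ≤ n := by omega
  have hqn2 : 2 ≤ q ^ n := le_trans hq2 (Nat.le_self_pow (by omega) q)
  -- the coordinates of c are K-linearly independent
  have hcker : ∀ v : Fin n → K, combo K c v = 0 → v = 0 := ker_combo_eq_zero K c hcn
  have hcv : ∀ v : Fin n → K, v ≠ 0 → combo K c v ≠ 0 := fun v hv h => hv (hcker v h)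
  -- find x ∈ C outside span {c}
  obtain ⟨x, hxC, hx⟩ : ∃ x ∈ C, x ∉ Submodule.span L {c} := by
    by_contra h
    push_neg at h
    haveI : FiniteDimensional L (Submodule.span L ({c} : Set (Fin n → L))) :=
      FiniteDimensional.span_of_finite L (Set.finite_singleton c)
    have hle : Module.finrank L C ≤ Module.finrank L (Submodule.span L ({c} : Set (Fin n → L))) :=
      Submodule.finrank_mono h
    have h1 : Module.finrank L (Submodule.span L ({c} : Set (Fin n → L))) ≤ 1 := by
      refine (finrank_span_le_card _).trans ?_
      simp
    omega
  -- find y ∈ C outside span {c, x}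
  obtain ⟨y, hyC, hy⟩ : ∃ y ∈ C, y ∉ Submodule.span L {c, x} := by
    by_contra h
    push_neg at h
    haveI : FiniteDimensional L (Submodule.span L ({c, x} : Set (Fin n → L))) :=
      FiniteDimensional.span_of_finite L ((Set.finite_singleton x).insert c)
    have hle : Module.finrank L C ≤
        Module.finrank L (Submodule.span L ({c, x} : Set (Fin n → L))) :=
      Submodule.finrank_mono h
    have h1 : Module.finrank L (Submodule.span L ({c, x} : Set (Fin n → L))) ≤ 2 := by
      refine (finrank_span_le_card _).trans ?_
      rw [Set.toFinset_insert, Set.toFinset_singleton]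
      exact (Finset.card_insert_le _ _).trans (by simp)
    omega
  -- nontrivial combinations are nonzero
  have hz_ne : ∀ lam mu t : L, ¬(lam = 0 ∧ mu = 0) → lam • x + mu • y - t • c ≠ 0 := by
    intro lam mu t hlm h0
    rw [sub_eq_zero] at h0
    by_cases hmu : mu = 0
    · have hlam : lam ≠ 0 := fun h => hlm ⟨h, hmu⟩
      apply hx
      have hxe : x = (lam⁻¹ * t) • c := by
        have hlx : lam • x = t • c := by rw [← h0, hmu]; simp
        calc x = lam⁻¹ • (lam • x) := by rw [smul_smul, inv_mul_cancel₀ hlam, one_smul]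
        _ = (lam⁻¹ * t) • c := by rw [hlx, smul_smul]
      rw [hxe]
      exact Submodule.smul_mem _ _ (Submodule.subset_span rfl)
    · apply hy
      have hye : y = mu⁻¹ • (t • c - lam • x) := by
        have h1 : mu • y = t • c - lam • x := by rw [← h0]; abel
        rw [← h1, smul_smul, inv_mul_cancel₀ hmu, one_smul]
      rw [hye]
      exact Submodule.smul_mem _ _ (Submodule.sub_mem _
        (Submodule.smul_mem _ _ (Submodule.subset_span (by simp)))
        (Submodule.smul_mem _ _ (Submodule.subset_span (by simp))))
  have hzC : ∀ lam mu t : L, lam • x + mu • y - t • c ∈ C := fun lam mu t =>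
    Submodule.sub_mem _ (Submodule.add_mem _ (Submodule.smul_mem _ _ hxC)
      (Submodule.smul_mem _ _ hyC)) (Submodule.smul_mem _ _ hc)
  -- the map Ψ to the affine plane L²
  set Ψ : (Fin n → K) → L × L := fun v => (combo K x v / combo K c v, combo K y v / combo K c v)
    with hΨdef
  have hΨ1 : ∀ v, (Ψ v).1 = combo K x v / combo K c v := fun v => rfl
  have hΨ2 : ∀ v, (Ψ v).2 = combo K y v / combo K c v := fun v => rfl
  set V : Finset (Fin n → K) := Finset.univ.filter (fun v => v ≠ 0) with hVdef
  have hVmem : ∀ v : Fin n → K, v ∈ V ↔ v ≠ 0 := by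
    intro v; simp [hVdef]
  have hVcard : V.card = q ^ n - 1 := by
    have hVe : V = Finset.univ.erase 0 := by
      ext v; simp [hVdef, Finset.mem_erase]
    rw [hVe, Finset.card_erase_of_mem (Finset.mem_univ _), Finset.card_univ,
      Fintype.card_fun, Fintype.card_fin]
  -- line level sets
  set line : L → L → L → Finset (Fin n → K) := fun lam mu t =>
    V.filter (fun v => lam * (Ψ v).1 + mu * (Ψ v).2 = t) with hlinedef
  have hlinemem : ∀ (lam mu t : L) (v : Fin n → K),
      v ∈ line lam mu t ↔ v ∈ V ∧ lam * (Ψ v).1 + mu * (Ψ v).2 = t := by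
    intro lam mu t v; simp [hlinedef]
  have hbridge : ∀ (lam mu t : L) (v : Fin n → K), v ≠ 0 →
      ((lam * (Ψ v).1 + mu * (Ψ v).2 = t) ↔ combo K (lam • x + mu • y - t • c) v = 0) := by
    intro lam mu t v hv
    have hc0 : combo K c v ≠ 0 := hcv v hv
    have hzz : combo K (lam • x + mu • y - t • c) v
        = lam * combo K x v + mu * combo K y v - t * combo K c v := by
      rw [combo_sub, combo_add, combo_smulL, combo_smulL, combo_smulL]
    rw [hzz, hΨ1, hΨ2]
    rw [sub_eq_zero, show lam * (combo K x v / combo K c v) + mu * (combo K y v / combo K c v)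
      = (lam * combo K x v + mu * combo K y v) / combo K c v from by ring,
      div_eq_iff hc0]
  -- the key dichotomy for line level sets
  have key : ∀ lam mu t : L, ¬(lam = 0 ∧ mu = 0) →
      (line lam mu t).card = 0 ∨ ((line lam mu t).card = q ^ (n - d) - 1 ∧ 1 ≤ d) := by
    intro lam mu t hlm
    have hz0 : lam • x + mu • y - t • c ≠ 0 := hz_ne lam mu t hlm
    have hline_eq : line lam mu t
        = Finset.univ.filter (fun v => v ≠ 0 ∧ combo K (lam • x + mu • y - t • c) v = 0) := by
      ext v
      rw [hlinemem]
      simp only [Finset.mem_filter, Finset.mem_univ, true_and]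
      rw [hVmem]
      constructor
      · rintro ⟨hv, hl⟩; exact ⟨hv, (hbridge lam mu t v hv).1 hl⟩
      · rintro ⟨hv, hzv⟩; exact ⟨hv, (hbridge lam mu t v hv).2 hzv⟩
    rcases htw _ (hzC lam mu t) hz0 with hd | hrn
    · right
      have hd1 : 1 ≤ d := by
        rcases Nat.eq_zero_or_pos d with h0 | h1
        · exact absurd (rankWeight_eq_zero K _ (by rw [hd, h0])) hz0
        · exact h1
      refine ⟨?_, hd1⟩
      have hcount :
          (Finset.univ.filter (fun v : Fin n → K =>
            combo K (lam • x + mu • y - t • c) v = 0)).card = q ^ (n - d) := by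
        have hker := card_ker_combo K (lam • x + mu • y - t • c)
        rw [hd] at hker
        have hcongr : Nat.card (LinearMap.ker (combo K (lam • x + mu • y - t • c)))
            = Nat.card {v : Fin n → K // combo K (lam • x + mu • y - t • c) v = 0} :=
          Nat.card_congr (Equiv.subtypeEquivRight (fun v => by simp [LinearMap.mem_ker]))
        rw [hcongr, Nat.card_eq_fintype_card, Fintype.card_subtype] at hker
        exact hker
      have herase : Finset.univ.filter
            (fun v : Fin n → K => v ≠ 0 ∧ combo K (lam • x + mu • y - t • c) v = 0)
          = (Finset.univ.filter (fun v : Fin n → K =>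
              combo K (lam • x + mu • y - t • c) v = 0)).erase 0 := by
        ext v
        simp only [Finset.mem_filter, Finset.mem_univ, true_and, Finset.mem_erase]
      rw [hline_eq, herase, Finset.card_erase_of_mem (by simp), hcount]
    · left
      rw [hline_eq, Finset.card_eq_zero, Finset.filter_eq_empty_iff]
      rintro v - ⟨hv0, hvz⟩
      exact hv0 (ker_combo_eq_zero K _ hrn v hvz)
  -- fibers of Ψ
  set F : L × L → Finset (Fin n → K) := fun p => V.filter (fun v => Ψ v = p) with hFdef
  have hFmem : ∀ (p : L × L) (v : Fin n → K), v ∈ F p ↔ v ∈ V ∧ Ψ v = p := by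
    intro p v; simp [hFdef]
  set T : Finset (L × L) := V.image Ψ with hTdef
  -- choose a base point p ∈ T
  have hVne : V.Nonempty := by
    rw [← Finset.card_pos, hVcard]; omega
  obtain ⟨v₀, hv₀V⟩ := hVne
  set p : L × L := Ψ v₀ with hpdef
  -- there are at least q^n elements of L, so we can avoid any small finset of slopes
  have hfree : ∀ S : Finset L, S.card < q ^ n → ∃ s : L, s ∉ S := by
    intro S hS
    by_contra h
    push_neg at h
    have hι : Function.Injective (fun v : Fin n → K => combo K c v) := by
      intro v w hvw
      have hvw' : combo K c v = combo K c w := hvw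
      have h1 : combo K c (v - w) = 0 := by rw [map_sub, hvw', sub_self]
      exact sub_eq_zero.mp (hcker _ h1)
    have hsub : Finset.univ.image (fun v : Fin n → K => combo K c v) ⊆ S := by
      intro a ha
      obtain ⟨v, -, rfl⟩ := Finset.mem_image.mp ha
      exact h _
    have hcard := Finset.card_le_card hsub
    rw [Finset.card_image_of_injective _ hι, Finset.card_univ, Fintype.card_fun,
      Fintype.card_fin] at hcard
    rw [hq] at hS
    omega
  obtain ⟨s, hs⟩ : ∃ s : L, s ∉ (T.erase p).image (fun p' => (p'.2 - p.2) / (p'.1 - p.1)) := by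
    apply hfree
    calc ((T.erase p).image (fun p' => (p'.2 - p.2) / (p'.1 - p.1))).card
        ≤ (T.erase p).card := Finset.card_image_le
      _ ≤ T.card := Finset.card_erase_le
      _ ≤ V.card := Finset.card_image_le
      _ = q ^ n - 1 := hVcard
      _ < q ^ n := by omega
  -- the line through p with slope s meets the image of Ψ only at p
  have hlineF : line s (-1) (s * p.1 - p.2) = F p := by
    ext v
    rw [hlinemem, hFmem]
    constructor
    · rintro ⟨hvV, hvl⟩
      refine ⟨hvV, ?_⟩
      by_contra hne
      have hvT : Ψ v ∈ T.erase p :=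
        Finset.mem_erase.2 ⟨hne, Finset.mem_image_of_mem Ψ hvV⟩
      have h1 : s * ((Ψ v).1 - p.1) = (Ψ v).2 - p.2 := by linear_combination hvl
      by_cases hx1 : (Ψ v).1 = p.1
      · apply hne
        have h2 : (Ψ v).2 = p.2 := by
          rw [hx1, sub_self, mul_zero] at h1
          have h3 := h1.symm
          rwa [sub_eq_zero] at h3
        exact Prod.ext hx1 h2
      · apply hs
        have hslope : ((Ψ v).2 - p.2) / ((Ψ v).1 - p.1) = s := by
          rw [div_eq_iff (sub_ne_zero.2 hx1)]
          exact h1.symm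
        have hmem := Finset.mem_image_of_mem (fun p' => (p'.2 - p.2) / (p'.1 - p.1)) hvT
        rwa [hslope] at hmem
    · rintro ⟨hvV, hvp⟩
      refine ⟨hvV, ?_⟩
      rw [hvp]; ring
  have hFpmem : v₀ ∈ F p := (hFmem p v₀).2 ⟨hv₀V, rfl⟩
  have hFpne : (F p).Nonempty := ⟨v₀, hFpmem⟩
  have hs0 : ¬((s : L) = 0 ∧ (-1 : L) = 0) := by
    rintro ⟨-, h⟩
    simpa using h
  rcases key s (-1) (s * p.1 - p.2) hs0 with h0 | ⟨hcard, hd1⟩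
  · rw [hlineF, Finset.card_eq_zero] at h0
    exact Finset.Nonempty.ne_empty hFpne h0
  have hFp : (F p).card = q ^ (n - d) - 1 := by rw [← hlineF]; exact hcard
  have hqe2 : 2 ≤ q ^ (n - d) := le_trans hq2 (Nat.le_self_pow (by omega) q)
  have hpow_lt : q ^ (n - d) < q ^ n := Nat.pow_lt_pow_right hq2 (by omega)
  -- find a second point p' in the image
  obtain ⟨v', hv'V, hv'F⟩ : ∃ v' ∈ V, v' ∉ F p := by
    by_contra h
    push_neg at h
    have hsub : V ⊆ F p := h
    have hle := Finset.card_le_card hsub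
    omega
  set p' : L × L := Ψ v' with hp'def
  have hp'ne : p' ≠ p := by
    intro h
    exact hv'F ((hFmem p v').2 ⟨hv'V, h⟩)
  have hFp'mem : v' ∈ F p' := (hFmem p' v').2 ⟨hv'V, rfl⟩
  -- generic contradiction from a line through both p and p'
  have contra : ∀ lam mu t : L, ¬(lam = 0 ∧ mu = 0) →
      lam * p.1 + mu * p.2 = t → lam * p'.1 + mu * p'.2 = t → False := by
    intro lam mu t hlm h1 h2
    have fib_sub : ∀ pp : L × L, lam * pp.1 + mu * pp.2 = t → F pp ⊆ line lam mu t := by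
      intro pp hpp v hv
      obtain ⟨hvV, hvp⟩ := (hFmem pp v).1 hv
      exact (hlinemem lam mu t v).2 ⟨hvV, by rw [hvp]; exact hpp⟩
    have hdisj : Disjoint (F p) (F p') := by
      rw [Finset.disjoint_left]
      intro v hvp hvp'
      exact hp'ne (((hFmem p' v).1 hvp').2.symm.trans ((hFmem p v).1 hvp).2)
    have hcard_le : (F p).card + (F p').card ≤ (line lam mu t).card := by
      rw [← Finset.card_union_of_disjoint hdisj]
      exact Finset.card_le_card (Finset.union_subset (fib_sub p h1) (fib_sub p' h2))
    have hFp'1 : 1 ≤ (F p').card := Finset.card_pos.2 ⟨v', hFp'mem⟩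
    rcases key lam mu t hlm with h0 | ⟨hce, -⟩
    · omega
    · omega
  -- split on whether the line through p and p' is vertical
  by_cases hvert : p'.1 = p.1
  · exact contra 1 0 p.1 (by simp) (by ring) (by rw [hvert]; ring)
  · set s' : L := (p'.2 - p.2) / (p'.1 - p.1) with hs'def
    refine contra s' (-1) (s' * p.1 - p.2) (by rintro ⟨-, h⟩; simpa using h) (by ring) ?_
    have hd1' : s' * (p'.1 - p.1) = p'.2 - p.2 := div_mul_cancel₀ _ (sub_ne_zero.2 hvert)
    linear_combination hd1'
end

section
/- Let d ≥ 1 and let F_q ⊆ F_{q^d} ⊆ F_{q^m} be finite fields with F_{q^m} a proper extension of F_{q^d}. Let α₁,…,α_d be an F_q-basis of F_{q^d}. Let C ⊆ F_{q^m}^{2d} be the F_{q^m}-span of the two vectors g₁ = (0,…,0,α₁,…,α_d) and g₂ = (α₁,…,α_d,0,…,0). Then C is a non-degenerate antipodal two-weight [2d,2,d] rank metric code over F_{q^m}/F_q: C has F_{q^m}-dimension 2, every nonzero codeword has rank d or 2d, some codeword has rank 2d, and some codeword has rank d. -/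
open Module Submodule

/-- Auxiliary equivalence `Fin d ⊕ Fin d ≃ Fin (2*d)`. -/
def dSum (d : ℕ) : (Fin d ⊕ Fin d) ≃ Fin (2 * d) :=
  finSumFinEquiv.trans (finCongr (two_mul d).symm)

lemma dSum_inl {d : ℕ} (i : Fin d) : ((dSum d (Sum.inl i)) : ℕ) = (i : ℕ) := by
  simp [dSum]

lemma dSum_inr {d : ℕ} (i : Fin d) : ((dSum d (Sum.inr i)) : ℕ) = d + (i : ℕ) := by
  simp [dSum]
  omega

/-- Let `F_q ⊆ F_{q^d} ⊆ F_{q^m}` with the last extension proper, let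
`α₁,…,α_d` be an `F_q`-basis of `F_{q^d}`, and let `C` be the `F_{q^m}`-span of
`g₁ = (0,…,0,α₁,…,α_d)` and `g₂ = (α₁,…,α_d,0,…,0)` in `F_{q^m}^{2d}`. Then `C` is a
non-degenerate antipodal two-weight `[2d,2,d]` rank metric code over `F_{q^m}/F_q`. -/
theorem atw_example_half
    {K E L : Type*} [Field K] [Fintype K] [Field E] [Field L]
    [Algebra K E] [Algebra E L] [Algebra K L] [IsScalarTower K E L]
    {d : ℕ} (hd : 1 ≤ d)
    (hKE : Module.finrank K E = d) (hEL : 1 < Module.finrank E L)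
    (α : Fin d → E) (hαli : LinearIndependent K α)
    (hα : Submodule.span K (Set.range α) = ⊤)
    (g₁ g₂ : Fin (2 * d) → L)
    (hg₁ : ∀ j : Fin (2 * d), g₁ j =
      if h : (j : ℕ) < d then 0 else algebraMap E L (α ⟨(j : ℕ) - d, by omega⟩))
    (hg₂ : ∀ j : Fin (2 * d), g₂ j =
      if h : (j : ℕ) < d then algebraMap E L (α ⟨(j : ℕ), h⟩) else 0)
    (C : Submodule L (Fin (2 * d) → L))
    (hC : C = Submodule.span L {g₁, g₂}) :
    Module.finrank L C = 2 ∧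
    (∀ a : Fin (2 * d) → K, a ≠ 0 → ∃ c ∈ C, ∑ i, c i * algebraMap K L (a i) ≠ 0) ∧
    (∀ c ∈ C, c ≠ 0 → rankWeight K c = d ∨ rankWeight K c = 2 * d) ∧
    (∃ c ∈ C, rankWeight K c = 2 * d) ∧
    (∃ c ∈ C, c ≠ 0 ∧ rankWeight K c = d) := by
  classical
  subst hC
  haveI : FiniteDimensional K E := FiniteDimensional.of_finrank_pos (by omega)
  haveI : FiniteDimensional E L := FiniteDimensional.of_finrank_pos (by omega)
  haveI : FiniteDimensional K L := FiniteDimensional.trans K E L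
  have hinjEL : Function.Injective (algebraMap E L) := (algebraMap E L).injective
  set f : E →ₗ[K] L := (Algebra.linearMap E L).restrictScalars K with hfdef
  have hfapp : ∀ e : E, f e = algebraMap E L e := fun e => rfl
  have hfinj : Function.Injective f := hinjEL
  set V : Submodule K L := LinearMap.range f with hVdef
  have hVfin : finrank K V = d := by
    rw [LinearMap.finrank_range_of_inj hfinj, hKE]
  set W : L → Submodule K L := fun x => V.map (LinearMap.mulLeft K x) with hWdef
  have hW0 : W 0 = ⊥ := by
    simp [hWdef, LinearMap.mulLeft_zero_eq_zero]
  have hWfin : ∀ x : L, x ≠ 0 → finrank K (W x) = d := by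
    intro x hx
    rw [← hVfin]
    exact (Submodule.equivMapOfInjective (LinearMap.mulLeft K x)
      (fun a b h => mul_left_cancel₀ hx h) V).finrank_eq.symm
  -- multiplication by a nonzero element of (the image of) E preserves V
  have hWmul : ∀ (eE : E), eE ≠ 0 → ∀ y : L, W (algebraMap E L eE * y) = W y := by
    intro eE he y
    have comp : LinearMap.mulLeft K (algebraMap E L eE * y) =
        (LinearMap.mulLeft K y).comp (LinearMap.mulLeft K (algebraMap E L eE)) := by
      ext v
      simp only [LinearMap.mulLeft_apply, LinearMap.coe_comp, Function.comp_apply]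
      ring
    have h1 : (LinearMap.mulLeft K (algebraMap E L eE)).comp f
        = f.comp (LinearMap.mulLeft K eE) := by
      ext v
      simp only [LinearMap.mulLeft_apply, LinearMap.coe_comp, Function.comp_apply, hfapp, map_mul]
    have h2 : LinearMap.range (LinearMap.mulLeft K eE) = ⊤ :=
      LinearMap.range_eq_top.mpr (fun b =>
        ⟨eE⁻¹ * b, by rw [LinearMap.mulLeft_apply, mul_inv_cancel_left₀ he]⟩)
    have hmapV : V.map (LinearMap.mulLeft K (algebraMap E L eE)) = V := by
      rw [hVdef, ← LinearMap.range_comp, h1, LinearMap.range_comp, h2, Submodule.map_top]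
    show V.map (LinearMap.mulLeft K (algebraMap E L eE * y)) = V.map (LinearMap.mulLeft K y)
    rw [comp, Submodule.map_comp, hmapV]
  have hWdisj : ∀ x y : L, (¬ ∃ eE : E, algebraMap E L eE * y = x) → W x ⊓ W y = ⊥ := by
    intro x y hxy
    rw [eq_bot_iff]
    intro v hv
    rw [Submodule.mem_inf] at hv
    obtain ⟨hv₁, hv₂⟩ := hv
    rw [Submodule.mem_map] at hv₁ hv₂
    obtain ⟨w₁, hw₁, hv₁⟩ := hv₁
    obtain ⟨w₂, hw₂, hv₂⟩ := hv₂
    rw [LinearMap.mem_range] at hw₁ hw₂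
    obtain ⟨a, rfl⟩ := hw₁
    obtain ⟨b, rfl⟩ := hw₂
    rw [LinearMap.mulLeft_apply] at hv₁ hv₂
    rw [Submodule.mem_bot]
    by_contra hv0
    have ha : a ≠ 0 := by
      rintro rfl
      rw [hfapp, map_zero, mul_zero] at hv₁
      exact hv0 hv₁.symm
    have hfa : algebraMap E L a ≠ 0 := by
      intro h
      exact ha (hinjEL (by rw [h, map_zero]))
    have hkey : x * algebraMap E L a = y * algebraMap E L b := by
      rw [← hfapp, ← hfapp, hv₁, hv₂]
    apply hxy
    refine ⟨b * a⁻¹, ?_⟩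
    rw [map_mul, map_inv₀]
    field_simp
    linear_combination -hkey
  -- values of g₁, g₂ via the sum equivalence
  have hg1l : ∀ i : Fin d, g₁ (dSum d (Sum.inl i)) = 0 := by
    intro i
    rw [hg₁, dif_pos (show ((dSum d (Sum.inl i)) : ℕ) < d by rw [dSum_inl]; exact i.isLt)]
  have hg1r : ∀ i : Fin d, g₁ (dSum d (Sum.inr i)) = algebraMap E L (α i) := by
    intro i
    rw [hg₁, dif_neg (show ¬ ((dSum d (Sum.inr i)) : ℕ) < d by rw [dSum_inr]; omega)]
    exact congrArg (algebraMap E L) (congrArg α (Fin.ext (by simp only [dSum_inr]; omega)))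
  have hg2l : ∀ i : Fin d, g₂ (dSum d (Sum.inl i)) = algebraMap E L (α i) := by
    intro i
    rw [hg₂, dif_pos (show ((dSum d (Sum.inl i)) : ℕ) < d by rw [dSum_inl]; exact i.isLt)]
    exact congrArg (algebraMap E L) (congrArg α (Fin.ext (by simp only [dSum_inl])))
  have hg2r : ∀ i : Fin d, g₂ (dSum d (Sum.inr i)) = 0 := by
    intro i
    rw [hg₂, dif_neg (show ¬ ((dSum d (Sum.inr i)) : ℕ) < d by rw [dSum_inr]; omega)]
  -- the span of the coordinates of a codeword
  have key : ∀ (x y : L) (c : Fin (2 * d) → L), (∀ j, c j = x * g₁ j + y * g₂ j) →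
      Submodule.span K (Set.range c) = W y ⊔ W x := by
    intro x y c hc
    have hce : c ∘ (dSum d) = Sum.elim (fun i => y * f (α i)) (fun i => x * f (α i)) := by
      funext p
      cases p with
      | inl i => simp [hc, hg1l, hg2l, hfapp]
      | inr i => simp [hc, hg1r, hg2r, hfapp]
    have h1 : ∀ z : L, Submodule.span K (Set.range (fun i : Fin d => z * f (α i))) = W z := by
      intro z
      have hcomp : (fun i : Fin d => z * f (α i)) = (LinearMap.mulLeft K z) ∘ (⇑f ∘ α) := rfl
      rw [hcomp, Set.range_comp, Submodule.span_image, Set.range_comp ⇑f α,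
        Submodule.span_image, hα, Submodule.map_top]
    rw [← Function.Surjective.range_comp (dSum d).surjective c, hce, Set.Sum.elim_range,
      Submodule.span_union, h1, h1]
  -- sums against K-vectors
  have hsum₂ : ∀ a : Fin (2 * d) → K,
      ∑ i, g₂ i * algebraMap K L (a i)
        = algebraMap E L (∑ i : Fin d, a (dSum d (Sum.inl i)) • α i) := by
    intro a
    rw [← Equiv.sum_comp (dSum d) (fun j => g₂ j * algebraMap K L (a j))]
    simp only [Fintype.sum_sum_type]
    have hz : ∑ i : Fin d, g₂ (dSum d (Sum.inr i)) * algebraMap K L (a (dSum d (Sum.inr i))) = 0 :=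
      Finset.sum_eq_zero (fun i _ => by rw [hg2r]; ring)
    rw [hz, add_zero, map_sum]
    refine Finset.sum_congr rfl (fun i _ => ?_)
    rw [hg2l, Algebra.smul_def, map_mul, ← IsScalarTower.algebraMap_apply]
    ring
  have hsum₁ : ∀ a : Fin (2 * d) → K,
      ∑ i, g₁ i * algebraMap K L (a i)
        = algebraMap E L (∑ i : Fin d, a (dSum d (Sum.inr i)) • α i) := by
    intro a
    rw [← Equiv.sum_comp (dSum d) (fun j => g₁ j * algebraMap K L (a j))]
    simp only [Fintype.sum_sum_type]
    have hz : ∑ i : Fin d, g₁ (dSum d (Sum.inl i)) * algebraMap K L (a (dSum d (Sum.inl i))) = 0 :=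
      Finset.sum_eq_zero (fun i _ => by rw [hg1l]; ring)
    rw [hz, zero_add, map_sum]
    refine Finset.sum_congr rfl (fun i _ => ?_)
    rw [hg1r, Algebra.smul_def, map_mul, ← IsScalarTower.algebraMap_apply]
    ring
  -- nondegeneracy
  have hndg : ∀ a : Fin (2 * d) → K, a ≠ 0 →
      ∃ c ∈ Submodule.span L {g₁, g₂}, ∑ i, c i * algebraMap K L (a i) ≠ 0 := by
    intro a ha
    obtain ⟨j, hj⟩ := Function.ne_iff.mp ha
    rw [Pi.zero_apply] at hj
    by_cases hjd : (j : ℕ) < d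
    · refine ⟨g₂, Submodule.subset_span (by simp), ?_⟩
      rw [hsum₂ a]
      intro h0
      have h1 : (∑ i : Fin d, a (dSum d (Sum.inl i)) • α i) = 0 := by
        apply hinjEL; rw [h0, map_zero]
      have h2 := Fintype.linearIndependent_iff.mp hαli
        (fun i => a (dSum d (Sum.inl i))) h1 ⟨(j : ℕ), hjd⟩
      apply hj
      have hjj : dSum d (Sum.inl ⟨(j : ℕ), hjd⟩) = j := Fin.ext (by simp only [dSum_inl])
      rw [← hjj]
      exact h2
    · refine ⟨g₁, Submodule.subset_span (by simp), ?_⟩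
      rw [hsum₁ a]
      intro h0
      have h1 : (∑ i : Fin d, a (dSum d (Sum.inr i)) • α i) = 0 := by
        apply hinjEL; rw [h0, map_zero]
      have h2 := Fintype.linearIndependent_iff.mp hαli
        (fun i => a (dSum d (Sum.inr i))) h1 ⟨(j : ℕ) - d, by omega⟩
      apply hj
      have hjj : dSum d (Sum.inr ⟨(j : ℕ) - d, by omega⟩) = j :=
        Fin.ext (by simp only [dSum_inr]; omega)
      rw [← hjj]
      exact h2
  have hα0 : algebraMap E L (α ⟨0, hd⟩) ≠ 0 := by
    intro h
    exact hαli.ne_zero ⟨0, hd⟩ (hinjEL (by rw [h, map_zero]))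
  -- dimension of the code
  have hli2 : LinearIndependent L ![g₁, g₂] := by
    rw [LinearIndependent.pair_iff]
    intro s t hst
    have h0 := congrFun hst (dSum d (Sum.inl ⟨0, hd⟩))
    have h1 := congrFun hst (dSum d (Sum.inr ⟨0, hd⟩))
    simp only [Pi.add_apply, Pi.smul_apply, smul_eq_mul, hg1l, hg2l, hg1r, hg2r, Pi.zero_apply,
      mul_zero, zero_add, add_zero] at h0 h1
    constructor
    · rcases mul_eq_zero.mp h1 with h | h
      · exact h
      · exact absurd h hα0
    · rcases mul_eq_zero.mp h0 with h | h
      · exact h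
      · exact absurd h hα0
  have hCrank : finrank L (Submodule.span L {g₁, g₂} : Submodule L (Fin (2 * d) → L)) = 2 := by
    have hr : ({g₁, g₂} : Set (Fin (2 * d) → L)) = Set.range ![g₁, g₂] := by
      ext v
      simp only [Set.mem_insert_iff, Set.mem_singleton_iff, Set.mem_range, Fin.exists_fin_two,
        Matrix.cons_val_zero, Matrix.cons_val_one, Matrix.head_cons]
      tauto
    rw [hr, finrank_span_eq_card hli2]
    simp
  -- weights of codewords
  have hweight : ∀ c ∈ Submodule.span L {g₁, g₂}, c ≠ 0 →
      rankWeight K c = d ∨ rankWeight K c = 2 * d := by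
    intro c hcC hc0
    obtain ⟨x, y, hxy⟩ := Submodule.mem_span_pair.mp hcC
    have hcj : ∀ j, c j = x * g₁ j + y * g₂ j := fun j => by
      rw [← hxy]; simp
    have hrank : rankWeight K c = finrank K ↥(W y ⊔ W x) := by
      simp only [rankWeight]; rw [key x y c hcj]
    by_cases hx : x = 0
    · by_cases hy : y = 0
      · exfalso; apply hc0; rw [← hxy, hx, hy]; simp
      · left; rw [hrank, hx, hW0, sup_bot_eq, hWfin y hy]
    · by_cases hy : y = 0
      · left; rw [hrank, hy, hW0, bot_sup_eq, hWfin x hx]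
      · by_cases hex : ∃ eE : E, algebraMap E L eE * y = x
        · obtain ⟨eE, heq⟩ := hex
          have he0 : eE ≠ 0 := by
            rintro rfl; rw [map_zero, zero_mul] at heq; exact hx heq.symm
          left
          rw [hrank, ← heq, hWmul eE he0 y, sup_idem, hWfin y hy]
        · right
          have hdisj := hWdisj x y hex
          have hsum := Submodule.finrank_sup_add_finrank_inf_eq (W y) (W x)
          rw [inf_comm] at hdisj
          rw [hdisj, finrank_bot] at hsum
          rw [hWfin x hx, hWfin y hy] at hsum
          rw [hrank]
          omega
  -- a codeword of full weight
  obtain ⟨x0, hx0⟩ : ∃ x : L, ¬ ∃ eE : E, algebraMap E L eE = x := by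
    by_contra hcon
    push_neg at hcon
    have hsurj : Function.Surjective (Algebra.linearMap E L) := fun v => hcon v
    have h1 : finrank E E = finrank E L :=
      (LinearEquiv.ofBijective (Algebra.linearMap E L)
        ⟨fun a b h => hinjEL h, hsurj⟩).finrank_eq
    rw [finrank_self] at h1
    omega
  have hc2 : ∀ j, (x0 • g₁ + g₂) j = x0 * g₁ j + 1 * g₂ j := fun j => by simp
  have hmem2 : x0 • g₁ + g₂ ∈ Submodule.span L {g₁, g₂} :=
    Submodule.mem_span_pair.mpr ⟨x0, 1, by simp⟩
  have hx00 : x0 ≠ 0 := fun h => hx0 ⟨0, by rw [map_zero, h]⟩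
  have hnex : ¬ ∃ eE : E, algebraMap E L eE * 1 = x0 := by
    rintro ⟨eE, h⟩; exact hx0 ⟨eE, by rw [← h, mul_one]⟩
  have h2d : rankWeight K (x0 • g₁ + g₂) = 2 * d := by
    have hrw2 : rankWeight K (x0 • g₁ + g₂) = finrank K ↥(W 1 ⊔ W x0) := by
      simp only [rankWeight]; rw [key x0 1 _ hc2]
    rw [hrw2]
    have hdisj := hWdisj x0 1 hnex
    have hsum := Submodule.finrank_sup_add_finrank_inf_eq (W 1) (W x0)
    rw [inf_comm] at hdisj
    rw [hdisj, finrank_bot] at hsum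
    rw [hWfin x0 hx00, hWfin 1 one_ne_zero] at hsum
    omega
  -- a codeword of weight d
  have hg₂c : ∀ j, g₂ j = 0 * g₁ j + 1 * g₂ j := fun j => by ring
  have hg₂mem : g₂ ∈ Submodule.span L {g₁, g₂} := Submodule.subset_span (by simp)
  have hg₂ne : g₂ ≠ 0 := by
    intro h
    apply hα0
    rw [← hg2l ⟨0, hd⟩, h, Pi.zero_apply]
  have hg₂rank : rankWeight K g₂ = d := by
    simp only [rankWeight]
    rw [key 0 1 g₂ hg₂c, hW0, sup_bot_eq, hWfin 1 one_ne_zero]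
  exact ⟨hCrank, hndg, hweight, ⟨x0 • g₁ + g₂, hmem2, h2d⟩, ⟨g₂, hg₂mem, hg₂ne, hg₂rank⟩⟩
end

section
/- Let d, k be positive integers with k > 2, and let F_q ⊆ F_{q^d} ⊆ F_{q^{2d}} be finite fields. Let α₁,…,α_d be an F_q-basis of F_{q^d}. For x = (x₁,…,x_k) ∈ F_{q^{2d}}^k, let c(x) ∈ F_{q^{2d}}^{kd} be the vector whose i-th block of d entries is (x_i α₁,…,x_i α_d). Then for every nonzero x: rank(c(x)) = d if dim_{F_{q^d}} span_{F_{q^d}}{x₁,…,x_k} = 1, and rank(c(x)) = 2d if dim_{F_{q^d}} span_{F_{q^d}}{x₁,…,x_k} ≥ 2. Consequently C = {c(x) : x ∈ F_{q^{2d}}^k} is a [kd, k, d] rank metric code over F_{q^{2d}}/F_q in which every nonzero codeword has rank d or 2d, and it is not antipodal since 2d < kd. -/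
open Submodule Set Module

section Aux
variable {K E L : Type*} [Field K] [Field E] [Field L]
  [Algebra K E] [Algebra E L] [Algebra K L] [IsScalarTower K E L]

lemma aux_span_eq {d k : ℕ} (α : Fin d → E) (hα : Submodule.span K (Set.range α) = ⊤)
    (x : Fin k → L) :
    Submodule.span K (Set.range (fun p : Fin k × Fin d => α p.2 • x p.1)) =
      (Submodule.span E (Set.range x)).restrictScalars K := by
  set gens := Set.range (fun p : Fin k × Fin d => α p.2 • x p.1) with hgens
  have H : ∀ (e : E) (i : Fin k), e • x i ∈ Submodule.span K gens := by
    intro e i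
    have he : e ∈ Submodule.span K (Set.range α) := by rw [hα]; trivial
    induction he using Submodule.span_induction with
    | mem a ha => obtain ⟨j, rfl⟩ := ha; exact Submodule.subset_span ⟨(i, j), rfl⟩
    | zero => simpa using (Submodule.span K gens).zero_mem
    | add a b _ _ ha hb => rw [add_smul]; exact Submodule.add_mem _ ha hb
    | smul c a _ ha => rw [smul_assoc]; exact Submodule.smul_mem _ c ha
  have Hsmul : ∀ (e : E) (y : L), y ∈ Submodule.span K gens →
      e • y ∈ Submodule.span K gens := by
    intro e y hy
    induction hy using Submodule.span_induction with
    | mem a ha =>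
        obtain ⟨⟨i, j⟩, rfl⟩ := ha
        rw [smul_smul]; exact H _ _
    | zero => simpa using (Submodule.span K gens).zero_mem
    | add a b _ _ ha hb => rw [smul_add]; exact Submodule.add_mem _ ha hb
    | smul c a _ ha => rw [smul_comm]; exact Submodule.smul_mem _ c ha
  apply le_antisymm
  · rw [Submodule.span_le]
    rintro _ ⟨⟨i, j⟩, rfl⟩
    exact Submodule.smul_mem _ (α j) (Submodule.subset_span ⟨i, rfl⟩)
  · intro y hy
    replace hy : y ∈ Submodule.span E (Set.range x) := hy
    induction hy using Submodule.span_induction with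
    | mem a ha => obtain ⟨i, rfl⟩ := ha; simpa using H 1 i
    | zero => exact (Submodule.span K gens).zero_mem
    | add a b _ _ ha hb => exact Submodule.add_mem _ ha hb
    | smul c a _ ha => exact Hsmul c a ha

lemma aux_finrank_restrict (S : Submodule E L) {d : ℕ} (hKE : Module.finrank K E = d)
    (hd : 1 ≤ d) :
    Module.finrank K (S.restrictScalars K) = d * Module.finrank E S := by
  have : FiniteDimensional K E := Module.finite_of_finrank_pos (by omega)
  have h := Module.finrank_mul_finrank K E (S.restrictScalars K)
  have h2 : Module.finrank E (S.restrictScalars K) = Module.finrank E S := rfl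
  rw [h2, hKE] at h
  exact h.symm

end Aux

set_option maxHeartbeats 1000000 in
set_option linter.unnecessarySimpa false in
/-- Let `F_q ⊆ F_{q^d} ⊆ F_{q^{2d}}`, `k > 2`, `α₁,…,α_d` an `F_q`-basis of
`F_{q^d}`, and for `x ∈ F_{q^{2d}}^k` let `c(x) ∈ F_{q^{2d}}^{kd}` have `i`-th block
`(x_i α₁, …, x_i α_d)`. Then for nonzero `x`, `rank(c(x)) = d` when the `F_{q^d}`-span of the
`x_i` has dimension `1` and `rank(c(x)) = 2d` when it has dimension `≥ 2`; consequently
`C = {c(x)}` is a `[kd, k, d]` two-weight (non-antipodal) rank metric code over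
`F_{q^{2d}}/F_q` with weights `d` and `2d < kd`. -/
theorem non_antipodal_two_weight_example
    {K E L : Type*} [Field K] [Fintype K] [Field E] [Field L]
    [Algebra K E] [Algebra E L] [Algebra K L] [IsScalarTower K E L]
    {d k : ℕ} (hd : 1 ≤ d) (hk : 2 < k)
    (hKE : Module.finrank K E = d) (hEL : Module.finrank E L = 2)
    (α : Fin d → E) (hαli : LinearIndependent K α)
    (hα : Submodule.span K (Set.range α) = ⊤)
    (cvec : (Fin k → L) → (Fin (k * d) → L))
    (hcvec : ∀ x : Fin k → L, ∀ j : Fin (k * d),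
      cvec x j = x ⟨(j : ℕ) / d, Nat.div_lt_of_lt_mul (Nat.mul_comm k d ▸ j.isLt)⟩ *
        algebraMap E L (α ⟨(j : ℕ) % d, Nat.mod_lt _ (by omega)⟩)) :
    (∀ x : Fin k → L, x ≠ 0 →
      (Module.finrank E (Submodule.span E (Set.range x)) = 1 → rankWeight K (cvec x) = d) ∧
      (2 ≤ Module.finrank E (Submodule.span E (Set.range x)) →
        rankWeight K (cvec x) = 2 * d)) ∧
    ∃ C : Submodule L (Fin (k * d) → L),
      (C : Set (Fin (k * d) → L)) = Set.range cvec ∧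
      Module.finrank L C = k ∧
      (∀ c ∈ C, c ≠ 0 → rankWeight K c = d ∨ rankWeight K c = 2 * d) ∧
      (∀ c ∈ C, c ≠ 0 → d ≤ rankWeight K c) ∧
      (∃ c ∈ C, c ≠ 0 ∧ rankWeight K c = d) ∧
      2 * d < k * d := by
  have hd0 : 0 < d := hd
  have hFD_EL : FiniteDimensional E L := Module.finite_of_finrank_pos (by omega)
  -- range of cvec x as a doubly-indexed range
  have hrange : ∀ x : Fin k → L, Set.range (cvec x) =
      Set.range (fun p : Fin k × Fin d => α p.2 • x p.1) := by
    intro x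
    ext y
    simp only [Set.mem_range]
    constructor
    · rintro ⟨j, rfl⟩
      refine ⟨(⟨(j : ℕ) / d, Nat.div_lt_of_lt_mul (Nat.mul_comm k d ▸ j.isLt)⟩,
        ⟨(j : ℕ) % d, Nat.mod_lt _ (by omega)⟩), ?_⟩
      rw [hcvec]
      exact (Algebra.smul_def _ _).trans (mul_comm _ _)
    · rintro ⟨⟨i, j⟩, rfl⟩
      have hlt : (i : ℕ) * d + (j : ℕ) < k * d := by
        calc (i : ℕ) * d + (j : ℕ) < (i : ℕ) * d + d := by omega
        _ = ((i : ℕ) + 1) * d := by ring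
        _ ≤ k * d := Nat.mul_le_mul_right d i.isLt
      refine ⟨⟨(i : ℕ) * d + (j : ℕ), hlt⟩, ?_⟩
      rw [hcvec]
      have h1 : ((i : ℕ) * d + (j : ℕ)) / d = i := by
        rw [Nat.add_comm, Nat.add_mul_div_right _ _ hd0, Nat.div_eq_of_lt j.isLt, Nat.zero_add]
      have h2 : ((i : ℕ) * d + (j : ℕ)) % d = j := by
        rw [Nat.add_comm, Nat.add_mul_mod_self_right, Nat.mod_eq_of_lt j.isLt]
      simp only [h1, h2, Fin.eta]
      exact ((Algebra.smul_def _ _).trans (mul_comm _ _)).symm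
  -- key rank computation
  have key : ∀ x : Fin k → L,
      rankWeight K (cvec x) = d * Module.finrank E (Submodule.span E (Set.range x)) := by
    intro x
    unfold rankWeight
    rw [hrange x, aux_span_eq α hα x, aux_finrank_restrict _ hKE hd]
  have hle2 : ∀ x : Fin k → L,
      Module.finrank E (Submodule.span E (Set.range x)) ≤ 2 :=
    fun x => hEL ▸ Submodule.finrank_le _
  have hpos : ∀ x : Fin k → L, x ≠ 0 →
      1 ≤ Module.finrank E (Submodule.span E (Set.range x)) := by
    intro x hx
    obtain ⟨i, hi⟩ := Function.ne_iff.mp hx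
    have hmem : x i ∈ Submodule.span E (Set.range x) :=
      Submodule.subset_span ⟨i, rfl⟩
    have : Nontrivial (Submodule.span E (Set.range x)) :=
      nontrivial_of_ne ⟨x i, hmem⟩ 0 (by simpa using hi)
    have := Module.finrank_pos (R := E) (M := Submodule.span E (Set.range x))
    omega
  constructor
  · intro x hx
    constructor
    · intro h1
      rw [key x, h1, mul_one]
    · intro h2
      have := hle2 x
      have h2' : Module.finrank E (Submodule.span E (Set.range x)) = 2 := by omega
      rw [key x, h2', mul_comm]
  · -- the linear map
    set f : (Fin k → L) →ₗ[L] (Fin (k * d) → L) :=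
      { toFun := fun x j => x ⟨(j : ℕ) / d, Nat.div_lt_of_lt_mul (Nat.mul_comm k d ▸ j.isLt)⟩ *
          algebraMap E L (α ⟨(j : ℕ) % d, Nat.mod_lt _ (by omega)⟩)
        map_add' := fun x y => by funext j; simp [add_mul]
        map_smul' := fun c x => by funext j; simp [mul_assoc] } with hfdef
    have hf : ∀ x, f x = cvec x := by
      intro x; funext j; rw [hcvec]; rfl
    have hfc : ⇑f = cvec := funext hf
    have hinj : Function.Injective f := by
      rw [← LinearMap.ker_eq_bot]
      apply LinearMap.ker_eq_bot'.mpr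
      intro x hx0
      funext i
      have hlt : (i : ℕ) * d < k * d := by
        calc (i : ℕ) * d < (i : ℕ) * d + d := by omega
        _ = ((i : ℕ) + 1) * d := by ring
        _ ≤ k * d := Nat.mul_le_mul_right d i.isLt
      have := congrFun hx0 ⟨(i : ℕ) * d, hlt⟩
      simp only [hfdef, LinearMap.coe_mk, AddHom.coe_mk, Pi.zero_apply] at this
      have h1 : ((i : ℕ) * d) / d = i := Nat.mul_div_cancel _ hd0
      have h2 : ((i : ℕ) * d) % d = 0 := Nat.mul_mod_left _ _
      simp only [h1, h2, Fin.eta] at this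
      rcases mul_eq_zero.mp this with h | h
      · exact h
      · exact absurd h (by
          simpa using (map_ne_zero (algebraMap E L)).mpr (hαli.ne_zero ⟨0, hd0⟩))
    refine ⟨LinearMap.range f, ?_, ?_, ?_, ?_, ?_, ?_⟩
    · rw [LinearMap.coe_range, hfc]
    · rw [LinearMap.finrank_range_of_inj hinj]
      simp [Module.finrank_pi]
    · rintro c hc hc0
      obtain ⟨x, rfl⟩ := hc
      have hx : x ≠ 0 := by rintro rfl; simp at hc0
      rw [hf x] at hc0 ⊢
      have h1 := hpos x hx
      have h2 := hle2 x
      interval_cases h : Module.finrank E (Submodule.span E (Set.range x))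
      · exact Or.inl ((key x).trans (by rw [h, mul_one]))
      · exact Or.inr ((key x).trans (by rw [h, mul_comm]))
    · rintro c hc hc0
      obtain ⟨x, rfl⟩ := hc
      have hx : x ≠ 0 := by rintro rfl; simp at hc0
      rw [hf x] at hc0 ⊢
      rw [key x]
      have := hpos x hx
      nlinarith
    · set x : Fin k → L := Pi.single ⟨0, by omega⟩ 1 with hxdef
      have hspan : Submodule.span E (Set.range x) = Submodule.span E {(1 : L)} := by
        apply le_antisymm
        · rw [Submodule.span_le]
          rintro _ ⟨i, rfl⟩
          by_cases hi : i = ⟨0, by omega⟩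
          · subst hi
            simp only [hxdef, Pi.single_eq_same]
            exact Submodule.mem_span_singleton_self _
          · rw [hxdef, Pi.single_eq_of_ne hi]
            exact Submodule.zero_mem _
        · rw [Submodule.span_le, Set.singleton_subset_iff]
          exact Submodule.subset_span ⟨⟨0, by omega⟩, by simp [hxdef]⟩
      have hxr : rankWeight K (cvec x) = d := by
        rw [key x, hspan, finrank_span_singleton one_ne_zero, mul_one]
      refine ⟨cvec x, ⟨x, hf x⟩, ?_, hxr⟩
      intro h0
      rw [h0] at hxr
      have hz : rankWeight K (0 : Fin (k * d) → L) = 0 := by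
        unfold rankWeight
        have h1 : Submodule.span K (Set.range (0 : Fin (k * d) → L)) = ⊥ := by
          rw [Submodule.span_eq_bot]; rintro _ ⟨j, rfl⟩; rfl
        rw [h1, finrank_bot]
      omega
    · exact mul_lt_mul_of_pos_right hk hd0
end

section
/- Let V be an F_q-vector space of dimension n = tl and let Σ be a t-spread of V. Let 1 < r < l and let S₁,…,S_r be pairwise distinct elements of Σ such that dim_{F_q}(S₁ + ⋯ + S_r) = tr. Then there exists S_{r+1} ∈ Σ such that dim_{F_q}(S₁ + ⋯ + S_r + S_{r+1}) = t(r+1). -/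
lemma aux_arith (A a : ℕ) (hA : 2 ≤ A) (ha : 2 ≤ a) : (A-1)*(a-1) < A*a - 1 := by
  obtain ⟨A', rfl⟩ := Nat.exists_eq_add_of_le hA
  obtain ⟨a', rfl⟩ := Nat.exists_eq_add_of_le ha
  have h1 : 2 + A' - 1 = 1 + A' := by omega
  have h2 : 2 + a' - 1 = 1 + a' := by omega
  rw [h1, h2]
  have : (1+A')*(1+a') + 1 < (2+A')*(2+a') := by nlinarith
  omega


/-- Let `Σ` be a `t`-spread of an `n`-dimensional `F_q`-vector space `V`
with `n = tl`. If `1 < r < l` and `S₁,…,S_r` are pairwise distinct members of `Σ` with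
`dim(S₁ + ⋯ + S_r) = tr`, then some `S_{r+1} ∈ Σ` satisfies
`dim(S₁ + ⋯ + S_r + S_{r+1}) = t(r+1)`. -/
theorem spread_extend_direct_sum
    {K V : Type*} [Field K] [Fintype K] [AddCommGroup V] [Module K V]
    [FiniteDimensional K V]
    {n t l : ℕ} (hn : n = t * l) (hV : Module.finrank K V = n)
    (Sp : Set (Submodule K V))
    (hdim : ∀ S ∈ Sp, Module.finrank K S = t)
    (hcover : ∀ v : V, ∃ S ∈ Sp, v ∈ S)
    (hint : ∀ S₁ ∈ Sp, ∀ S₂ ∈ Sp, S₁ ≠ S₂ → S₁ ⊓ S₂ = ⊥)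
    {r : ℕ} (hr1 : 1 < r) (hrl : r < l)
    (S : Fin r → Submodule K V) (hS : ∀ i, S i ∈ Sp) (hinj : Function.Injective S)
    (hsum : Module.finrank K ↥(⨆ i, S i) = t * r) :
    ∃ S' ∈ Sp, Module.finrank K ↥((⨆ i, S i) ⊔ S') = t * (r + 1) := by
  classical
  have hFinV : Finite V := Module.finite_of_finite K
  haveI : Fintype V := Fintype.ofFinite V
  haveI : Fintype (Submodule K V) :=
    Fintype.ofFinite _
  set W := ⨆ i, S i with hW
  set q := Fintype.card K with hq
  have hq2 : 2 ≤ q := Fintype.one_lt_card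
  -- t ≥ 1
  have ht : 1 ≤ t := by
    by_contra h
    have ht0 : t = 0 := by omega
    have h0 : (S ⟨0, by omega⟩ : Submodule K V) = ⊥ := by
      rw [← Submodule.finrank_eq_zero (R := K)]
      rw [hdim _ (hS _), ht0]
    have h1 : (S ⟨1, by omega⟩ : Submodule K V) = ⊥ := by
      rw [← Submodule.finrank_eq_zero (R := K)]
      rw [hdim _ (hS _), ht0]
    have := hinj (h0.trans h1.symm)
    simp at this
  -- key : some spread element meets W trivially
  have key : ∃ S' ∈ Sp, W ⊓ S' = ⊥ := by
    by_contra hcon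
    push_neg at hcon
    -- injection from Sp into nonzero vectors of W
    have pick : ∀ T : {T // T ∈ Sp}, ∃ v : V, v ∈ W ∧ v ∈ (T : Submodule K V) ∧ v ≠ 0 := by
      rintro ⟨T, hT⟩
      obtain ⟨v, hv, hv0⟩ := Submodule.exists_mem_ne_zero_of_ne_bot (hcon T hT)
      exact ⟨v, hv.1, hv.2, hv0⟩
    choose f hfW hfT hf0 using pick
    have hfinj : Function.Injective f := by
      rintro ⟨T₁, h₁⟩ ⟨T₂, h₂⟩ hEq
      by_contra hne
      have hne' : T₁ ≠ T₂ := by simpa using (fun h => hne (by simpa using h))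
      have hm1 : f ⟨T₁, h₁⟩ ∈ T₁ := hfT ⟨T₁, h₁⟩
      have hm2 : f ⟨T₁, h₁⟩ ∈ T₂ := by rw [hEq]; exact hfT ⟨T₂, h₂⟩
      have hmm : f ⟨T₁, h₁⟩ ∈ T₁ ⊓ T₂ := Submodule.mem_inf.2 ⟨hm1, hm2⟩
      rw [hint T₁ h₁ T₂ h₂ hne'] at hmm
      exact hf0 _ (by simpa using hmm)
    -- cardinalities
    haveI : Fintype ↥W := Fintype.ofFinite _
    have hcardW : Nat.card ↥W = q ^ (t * r) := by
      rw [Nat.card_eq_fintype_card, Module.card_eq_pow_finrank (K := K), hsum]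
    -- upper bound on |Sp|
    let g : {T // T ∈ Sp} → {v : V // v ∈ (W : Set V) \ {0}} :=
      fun T => ⟨f T, hfW T, hf0 T⟩
    have hginj : Function.Injective g := by
      intro a b hab
      exact hfinj (by simpa [g] using congrArg Subtype.val hab)
    have hupper : Nat.card {T // T ∈ Sp} ≤ q ^ (t * r) - 1 := by
      have := Nat.card_le_card_of_injective g hginj
      have hWn : ((W : Set V)).ncard = q ^ (t*r) := by
        rw [← Nat.card_coe_set_eq, SetLike.coe_sort_coe, hcardW]
      have hset : Nat.card {v : V // v ∈ (W : Set V) \ {0}} = q ^ (t*r) - 1 := by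
        rw [Nat.card_coe_set_eq, Set.ncard_diff_singleton_of_mem (Submodule.zero_mem W), hWn]
      omega
    -- lower bound : covering
    have hcardV : Fintype.card V = q ^ n := by
      rw [Module.card_eq_pow_finrank (K := K), hV]
    have hsub : (Finset.univ.erase (0 : V)) ⊆
        Sp.toFinset.biUnion (fun T => (T : Set V).toFinset.erase 0) := by
      intro v hv
      rw [Finset.mem_erase] at hv
      obtain ⟨T, hT, hvT⟩ := hcover v
      refine Finset.mem_biUnion.2 ⟨T, Set.mem_toFinset.2 hT, ?_⟩
      rw [Finset.mem_erase, Set.mem_toFinset]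
      exact ⟨hv.1, hvT⟩
    have hlower : q ^ n - 1 ≤ Sp.toFinset.card * (q ^ t - 1) := by
      have h1 : (Finset.univ.erase (0 : V)).card = q ^ n - 1 := by
        rw [Finset.card_erase_of_mem (Finset.mem_univ _), Finset.card_univ, hcardV]
      have h2 : ∀ T ∈ Sp.toFinset, ((T : Set V).toFinset.erase 0).card = q ^ t - 1 := by
        intro T hT
        rw [Finset.card_erase_of_mem (Set.mem_toFinset.2 (Submodule.zero_mem T))]
        have hc2 : (T : Set V).toFinset.card = q ^ t := by
          rw [← Set.ncard_eq_toFinset_card', ← Nat.card_coe_set_eq, SetLike.coe_sort_coe]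
          haveI : Fintype ↥T := Fintype.ofFinite _
          rw [Nat.card_eq_fintype_card, Module.card_eq_pow_finrank (K := K),
            hdim T (Set.mem_toFinset.1 hT)]
        rw [hc2]
      calc q ^ n - 1 = (Finset.univ.erase (0 : V)).card := h1.symm
        _ ≤ (Sp.toFinset.biUnion (fun T => (T : Set V).toFinset.erase 0)).card :=
            Finset.card_le_card hsub
        _ ≤ ∑ T ∈ Sp.toFinset, ((T : Set V).toFinset.erase 0).card :=
            Finset.card_biUnion_le
        _ = Sp.toFinset.card * (q ^ t - 1) := by
            rw [Finset.sum_congr rfl h2, Finset.sum_const, smul_eq_mul]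
    -- combine
    have hSpCard : Nat.card {T // T ∈ Sp} = Sp.toFinset.card := by
      rw [Nat.card_coe_set_eq, Set.ncard_eq_toFinset_card']
    rw [hSpCard] at hupper
    have hA : 2 ≤ q ^ (t * r) := by
      calc 2 ≤ q := hq2
        _ = q ^ 1 := (pow_one q).symm
        _ ≤ q ^ (t * r) := Nat.pow_le_pow_right (by omega) (by nlinarith)
    have ha : 2 ≤ q ^ t := by
      calc 2 ≤ q := hq2
        _ = q ^ 1 := (pow_one q).symm
        _ ≤ q ^ t := Nat.pow_le_pow_right (by omega) ht
    have hnn : q ^ (t * r) * q ^ t ≤ q ^ n := by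
      rw [← pow_add]
      exact Nat.pow_le_pow_right (by omega) (by nlinarith)
    have hchain : q ^ n - 1 ≤ (q ^ (t*r) - 1) * (q ^ t - 1) :=
      le_trans hlower (Nat.mul_le_mul_right _ hupper)
    have := aux_arith (q ^ (t*r)) (q ^ t) hA ha
    omega
  obtain ⟨S', hS'Sp, hS'W⟩ := key
  refine ⟨S', hS'Sp, ?_⟩
  have := Submodule.finrank_sup_add_finrank_inf_eq W S'
  rw [hS'W, finrank_bot, add_zero, hsum, hdim S' hS'Sp] at this
  rw [this]; ring
end

section
/- Let V be an F_q-vector space of dimension n = tl and let Σ be a t-spread of V. Then there exist S₁,…,S_l ∈ Σ such that V is the internal direct sum V = S₁ ⊕ S₂ ⊕ ⋯ ⊕ S_l. -/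
open Module
open scoped DirectSum

section Aux

variable {K V : Type*} [Field K] [Fintype K] [AddCommGroup V] [Module K V]
    [FiniteDimensional K V]

private lemma spread_exists_disjoint
    {n t : ℕ} (ht : 1 ≤ t) (hV : Module.finrank K V = n)
    (Sp : Set (Submodule K V))
    (hdim : ∀ S ∈ Sp, Module.finrank K S = t)
    (hcover : ∀ v : V, ∃ S ∈ Sp, v ∈ S)
    (hint : ∀ S₁ ∈ Sp, ∀ S₂ ∈ Sp, S₁ ≠ S₂ → S₁ ⊓ S₂ = ⊥)
    (W : Submodule K V) (hW : Module.finrank K W + t ≤ n) :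
    ∃ S ∈ Sp, S ⊓ W = ⊥ := by
  classical
  haveI : Finite V := Module.finite_of_finite K
  haveI : Fintype V := Fintype.ofFinite V
  set q := Fintype.card K with hqdef
  have hq2 : 2 ≤ q := Fintype.one_lt_card
  have hfin : {S | S ∈ Sp ∧ ¬ Disjoint S W}.Finite := by
    haveI : Finite (Submodule K V) :=
      Finite.of_injective (fun P : Submodule K V => (P : Set V)) SetLike.coe_injective
    exact Set.toFinite _
  set T : Finset (Submodule K V) := hfin.toFinset with hTdef
  have hTmem : ∀ {S : Submodule K V}, S ∈ T ↔ S ∈ Sp ∧ ¬ Disjoint S W := by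
    intro S; rw [hTdef, Set.Finite.mem_toFinset]; rfl
  -- cardinality of a submodule
  have hcardsub : ∀ P : Submodule K V, Fintype.card P = q ^ Module.finrank K P := by
    intro P; exact card_eq_pow_finrank
  -- the finset of nonzero vectors of a submodule
  have hg : ∀ P : Submodule K V, ((P : Set V).toFinset \ {0}).card
      = q ^ Module.finrank K P - 1 := by
    intro P
    rw [Finset.card_sdiff_of_subset (by simp [Finset.singleton_subset_iff, Set.mem_toFinset, P.zero_mem])]
    simp [Set.toFinset_card, hcardsub P]
  -- Claim A : T.card * (q - 1) ≤ q ^ finrank W - 1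
  have claimA : T.card * (q - 1) ≤ q ^ Module.finrank K W - 1 := by
    have hdisj : ∀ S₁ ∈ T, ∀ S₂ ∈ T, S₁ ≠ S₂ →
        Disjoint (((S₁ ⊓ W : Submodule K V) : Set V).toFinset \ {0})
          (((S₂ ⊓ W : Submodule K V) : Set V).toFinset \ {0}) := by
      intro S₁ h1 S₂ h2 hne
      rw [Finset.disjoint_left]
      intro x hx1 hx2
      simp only [Finset.mem_sdiff, Set.mem_toFinset, SetLike.mem_coe, Submodule.mem_inf,
        Finset.mem_singleton] at hx1 hx2
      have h12 : S₁ ⊓ S₂ = ⊥ := hint S₁ (hTmem.mp h1).1 S₂ (hTmem.mp h2).1 hne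
      have : x ∈ S₁ ⊓ S₂ := ⟨hx1.1.1, hx2.1.1⟩
      rw [h12, Submodule.mem_bot] at this
      exact hx1.2 this
    have hsum : ∑ S ∈ T, (((S ⊓ W : Submodule K V) : Set V).toFinset \ {0}).card
        = (T.biUnion (fun S => ((S ⊓ W : Submodule K V) : Set V).toFinset \ {0})).card :=
      (Finset.card_biUnion hdisj).symm
    have hsubset : T.biUnion (fun S => ((S ⊓ W : Submodule K V) : Set V).toFinset \ {0})
        ⊆ (W : Set V).toFinset \ {0} := by
      intro x hx
      rw [Finset.mem_biUnion] at hx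
      obtain ⟨S, hS, hx⟩ := hx
      simp only [Finset.mem_sdiff, Set.mem_toFinset, SetLike.mem_coe, Submodule.mem_inf,
        Finset.mem_singleton] at hx ⊢
      exact ⟨hx.1.2, hx.2⟩
    have hlow : ∀ S ∈ T, q - 1 ≤ (((S ⊓ W : Submodule K V) : Set V).toFinset \ {0}).card := by
      intro S hS
      rw [hg]
      have hne : S ⊓ W ≠ ⊥ := by
        intro hbot
        exact (hTmem.mp hS).2 (disjoint_iff.mpr hbot)
      have hr : 1 ≤ Module.finrank K (S ⊓ W : Submodule K V) := by
        rcases Nat.eq_zero_or_pos (Module.finrank K (S ⊓ W : Submodule K V)) with h | h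
        · exact absurd (Submodule.finrank_eq_zero.mp h) hne
        · exact h
      have : q ^ 1 ≤ q ^ Module.finrank K (S ⊓ W : Submodule K V) :=
        Nat.pow_le_pow_right (by omega) hr
      rw [pow_one] at this
      omega
    calc T.card * (q - 1) = ∑ _S ∈ T, (q - 1) := by
          rw [Finset.sum_const, smul_eq_mul, mul_comm]
      _ ≤ ∑ S ∈ T, (((S ⊓ W : Submodule K V) : Set V).toFinset \ {0}).card :=
          Finset.sum_le_sum hlow
      _ = (T.biUnion (fun S => ((S ⊓ W : Submodule K V) : Set V).toFinset \ {0})).card := hsum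
      _ ≤ ((W : Set V).toFinset \ {0}).card := Finset.card_le_card hsubset
      _ = q ^ Module.finrank K W - 1 := hg W
  -- Claim C : the covered set
  set C : Finset V := T.biUnion (fun S => ((S : Set V).toFinset \ {0})) with hCdef
  have claimC : C.card ≤ T.card * (q ^ t - 1) := by
    calc C.card ≤ ∑ S ∈ T, (((S : Set V).toFinset \ {0})).card := Finset.card_biUnion_le
      _ = ∑ S ∈ T, (q ^ t - 1) := by
          apply Finset.sum_congr rfl
          intro S hS
          rw [hg, hdim S (hTmem.mp hS).1]
      _ = T.card * (q ^ t - 1) := by rw [Finset.sum_const, smul_eq_mul]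
  -- numeric bound : C.card < q ^ n - 1
  have hnum : C.card < q ^ n - 1 := by
    set w := Module.finrank K W
    have h1 : T.card * (q ^ t - 1) * (q - 1) ≤ (q ^ w - 1) * (q ^ t - 1) := by
      rw [mul_right_comm]
      exact Nat.mul_le_mul_right _ claimA
    have h2 : (q ^ w - 1) * (q ^ t - 1) ≤ (q ^ w - 1) * q ^ t :=
      Nat.mul_le_mul_left _ (Nat.sub_le _ _)
    have h3 : (q ^ w - 1) * q ^ t = q ^ (w + t) - q ^ t := by
      rw [Nat.sub_mul, one_mul, pow_add]
    have h4 : q ^ (w + t) ≤ q ^ n := Nat.pow_le_pow_right (by omega) hW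
    have h5 : q ^ t ≥ 2 := le_trans hq2 (Nat.le_self_pow (by omega) q)
    have h6 : q ^ t ≤ q ^ (w + t) := Nat.pow_le_pow_right (by omega) (by omega)
    have h7 : T.card * (q ^ t - 1) ≤ T.card * (q ^ t - 1) * (q - 1) :=
      Nat.le_mul_of_pos_right _ (by omega)
    omega
  -- find an uncovered nonzero vector
  have hcardV : Fintype.card V = q ^ n := by rw [← hV]; exact card_eq_pow_finrank
  have huniv : ((Finset.univ : Finset V) \ {0}).card = q ^ n - 1 := by
    rw [Finset.card_sdiff_of_subset (Finset.singleton_subset_iff.mpr (Finset.mem_univ _))]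
    simp [hcardV]
  have : ¬ ((Finset.univ : Finset V) \ {0} ⊆ C) := by
    intro hsub
    have := Finset.card_le_card hsub
    omega
  rw [Finset.not_subset] at this
  obtain ⟨v, hv, hvC⟩ := this
  rw [Finset.mem_sdiff, Finset.mem_singleton] at hv
  obtain ⟨S₀, hS₀, hvS₀⟩ := hcover v
  refine ⟨S₀, hS₀, ?_⟩
  by_contra hbot
  have hS₀T : S₀ ∈ T := hTmem.mpr ⟨hS₀, fun hd => hbot (disjoint_iff.mp hd)⟩
  apply hvC
  rw [hCdef, Finset.mem_biUnion]
  exact ⟨S₀, hS₀T, by simp [Set.mem_toFinset, hvS₀, hv.2]⟩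

end Aux

/-- If `Σ` is a `t`-spread of an `n`-dimensional `F_q`-vector space `V`
with `n = tl`, then there are `S₁,…,S_l ∈ Σ` with `V = S₁ ⊕ ⋯ ⊕ S_l` (internal direct sum). -/
theorem spread_gives_direct_sum_decomposition
    {K V : Type*} [Field K] [Fintype K] [AddCommGroup V] [Module K V]
    [FiniteDimensional K V]
    {n t l : ℕ} (hn : n = t * l) (hV : Module.finrank K V = n)
    (Sp : Set (Submodule K V))
    (hdim : ∀ S ∈ Sp, Module.finrank K S = t)
    (hcover : ∀ v : V, ∃ S ∈ Sp, v ∈ S)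
    (hint : ∀ S₁ ∈ Sp, ∀ S₂ ∈ Sp, S₁ ≠ S₂ → S₁ ⊓ S₂ = ⊥) :
    ∃ S : Fin l → Submodule K V, (∀ i, S i ∈ Sp) ∧ DirectSum.IsInternal S := by
  classical
  by_cases ht : t = 0
  · -- trivial case : V is a zero space
    subst ht
    simp only [Nat.zero_mul] at hn
    subst hn
    haveI : Subsingleton V := by
      rw [← Module.finrank_zero_iff (R := K)]; exact hV
    haveI : Subsingleton (Submodule K V) := inferInstance
    obtain ⟨S₀, hS₀, -⟩ := hcover 0
    refine ⟨fun _ => S₀, fun _ => hS₀, ?_⟩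
    rw [DirectSum.isInternal_submodule_iff_iSupIndep_and_iSup_eq_top]
    constructor
    · intro i
      have h1 : S₀ = ⊥ := Subsingleton.elim _ _
      rw [h1]
      exact disjoint_bot_left
    · exact Subsingleton.elim _ _
  · have ht1 : 1 ≤ t := Nat.one_le_iff_ne_zero.mpr ht
    -- build a chain of pairwise-compatible spread members
    have chain : ∀ k : ℕ, k ≤ l → ∃ S : Fin k → Submodule K V,
        (∀ i, S i ∈ Sp) ∧ Module.finrank K (⨆ i, S i : Submodule K V) = t * k := by
      intro k
      induction k with
      | zero =>
        intro _
        refine ⟨fun i => i.elim0, fun i => i.elim0, ?_⟩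
        rw [iSup_of_empty]
        simp
      | succ k ih =>
        intro hkl
        obtain ⟨S, hS, hrank⟩ := ih (by omega)
        set W : Submodule K V := ⨆ i, S i with hWdef
        have hWle : Module.finrank K W + t ≤ n := by
          rw [hrank, hn]
          have : t * k + t = t * (k + 1) := by ring
          rw [this]
          exact Nat.mul_le_mul_left t hkl
        obtain ⟨S', hS', hdisj⟩ :=
          spread_exists_disjoint ht1 hV Sp hdim hcover hint W hWle
        set Snew : Fin (k + 1) → Submodule K V := Fin.snoc S S' with hSnew
        have hmem : ∀ i, Snew i ∈ Sp := by
          intro i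
          refine Fin.lastCases (motive := fun i => Snew i ∈ Sp) ?_ ?_ i
          · rw [hSnew]; simp only [Fin.snoc_last]; exact hS'
          · intro j; rw [hSnew]; simp only [Fin.snoc_castSucc]; exact hS j
        have hsup : (⨆ i, Snew i) = W ⊔ S' := by
          apply le_antisymm
          · apply iSup_le
            intro i
            refine Fin.lastCases (motive := fun i => Snew i ≤ W ⊔ S') ?_ ?_ i
            · rw [hSnew]; simp only [Fin.snoc_last]; exact le_sup_right
            · intro j; rw [hSnew]; simp only [Fin.snoc_castSucc]
              exact le_trans (le_iSup S j) le_sup_left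
          · apply sup_le
            · apply iSup_le
              intro j
              have hj : Snew (Fin.castSucc j) = S j := by rw [hSnew]; simp only [Fin.snoc_castSucc]
              rw [← hj]
              exact le_iSup Snew _
            · have hj : Snew (Fin.last k) = S' := by rw [hSnew]; simp only [Fin.snoc_last]
              rw [← hj]
              exact le_iSup Snew _
        refine ⟨Snew, hmem, ?_⟩
        rw [hsup]
        have h1 : Module.finrank K (W ⊔ S' : Submodule K V)
            + Module.finrank K (W ⊓ S' : Submodule K V)
            = Module.finrank K W + Module.finrank K S' :=
          Submodule.finrank_sup_add_finrank_inf_eq W S'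
        have h2 : W ⊓ S' = ⊥ := by rw [inf_comm]; exact hdisj
        rw [h2] at h1
        simp only [finrank_bot, add_zero] at h1
        rw [h1, hrank, hdim S' hS']
        ring
    obtain ⟨S, hS, hrank⟩ := chain l le_rfl
    have htop : (⨆ i, S i : Submodule K V) = ⊤ := by
      apply Submodule.eq_top_of_finrank_eq
      rw [hrank, hV, hn]
    refine ⟨S, hS, ?_⟩
    have hsurj : Function.Surjective (DirectSum.coeLinearMap S) := by
      rw [← LinearMap.range_eq_top, DirectSum.range_coeLinearMap, htop]
    haveI : FiniteDimensional K (⨁ i, S i) :=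
      Module.Finite.equiv (DirectSum.linearEquivFunOnFintype (R := K) (ι := Fin l) (M := fun i => ↥(S i))).symm
    have hdimeq : Module.finrank K (⨁ i, S i) = Module.finrank K V := by
      rw [Module.finrank_directSum, hV, hn]
      rw [Finset.sum_congr rfl (fun i _ => hdim (S i) (hS i))]
      rw [Finset.sum_const, Finset.card_univ, Fintype.card_fin, smul_eq_mul, mul_comm]
    exact ⟨(LinearMap.injective_iff_surjective_of_finrank_eq_finrank hdimeq).mpr hsurj, hsurj⟩
end

section
/- Let C be a non-degenerate [n,2,d] antipodal two-weight rank metric code over F_{q^m}/F_q with generator matrix G and associated q-system X ⊆ F_{q^m}². Let H₁ be the set of 1-dimensional F_{q^m}-subspaces H of F_{q^m}² with dim_{F_q}(H ∩ X) = n − d. Then |H₁| · (q^{n−d} − 1) = q^n − 1, and the set Σ = {H ∩ X : H ∈ H₁} is an (n−d)-spread of X. -/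
/-- Linear functional `v ↦ x 0 * v 0 + x 1 * v 1` on `L²`. -/
noncomputable def psiATW {L : Type*} [Field L] (x : Fin 2 → L) : (Fin 2 → L) →ₗ[L] L :=
  x 0 • LinearMap.proj 0 + x 1 • LinearMap.proj 1

lemma psiATW_apply {L : Type*} [Field L] (x v : Fin 2 → L) :
    psiATW x v = x 0 * v 0 + x 1 * v 1 := by
  simp [psiATW]

lemma psiATW_ker_finrank {L : Type*} [Field L] (x : Fin 2 → L) (hx : x ≠ 0) :
    Module.finrank L (LinearMap.ker (psiATW x)) = 1 := by
  obtain ⟨i, hi⟩ : ∃ i, x i ≠ 0 := by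
    by_contra h; push_neg at h; exact hx (funext h)
  set e : Fin 2 → L := Pi.single i 1 with he
  have hv : psiATW x e ≠ 0 := by
    fin_cases i <;> simpa [he, psiATW_apply, Pi.single_apply] using hi
  have hsurj : Function.Surjective (psiATW x) := by
    intro z
    refine ⟨(z / psiATW x e) • e, ?_⟩
    rw [map_smul, smul_eq_mul, div_mul_cancel₀ _ hv]
  have h := LinearMap.finrank_range_add_finrank_ker (psiATW x)
  rw [LinearMap.range_eq_top.mpr hsurj, finrank_top, Module.finrank_self] at h
  have h2 : Module.finrank L (Fin 2 → L) = 2 := by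
    rw [Module.finrank_pi, Fintype.card_fin]
  omega

lemma exists_psiATW_ker {L : Type*} [Field L] (H : Submodule L (Fin 2 → L))
    (hH : Module.finrank L H = 1) :
    ∃ x : Fin 2 → L, x ≠ 0 ∧ H = LinearMap.ker (psiATW x) := by
  have hHne : H ≠ ⊥ := by intro h; rw [h, finrank_bot] at hH; simp at hH
  obtain ⟨v, hvH, hv⟩ := (Submodule.ne_bot_iff H).mp hHne
  have hx : (![v 1, -v 0] : Fin 2 → L) ≠ 0 := by
    intro h
    apply hv
    have h0 := congrFun h 0
    have h1 := congrFun h 1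
    simp at h0 h1
    funext i; fin_cases i <;> simp [h0, h1]
  refine ⟨![v 1, -v 0], hx, ?_⟩
  have hvker : v ∈ LinearMap.ker (psiATW ![v 1, -v 0]) := by
    simp [LinearMap.mem_ker, psiATW_apply]; ring
  have h1 : Submodule.span L {v} = H :=
    Submodule.eq_of_le_of_finrank_eq ((Submodule.span_singleton_le_iff_mem v H).mpr hvH)
      (by rw [finrank_span_singleton hv, hH])
  have h2 : Submodule.span L {v} = LinearMap.ker (psiATW ![v 1, -v 0]) :=
    Submodule.eq_of_le_of_finrank_eq
      ((Submodule.span_singleton_le_iff_mem _ _).mpr hvker)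
      (by rw [finrank_span_singleton hv, psiATW_ker_finrank _ hx])
  rw [← h1, h2]

/-- Number of nonzero elements of a finite-dimensional vector space over a finite field. -/
lemma ncard_nonzero {K V : Type*} [Field K] [Fintype K] [AddCommGroup V] [Module K V]
    (W : Submodule K V) [FiniteDimensional K W] :
    ({v | v ∈ W ∧ v ≠ 0} : Set V).ncard = Fintype.card K ^ Module.finrank K W - 1 := by
  haveI : Finite W := Module.finite_of_finite K
  haveI : Finite (W : Set V) := by exact ‹Finite W›
  have hfin : (W : Set V).Finite := Set.toFinite _
  have hset : ({v | v ∈ W ∧ v ≠ 0} : Set V) = (W : Set V) \ {0} := by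
    ext v; simp [and_comm]
  rw [hset, Set.ncard_diff_singleton_of_mem W.zero_mem]
  congr 1
  have h1 : (W : Set V).ncard = Nat.card W := (Nat.card_coe_set_eq _).symm
  rw [h1]
  haveI : Fintype W := Fintype.ofFinite _
  rw [Nat.card_eq_fintype_card]
  exact Module.card_eq_pow_finrank

/-- For a non-degenerate `[n,2,d]` antipodal two-weight rank metric code
with associated `q`-system `X ⊆ F_{q^m}²`, the set `H₁` of `1`-dimensional `F_{q^m}`-subspaces
`H` with `dim_{F_q}(H ∩ X) = n - d` satisfies `|H₁|(q^{n-d} - 1) = q^n - 1`, and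
`Σ = {H ∩ X : H ∈ H₁}` is an `(n-d)`-spread of `X`. -/
theorem atw_gives_spread
    {K L : Type*} [Field K] [Fintype K] [Field L] [Algebra K L]
    {n d : ℕ}
    (C : Submodule L (Fin n → L)) (hdim : Module.finrank L C = 2)
    (G : Matrix (Fin 2) (Fin n) L)
    (hG : C = Submodule.span L (Set.range fun i => G i))
    (hnondeg : ∀ a : Fin n → K, a ≠ 0 → ∃ c ∈ C, ∑ i, c i * algebraMap K L (a i) ≠ 0)
    (hmin : ∀ c ∈ C, c ≠ 0 → d ≤ rankWeight K c)
    (hdex : ∃ c ∈ C, c ≠ 0 ∧ rankWeight K c = d)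
    (hdn : d < n)
    (htw : ∀ c ∈ C, c ≠ 0 → rankWeight K c = d ∨ rankWeight K c = n)
    (hfull : ∃ c ∈ C, rankWeight K c = n)
    (X : Submodule K (Fin 2 → L))
    (hX : X = Submodule.span K (Set.range fun j => fun i => G i j))
    (H₁ : Set (Submodule L (Fin 2 → L)))
    (hH₁ : H₁ = {H : Submodule L (Fin 2 → L) | Module.finrank L ↥H = 1 ∧
      Module.finrank K ↥(H.restrictScalars K ⊓ X) = n - d}) :
    H₁.ncard * (Fintype.card K ^ (n - d) - 1) = Fintype.card K ^ n - 1 ∧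
    -- Σ = {H ∩ X : H ∈ H₁} is an (n-d)-spread of X:
    (∀ H ∈ H₁, Module.finrank K ↥(H.restrictScalars K ⊓ X) = n - d) ∧
    (∀ v ∈ X, ∃ H ∈ H₁, v ∈ H.restrictScalars K ⊓ X) ∧
    (∀ H ∈ H₁, ∀ H' ∈ H₁, H ≠ H' →
      (H.restrictScalars K ⊓ X) ⊓ (H'.restrictScalars K ⊓ X) = ⊥) := by
  classical
  set cols : Fin n → (Fin 2 → L) := fun j i => G i j with hcols
  haveI hXfd : FiniteDimensional K X := by
    rw [hX]; exact FiniteDimensional.span_of_finite K (Set.finite_range _)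
  set cw : (Fin 2 → L) → (Fin n → L) := fun x i => x 0 * G 0 i + x 1 * G 1 i with hcw
  have hcw_eq : ∀ x, cw x = ∑ j, x j • G j := by
    intro x; funext i
    simp [hcw, Fin.sum_univ_two]
  have hmemC : ∀ x, cw x ∈ C := by
    intro x; rw [hG, hcw_eq]
    exact Submodule.sum_mem _ fun j _ =>
      Submodule.smul_mem _ _ (Submodule.subset_span ⟨j, rfl⟩)
  have hCmem : ∀ c ∈ C, ∃ x, c = cw x := by
    intro c hc
    rw [hG] at hc
    obtain ⟨x, hx⟩ := (Submodule.mem_span_range_iff_exists_fun L).mp hc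
    exact ⟨x, by rw [hcw_eq, hx]⟩
  have hpsi_col : ∀ x j, psiATW x (cols j) = cw x j := by
    intro x j; simp [psiATW_apply, hcols, hcw]
  have hrows : LinearIndependent L (fun i => G i) := by
    rw [linearIndependent_iff_card_eq_finrank_span, Set.finrank, ← hG, hdim, Fintype.card_fin]
  have hcwne : ∀ x : Fin 2 → L, x ≠ 0 → cw x ≠ 0 := by
    intro x hx h0
    apply hx
    have := Fintype.linearIndependent_iff.mp hrows x (by rw [← hcw_eq]; exact h0)
    funext j; exact this j
  have hcols_li : LinearIndependent K cols := by
    rw [Fintype.linearIndependent_iff]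
    intro g hg
    by_contra hne
    push_neg at hne
    obtain ⟨i0, hi0⟩ := hne
    have hgne : g ≠ 0 := fun h => hi0 (by rw [h]; rfl)
    obtain ⟨c, hcC, hcsum⟩ := hnondeg g hgne
    obtain ⟨x, rfl⟩ := hCmem c hcC
    apply hcsum
    calc ∑ i, cw x i * algebraMap K L (g i)
        = ∑ i, psiATW x (g i • cols i) := by
          refine Finset.sum_congr rfl fun i _ => ?_
          rw [LinearMap.map_smul_of_tower, ← hpsi_col, Algebra.smul_def, mul_comm]
      _ = psiATW x (∑ i, g i • cols i) := (map_sum _ _ _).symm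
      _ = 0 := by rw [hg, map_zero]
  have hfrX : Module.finrank K X = n := by
    rw [hX, finrank_span_eq_card hcols_li, Fintype.card_fin]
  -- the rank formula
  have hrank : ∀ x : Fin 2 → L,
      rankWeight K (cw x) +
        Module.finrank K
          ↥((LinearMap.ker (psiATW x)).restrictScalars K ⊓ X : Submodule K (Fin 2 → L)) = n := by
    intro x
    set φ : (Fin 2 → L) →ₗ[K] L := (psiATW x).restrictScalars K with hφ
    have hker : LinearMap.ker φ = (LinearMap.ker (psiATW x)).restrictScalars K :=
      LinearMap.ker_restrictScalars K (psiATW x)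
    set f : X →ₗ[K] L := φ.comp X.subtype with hf
    have hrange : LinearMap.range f = Submodule.span K (Set.range (cw x)) := by
      rw [hf, LinearMap.range_comp, Submodule.range_subtype, hX, Submodule.map_span,
        ← Set.range_comp]
      exact congrArg _ (congrArg Set.range (funext fun j => hpsi_col x j))
    have hkercomap : LinearMap.ker f =
        Submodule.comap X.subtype
          ((LinearMap.ker (psiATW x)).restrictScalars K ⊓ X : Submodule K (Fin 2 → L)) := by
      rw [hf, LinearMap.ker_comp, ← hker, Submodule.comap_inf, Submodule.comap_subtype_self,
        inf_top_eq, hker]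
    have hkerf : Module.finrank K (LinearMap.ker f) =
        Module.finrank K
          ↥((LinearMap.ker (psiATW x)).restrictScalars K ⊓ X : Submodule K (Fin 2 → L)) := by
      rw [hkercomap]
      exact LinearEquiv.finrank_eq (Submodule.comapSubtypeEquivOfLe inf_le_right)
    have h := LinearMap.finrank_range_add_finrank_ker f
    rw [hrange, hkerf, hfrX] at h
    exact h
  -- M1: one-dim L-subspaces meeting X nontrivially belong to H₁
  have hM1 : ∀ H : Submodule L (Fin 2 → L), Module.finrank L H = 1 →
      (∃ v, v ∈ X ∧ v ≠ 0 ∧ v ∈ H) → H ∈ H₁ := by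
    rintro H hH ⟨v, hvX, hv0, hvH⟩
    obtain ⟨x, hx, rfl⟩ := exists_psiATW_ker H hH
    haveI hfd : FiniteDimensional K
        ((LinearMap.ker (psiATW x)).restrictScalars K ⊓ X : Submodule K (Fin 2 → L)) :=
      Submodule.finiteDimensional_of_le inf_le_right
    have hpos : Module.finrank K
        ↥((LinearMap.ker (psiATW x)).restrictScalars K ⊓ X : Submodule K (Fin 2 → L)) ≠ 0 := by
      rw [ne_eq, Submodule.finrank_eq_zero]
      intro hb
      have : v ∈ ((LinearMap.ker (psiATW x)).restrictScalars K ⊓ X :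
          Submodule K (Fin 2 → L)) := ⟨hvH, hvX⟩
      rw [hb] at this
      exact hv0 this
    have h := hrank x
    rcases htw (cw x) (hmemC x) (hcwne x hx) with hd | hn
    · rw [hH₁]; exact ⟨hH, by omega⟩
    · omega
  -- M2: members of H₁ contain a nonzero element of X
  have hM2 : ∀ H ∈ H₁, ∃ v, v ∈ X ∧ v ≠ 0 ∧ v ∈ H := by
    intro H hH
    rw [hH₁] at hH
    obtain ⟨h1, h2⟩ := hH
    have hne : (H.restrictScalars K ⊓ X : Submodule K (Fin 2 → L)) ≠ ⊥ := by
      intro hb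
      rw [hb, finrank_bot] at h2
      omega
    obtain ⟨v, hv, hv0⟩ := (Submodule.ne_bot_iff _).mp hne
    exact ⟨v, hv.2, hv0, hv.1⟩
  have hM3 : ∀ v, v ∈ X → v ≠ 0 → Submodule.span L {v} ∈ H₁ := fun v hvX hv0 =>
    hM1 _ (finrank_span_singleton hv0) ⟨v, hvX, hv0, Submodule.mem_span_singleton_self v⟩
  have hH₁ne : H₁.Nonempty := by
    obtain ⟨c, hcC, hc0, hcd⟩ := hdex
    obtain ⟨x, rfl⟩ := hCmem c hcC
    have hx : x ≠ 0 := by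
      rintro rfl; apply hc0; funext i; simp [hcw]
    refine ⟨LinearMap.ker (psiATW x), ?_⟩
    rw [hH₁]
    refine ⟨psiATW_ker_finrank x hx, ?_⟩
    have := hrank x
    omega
  -- part 2
  have part2 : ∀ H ∈ H₁, Module.finrank K ↥(H.restrictScalars K ⊓ X) = n - d := by
    intro H hH; rw [hH₁] at hH; exact hH.2
  -- part 3
  have part3 : ∀ v ∈ X, ∃ H ∈ H₁, v ∈ H.restrictScalars K ⊓ X := by
    intro v hv
    by_cases hv0 : v = 0
    · obtain ⟨H, hH⟩ := hH₁ne
      exact ⟨H, hH, by simp [hv0]⟩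
    · exact ⟨_, hM3 v hv hv0,
        ⟨Submodule.mem_span_singleton_self v, hv⟩⟩
  -- part 4
  have part4 : ∀ H ∈ H₁, ∀ H' ∈ H₁, H ≠ H' →
      (H.restrictScalars K ⊓ X) ⊓ (H'.restrictScalars K ⊓ X) = ⊥ := by
    intro H hH H' hH' hne
    rw [hH₁] at hH hH'
    rw [eq_bot_iff]
    intro v hv
    simp only [Submodule.mem_inf, Submodule.restrictScalars_mem] at hv
    rw [Submodule.mem_bot]
    by_contra hv0
    apply hne
    have h1 : Submodule.span L {v} = H :=
      Submodule.eq_of_le_of_finrank_eq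
        ((Submodule.span_singleton_le_iff_mem _ _).mpr hv.1.1)
        (by rw [finrank_span_singleton hv0, hH.1])
    have h2 : Submodule.span L {v} = H' :=
      Submodule.eq_of_le_of_finrank_eq
        ((Submodule.span_singleton_le_iff_mem _ _).mpr hv.2.1)
        (by rw [finrank_span_singleton hv0, hH'.1])
    rw [← h1, h2]
  -- part 1: counting
  have part1 : H₁.ncard * (Fintype.card K ^ (n - d) - 1) = Fintype.card K ^ n - 1 := by
    haveI : Finite X := Module.finite_of_finite K
    haveI : Finite (X : Set (Fin 2 → L)) := by exact ‹Finite X›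
    have hXsetfin : (X : Set (Fin 2 → L)).Finite := Set.toFinite _
    have hSfin : ({v | v ∈ X ∧ v ≠ 0} : Set (Fin 2 → L)).Finite :=
      hXsetfin.subset fun v hv => hv.1
    set s : Finset (Fin 2 → L) := hSfin.toFinset with hs
    set t : Finset (Submodule L (Fin 2 → L)) :=
      s.image (fun v => Submodule.span L {v}) with ht
    have hts : (↑t : Set (Submodule L (Fin 2 → L))) = H₁ := by
      ext H
      simp only [ht, Finset.coe_image, Set.mem_image, Finset.mem_coe, hs,
        Set.Finite.mem_toFinset, Set.mem_setOf_eq]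
      constructor
      · rintro ⟨v, ⟨hvX, hv0⟩, rfl⟩
        exact hM3 v hvX hv0
      · intro hH
        obtain ⟨v, hvX, hv0, hvH⟩ := hM2 H hH
        refine ⟨v, ⟨hvX, hv0⟩, ?_⟩
        have hH1 := hH; rw [hH₁] at hH1
        exact Submodule.eq_of_le_of_finrank_eq
          ((Submodule.span_singleton_le_iff_mem _ _).mpr hvH)
          (by rw [finrank_span_singleton hv0, hH1.1])
    have hfiber : ∀ H ∈ t, (s.filter (fun v => Submodule.span L {v} = H)).card
        = Fintype.card K ^ (n - d) - 1 := by
      intro H hHt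
      have hH : H ∈ H₁ := by rw [← hts]; exact hHt
      have hH1 := hH; rw [hH₁] at hH1
      haveI : FiniteDimensional K
          (H.restrictScalars K ⊓ X : Submodule K (Fin 2 → L)) :=
        Submodule.finiteDimensional_of_le inf_le_right
      have hcard := ncard_nonzero (H.restrictScalars K ⊓ X)
      rw [hH1.2] at hcard
      rw [← hcard, ← Set.ncard_coe_finset]
      congr 1
      ext v
      simp only [Finset.coe_filter, hs, Set.Finite.mem_toFinset, Set.mem_setOf_eq,
        Submodule.mem_inf, Submodule.restrictScalars_mem]
      constructor
      · rintro ⟨⟨hvX, hv0⟩, rfl⟩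
        exact ⟨⟨Submodule.mem_span_singleton_self v, hvX⟩, hv0⟩
      · rintro ⟨⟨hvH, hvX⟩, hv0⟩
        refine ⟨⟨hvX, hv0⟩, ?_⟩
        exact Submodule.eq_of_le_of_finrank_eq
          ((Submodule.span_singleton_le_iff_mem _ _).mpr hvH)
          (by rw [finrank_span_singleton hv0, hH1.1])
    have htotal : s.card = Fintype.card K ^ n - 1 := by
      have h := ncard_nonzero X
      rw [hfrX] at h
      rw [← h, ← Set.ncard_coe_finset, hs]
      rw [Set.Finite.coe_toFinset]
    have hsum := Finset.card_eq_sum_card_fiberwise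
      (f := fun v => Submodule.span L {v}) (s := s) (t := t)
      (fun v hv => Finset.mem_image_of_mem _ hv)
    rw [Finset.sum_congr rfl hfiber, Finset.sum_const, smul_eq_mul] at hsum
    have h1 : H₁.ncard = t.card := by rw [← hts, Set.ncard_coe_finset]
    rw [h1, ← hsum, htotal]
  exact ⟨part1, part2, part3, part4⟩
end

section
/- If C is a non-degenerate [n,2,d] antipodal two-weight rank metric code over F_{q^m}/F_q, then n − d divides n. -/
section Aux

variable (K : Type*) {L : Type*} [Field K] [Field L] [Algebra K L] {n : ℕ}

/-- The `K`-linear evaluation map `a ↦ ∑ i, a i • c i`. -/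
noncomputable abbrev psiMap (c : Fin n → L) : (Fin n → K) →ₗ[K] L :=
  Fintype.linearCombination K c

lemma psiMap_rank_ker (c : Fin n → L) :
    rankWeight K c + Module.finrank K (LinearMap.ker (psiMap K c)) = n := by
  have h := LinearMap.finrank_range_add_finrank_ker (psiMap K c)
  rw [Fintype.range_linearCombination, Module.finrank_fin_fun] at h
  simpa [rankWeight] using h

/-- The `L`-linear functional on `C` induced by `a : Fin n → K`. -/
noncomputable def phiAux (C : Submodule L (Fin n → L)) (a : Fin n → K) : C →ₗ[L] L where
  toFun c := ∑ i, a i • (c : Fin n → L) i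
  map_add' x y := by simp [smul_add, Finset.sum_add_distrib]
  map_smul' t x := by
    simp only [SetLike.val_smul, Pi.smul_apply, RingHom.id_apply, Finset.smul_sum]
    exact Finset.sum_congr rfl fun i _ => smul_comm (a i) t _

lemma phiAux_apply (C : Submodule L (Fin n → L)) (a : Fin n → K) (c : C) :
    phiAux K C a c = psiMap K (c : Fin n → L) a := by
  simp [phiAux, Fintype.linearCombination_apply]

variable {C : Submodule L (Fin n → L)} [FiniteDimensional L C]

lemma finrank_ker_phiAux (hdim : Module.finrank L C = 2)
    {a : Fin n → K} (hne : phiAux K C a ≠ 0) :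
    Module.finrank L (LinearMap.ker (phiAux K C a)) = 1 := by
  have h := LinearMap.finrank_range_add_finrank_ker (phiAux K C a)
  rw [hdim] at h
  have hrange : LinearMap.range (phiAux K C a) = ⊤ := by
    rcases Ideal.eq_bot_or_top (LinearMap.range (phiAux K C a)) with hb | ht
    · exact absurd (LinearMap.range_eq_bot.mp hb) hne
    · exact ht
  rw [hrange, finrank_top, Module.finrank_self] at h
  omega

lemma ker_phiAux_eq_span (hdim : Module.finrank L C = 2)
    {a : Fin n → K} (hne : phiAux K C a ≠ 0)
    {c : C} (hc : c ≠ 0) (hck : c ∈ LinearMap.ker (phiAux K C a)) :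
    LinearMap.ker (phiAux K C a) = Submodule.span L {c} := by
  refine (Submodule.eq_of_le_of_finrank_le
    ((Submodule.span_singleton_le_iff_mem _ _).mpr hck) ?_).symm
  rw [finrank_ker_phiAux K hdim hne, finrank_span_singleton hc]

end Aux

lemma pow_sub_one_dvd_imp {q e : ℕ} (hq : 2 ≤ q) (he : 0 < e) :
    ∀ n, q ^ e - 1 ∣ q ^ n - 1 → e ∣ n := by
  intro n
  induction n using Nat.strong_induction_on with
  | _ n ih =>
    intro h
    rcases lt_or_ge n e with hne | hne
    · have hqe : q ^ n < q ^ e := Nat.pow_lt_pow_right (by omega) hne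
      have h1 : 1 ≤ q ^ n := Nat.one_le_pow _ _ (by omega)
      have hz : q ^ n - 1 = 0 := by
        by_contra h0
        have := Nat.le_of_dvd (Nat.pos_of_ne_zero h0) h
        omega
      have hn1 : q ^ n = 1 := by omega
      have : n = 0 := by
        by_contra hn0
        exact absurd (pow_eq_one_iff_of_nonneg (Nat.zero_le q) hn0 |>.mp hn1) (by omega)
      simp [this]
    · have h1 : 1 ≤ q ^ (n - e) := Nat.one_le_pow _ _ (by omega)
      have h2 : q ^ e * q ^ (n - e) = q ^ n := by rw [← pow_add]; congr 1; omega
      have h3 : q ^ (n - e) ≤ q ^ n := Nat.pow_le_pow_right (by omega) (by omega)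
      have h4 : 1 ≤ q ^ e := Nat.one_le_pow _ _ (by omega)
      have hmul : (q ^ e - 1) * q ^ (n - e) = q ^ n - q ^ (n - e) := by
        rw [Nat.sub_mul, one_mul, h2]
      have hd2 : q ^ e - 1 ∣ q ^ (n - e) - 1 := by
        have hsub := Nat.dvd_sub h (Dvd.intro (q ^ (n - e)) rfl)
        have heq : q ^ n - 1 - (q ^ e - 1) * q ^ (n - e) = q ^ (n - e) - 1 := by omega
        rwa [heq] at hsub
      have := ih (n - e) (by omega) hd2
      have h5 : e ∣ (n - e) + e := Nat.dvd_add this dvd_rfl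
      rwa [Nat.sub_add_cancel hne] at h5

/-- If `C` is a non-degenerate `[n,2,d]` antipodal two-weight rank metric
code over `F_{q^m}/F_q`, then `n - d` divides `n`. -/
theorem atw_sub_dist_dvd_length
    {K L : Type*} [Field K] [Fintype K] [Field L] [Algebra K L]
    {n d : ℕ}
    (C : Submodule L (Fin n → L)) (hdim : Module.finrank L C = 2)
    (hnondeg : ∀ a : Fin n → K, a ≠ 0 → ∃ c ∈ C, ∑ i, c i * algebraMap K L (a i) ≠ 0)
    (hmin : ∀ c ∈ C, c ≠ 0 → d ≤ rankWeight K c)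
    (hdex : ∃ c ∈ C, c ≠ 0 ∧ rankWeight K c = d)
    (hdn : d < n)
    (htw : ∀ c ∈ C, c ≠ 0 → rankWeight K c = d ∨ rankWeight K c = n)
    (hfull : ∃ c ∈ C, rankWeight K c = n) :
    (n - d) ∣ n := by
  classical
  haveI : FiniteDimensional L C := FiniteDimensional.of_finrank_pos (by rw [hdim]; norm_num)
  set q := Fintype.card K with hqdef
  have hq : 2 ≤ q := Fintype.one_lt_card
  set e := n - d with hedef
  have he : 0 < e := by omega
  -- `phiAux` is nonzero on nonzero `a` by non-degeneracy
  have hphi_ne : ∀ a : Fin n → K, a ≠ 0 → phiAux K C a ≠ 0 := by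
    intro a ha h0
    obtain ⟨c, hcC, hcne⟩ := hnondeg a ha
    apply hcne
    have h1 : phiAux K C a ⟨c, hcC⟩ = 0 := by rw [h0]; rfl
    calc ∑ i, c i * algebraMap K L (a i) = ∑ i, a i • c i := by
          refine Finset.sum_congr rfl fun i _ => ?_
          rw [Algebra.smul_def, mul_comm]
      _ = 0 := h1
  -- each fiber of `a ↦ ker (phiAux K C a)` has cardinality `q ^ e - 1`
  have fiber_card : ∀ a : {x : Fin n → K // x ≠ 0},
      Fintype.card {b : {x : Fin n → K // x ≠ 0} //
        LinearMap.ker (phiAux K C b.1) = LinearMap.ker (phiAux K C a.1)} = q ^ e - 1 := by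
    intro a
    have hne := hphi_ne a.1 a.2
    have hk1 := finrank_ker_phiAux K hdim hne
    have hkbot : LinearMap.ker (phiAux K C a.1) ≠ ⊥ := by
      intro hb; rw [hb] at hk1; simp at hk1
    obtain ⟨c, hck, hc0⟩ := Submodule.exists_mem_ne_zero_of_ne_bot hkbot
    have hspan := ker_phiAux_eq_span K hdim hne hc0 hck
    set T := LinearMap.ker (psiMap K (c : Fin n → L)) with hTdef
    have haT : a.1 ∈ T := by
      rw [hTdef, LinearMap.mem_ker, ← phiAux_apply]
      exact hck
    have hTfin : Module.finrank K T = e := by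
      have hsum := psiMap_rank_ker K (c : Fin n → L)
      rw [← hTdef] at hsum
      have hTne : Module.finrank K T ≠ 0 := by
        intro h0
        rw [Submodule.finrank_eq_zero] at h0
        rw [h0] at haT
        exact a.2 (by simpa using haT)
      have hcC : (c : Fin n → L) ∈ C := c.2
      have hcne' : (c : Fin n → L) ≠ 0 := by
        simpa [Submodule.coe_eq_zero] using hc0
      rcases htw _ hcC hcne' with hrd | hrn
      · omega
      · omega
    have hto : ∀ b : {x : Fin n → K // x ≠ 0},
        LinearMap.ker (phiAux K C b.1) = LinearMap.ker (phiAux K C a.1) → b.1 ∈ T := by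
      intro b hb
      have hc' : c ∈ LinearMap.ker (phiAux K C b.1) := by rw [hb]; exact hck
      rw [LinearMap.mem_ker, phiAux_apply] at hc'
      exact hc'
    have hfrom : ∀ b : Fin n → K, b ∈ T → b ≠ 0 →
        LinearMap.ker (phiAux K C b) = LinearMap.ker (phiAux K C a.1) := by
      intro b hbT hb0
      rw [hspan]
      exact ker_phiAux_eq_span K hdim (hphi_ne b hb0) hc0
        (by rw [LinearMap.mem_ker, phiAux_apply]; exact hbT)
    let E : {b : {x : Fin n → K // x ≠ 0} //
        LinearMap.ker (phiAux K C b.1) = LinearMap.ker (phiAux K C a.1)} ≃ {b : T // b ≠ 0} :=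
      { toFun := fun b => ⟨⟨b.1.1, hto b.1 b.2⟩, by
          intro h
          apply b.1.2
          simpa [Submodule.mk_eq_zero] using h⟩
        invFun := fun b => ⟨⟨b.1.1, fun h => b.2 (by
          apply Subtype.ext; simpa using h)⟩, hfrom b.1.1 b.1.2 (fun h => b.2 (by
          apply Subtype.ext; simpa using h))⟩
        left_inv := fun b => by
          apply Subtype.ext; apply Subtype.ext; rfl
        right_inv := fun b => by
          apply Subtype.ext; apply Subtype.ext; rfl }
    rw [Fintype.card_congr E]
    have hT : Fintype.card T = q ^ e := by
      rw [Module.card_eq_pow_finrank (K := K) (V := T), hTfin]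
    have hcompl : Fintype.card {b : T // ¬ b = 0} = Fintype.card T - Fintype.card {b : T // b = 0} :=
      Fintype.card_subtype_compl _
    have hone : Fintype.card {b : T // b = 0} = 1 := Fintype.card_subtype_eq (0 : T)
    have : Fintype.card {b : T // b ≠ 0} = Fintype.card {b : T // ¬ b = 0} := rfl
    rw [this, hcompl, hone, hT]
  -- counting
  have hcardFun : Fintype.card (Fin n → K) = q ^ n := by
    rw [Module.card_eq_pow_finrank (K := K) (V := Fin n → K), Module.finrank_fin_fun]
  have hcardX : Fintype.card {x : Fin n → K // x ≠ 0} = q ^ n - 1 := by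
    have hcompl : Fintype.card {x : Fin n → K // ¬ x = 0}
        = Fintype.card (Fin n → K) - Fintype.card {x : Fin n → K // x = 0} :=
      Fintype.card_subtype_compl _
    have hone : Fintype.card {x : Fin n → K // x = 0} = 1 := Fintype.card_subtype_eq _
    have hrfl : Fintype.card {x : Fin n → K // x ≠ 0}
        = Fintype.card {x : Fin n → K // ¬ x = 0} := rfl
    rw [hrfl, hcompl, hone, hcardFun]
  set κ : {x : Fin n → K // x ≠ 0} → Submodule L C :=
    fun a => LinearMap.ker (phiAux K C a.1) with hκdef
  have hpart : Fintype.card {x : Fin n → K // x ≠ 0}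
      = Fintype.card (Set.range κ) * (q ^ e - 1) := by
    calc Fintype.card {x : Fin n → K // x ≠ 0}
        = Fintype.card (Σ t : Set.range κ, {b // Set.rangeFactorization κ b = t}) :=
          (Fintype.card_congr (Equiv.sigmaFiberEquiv (Set.rangeFactorization κ))).symm
      _ = ∑ t : Set.range κ, Fintype.card {b // Set.rangeFactorization κ b = t} :=
          Fintype.card_sigma
      _ = ∑ _t : Set.range κ, (q ^ e - 1) := by
          refine Finset.sum_congr rfl fun t _ => ?_
          obtain ⟨a, ha⟩ := t.2
          rw [← fiber_card a]
          apply Fintype.card_congr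
          apply Equiv.subtypeEquivRight
          intro b
          rw [Subtype.ext_iff, Set.rangeFactorization_coe, ← ha]
      _ = Fintype.card (Set.range κ) * (q ^ e - 1) := by
          rw [Finset.sum_const, smul_eq_mul, Fintype.card]
  have hdvd : q ^ e - 1 ∣ q ^ n - 1 := by
    refine ⟨Fintype.card (Set.range κ), ?_⟩
    rw [← hcardX, hpart]
    ring
  exact pow_sub_one_dvd_imp hq he n hdvd
end

section
/- Let C be a non-degenerate [n,2,d] antipodal two-weight rank metric code over F_{q^m}/F_q. Then the number of codewords of rank d satisfies |{c ∈ C : rank(c) = d}| · (q^{n−d} − 1) = (q^m − 1)(q^n − 1), and the number of codewords of rank n equals (q^{2m} − 1) − |{c ∈ C : rank(c) = d}|. -/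
open Finset
open scoped Classical

section Aux

variable {K L : Type*} [Field K] [Field L] [Algebra K L] {n : ℕ}

lemma rankWeight_eq_zero_iff {c : Fin n → L} : rankWeight K c = 0 ↔ c = 0 := by
  constructor
  · intro h
    have hfd : FiniteDimensional K (Submodule.span K (Set.range c)) :=
      FiniteDimensional.span_of_finite K (Set.finite_range c)
    have hb : Submodule.span K (Set.range c) = ⊥ := Submodule.finrank_eq_zero.mp h
    funext i
    have hmem : c i ∈ Submodule.span K (Set.range c) := Submodule.subset_span ⟨i, rfl⟩
    rw [hb] at hmem
    simpa using hmem
  · rintro rfl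
    have hb : Submodule.span K (Set.range (0 : Fin n → L)) = ⊥ := by
      rw [Submodule.span_eq_bot]; rintro x ⟨i, rfl⟩; rfl
    rw [rankWeight, hb, finrank_bot]

lemma rankWeight_smul (u : Lˣ) (c : Fin n → L) :
    rankWeight K ((u : L) • c) = rankWeight K c := by
  let e : L ≃ₗ[K] L := DistribMulAction.toLinearEquiv K L u
  have h1 : (u : L) • c = ⇑e ∘ c := by
    funext i
    simp [e, Units.smul_def]
  rw [rankWeight, rankWeight, h1, Set.range_comp, ← LinearEquiv.coe_coe, ← Submodule.map_span]
  exact LinearEquiv.finrank_map_eq e _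

lemma infinite_rank_set [Infinite L] {C : Submodule L (Fin n → L)} {c₀ : Fin n → L}
    (hc : c₀ ∈ C) (h0 : c₀ ≠ 0) {w : ℕ} (hw : rankWeight K c₀ = w) :
    {c : Fin n → L | c ∈ C ∧ rankWeight K c = w}.Infinite := by
  have h1 : ({0}ᶜ : Set L).Infinite := (Set.finite_singleton 0).infinite_compl
  have hinj : Set.InjOn (fun lam : L => lam • c₀) {0}ᶜ :=
    (smul_left_injective L h0).injOn
  refine Set.Infinite.mono ?_ (Set.Infinite.image hinj h1)
  rintro _ ⟨lam, hlam, rfl⟩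
  have hlam' : lam ≠ 0 := hlam
  refine ⟨C.smul_mem lam hc, ?_⟩
  have hgoal : rankWeight K (((Units.mk0 lam hlam' : Lˣ) : L) • c₀) = w := by
    rw [rankWeight_smul, hw]
  exact hgoal

variable [Fintype K]

lemma countA [Fintype L] (c : Fin n → L) :
    (univ.filter fun a : Fin n → K => ∑ i, c i * algebraMap K L (a i) = 0).card
      = Fintype.card K ^ (n - rankWeight K c) := by
  classical
  set φ : (Fin n → K) →ₗ[K] L := Fintype.linearCombination K c with hφ
  have happ : ∀ a : Fin n → K, φ a = ∑ i, c i * algebraMap K L (a i) := by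
    intro a
    rw [hφ, Fintype.linearCombination_apply]
    exact Finset.sum_congr rfl fun i _ => by rw [Algebra.smul_def, mul_comm]
  have hrange : LinearMap.range φ = Submodule.span K (Set.range c) :=
    Fintype.range_linearCombination K c
  have hrn := LinearMap.finrank_range_add_finrank_ker φ
  rw [hrange] at hrn
  have hn : Module.finrank K (Fin n → K) = n := by simp
  rw [hn] at hrn
  have hker : Module.finrank K (LinearMap.ker φ) = n - rankWeight K c := by
    rw [rankWeight]; omega
  have hset : (univ.filter fun a : Fin n → K => ∑ i, c i * algebraMap K L (a i) = 0)
      = univ.filter fun a => a ∈ LinearMap.ker φ := by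
    ext a; simp [LinearMap.mem_ker, happ]
  rw [hset]
  have h1 : (univ.filter fun a => a ∈ LinearMap.ker φ).card
      = Fintype.card (LinearMap.ker φ) := (Fintype.card_subtype _).symm
  rw [h1, Module.card_eq_pow_finrank (K := K), hker]

lemma countC [Fintype L] {C : Submodule L (Fin n → L)}
    (hdim : Module.finrank L C = 2) (a : Fin n → K)
    (hex : ∃ c ∈ C, ∑ i, c i * algebraMap K L (a i) ≠ 0) :
    (univ.filter fun c : Fin n → L =>
        c ∈ C ∧ ∑ i, c i * algebraMap K L (a i) = 0).card = Fintype.card L := by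
  set B : (Fin n → L) →ₗ[L] L :=
    Fintype.linearCombination L (fun i => algebraMap K L (a i)) with hB
  have happ : ∀ c : Fin n → L, B c = ∑ i, c i * algebraMap K L (a i) := by
    intro c
    rw [hB, Fintype.linearCombination_apply]
    exact Finset.sum_congr rfl fun i _ => by rw [smul_eq_mul]
  set ψ : C →ₗ[L] L := B.domRestrict C with hψ
  have hrn := LinearMap.finrank_range_add_finrank_ker ψ
  rw [hdim] at hrn
  have hr1 : Module.finrank L (LinearMap.range ψ) = 1 := by
    have hle : Module.finrank L (LinearMap.range ψ) ≤ 1 := by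
      have := Submodule.finrank_le (LinearMap.range ψ)
      rwa [Module.finrank_self] at this
    have hne : Module.finrank L (LinearMap.range ψ) ≠ 0 := by
      rw [Ne, Submodule.finrank_eq_zero, LinearMap.range_eq_bot]
      intro hb
      obtain ⟨c, hcC, hc0⟩ := hex
      apply hc0
      have h5 : ψ ⟨c, hcC⟩ = 0 := by rw [hb]; rfl
      rwa [hψ, LinearMap.domRestrict_apply, happ] at h5
    omega
  have hker : Module.finrank L (LinearMap.ker ψ) = 1 := by omega
  have hmem : ∀ (c : Fin n → L) (hc : c ∈ C),
      ((⟨c, hc⟩ : C) ∈ LinearMap.ker ψ ↔ ∑ i, c i * algebraMap K L (a i) = 0) := by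
    intro c hc
    rw [LinearMap.mem_ker, hψ, LinearMap.domRestrict_apply, happ]
  have e : {c : Fin n → L // c ∈ C ∧ ∑ i, c i * algebraMap K L (a i) = 0}
      ≃ LinearMap.ker ψ :=
    { toFun := fun x => ⟨⟨x.1, x.2.1⟩, (hmem x.1 x.2.1).mpr x.2.2⟩
      invFun := fun y => ⟨y.1.1, y.1.2, (hmem y.1.1 y.1.2).mp y.2⟩
      left_inv := fun x => rfl
      right_inv := fun y => rfl }
  rw [show (univ.filter fun c : Fin n → L =>
        c ∈ C ∧ ∑ i, c i * algebraMap K L (a i) = 0).card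
      = Fintype.card {c : Fin n → L // c ∈ C ∧ ∑ i, c i * algebraMap K L (a i) = 0}
    from (Fintype.card_subtype _).symm]
  rw [Fintype.card_congr e, Module.card_eq_pow_finrank (K := L), hker, pow_one]

end Aux

/-- Weight distribution of a non-degenerate `[n,2,d]` antipodal two-weight
rank metric code over `F_{q^m}/F_q`: the number of codewords of rank `d` satisfies
`#{rank d} · (q^{n-d} - 1) = (q^m - 1)(q^n - 1)`, and the number of codewords of rank `n`
equals `(q^{2m} - 1) - #{rank d}`. -/
theorem atw_weight_distribution
    {K L : Type*} [Field K] [Fintype K] [Field L] [Algebra K L]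
    {n d m : ℕ} (hm : Module.finrank K L = m)
    (C : Submodule L (Fin n → L)) (hdim : Module.finrank L C = 2)
    (hnondeg : ∀ a : Fin n → K, a ≠ 0 → ∃ c ∈ C, ∑ i, c i * algebraMap K L (a i) ≠ 0)
    (hmin : ∀ c ∈ C, c ≠ 0 → d ≤ rankWeight K c)
    (hdex : ∃ c ∈ C, c ≠ 0 ∧ rankWeight K c = d)
    (hdn : d < n)
    (htw : ∀ c ∈ C, c ≠ 0 → rankWeight K c = d ∨ rankWeight K c = n)
    (hfull : ∃ c ∈ C, rankWeight K c = n) :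
    {c : Fin n → L | c ∈ C ∧ rankWeight K c = d}.ncard *
        (Fintype.card K ^ (n - d) - 1) =
      (Fintype.card K ^ m - 1) * (Fintype.card K ^ n - 1) ∧
    {c : Fin n → L | c ∈ C ∧ rankWeight K c = n}.ncard =
      (Fintype.card K ^ (2 * m) - 1) -
        {c : Fin n → L | c ∈ C ∧ rankWeight K c = d}.ncard := by
  classical
  obtain ⟨c₀, hc₀C, hc₀0, hc₀r⟩ := hdex
  have hd0 : d ≠ 0 := by
    intro h
    exact hc₀0 (rankWeight_eq_zero_iff.mp (h ▸ hc₀r))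
  have hn0 : n ≠ 0 := by omega
  by_cases hFD : FiniteDimensional K L
  · -- finite case
    haveI : Finite L := Module.finite_iff_finite.mp hFD
    haveI : Fintype L := Fintype.ofFinite L
    set q := Fintype.card K with hq
    have hcardL : Fintype.card L = q ^ m := by
      rw [Module.card_eq_pow_finrank (K := K) (V := L), hm]
    set Dfin : Finset (Fin n → L) :=
      univ.filter (fun c => c ∈ C ∧ rankWeight K c = d) with hDfin
    set Nfin : Finset (Fin n → L) :=
      univ.filter (fun c => c ∈ C ∧ rankWeight K c = n) with hNfin
    set Cfin : Finset (Fin n → L) := univ.filter (fun c => c ∈ C ∧ c ≠ 0) with hCfin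
    set Afin : Finset (Fin n → K) := univ.filter (fun a => a ≠ 0) with hAfin
    have hDsub : ∀ c ∈ Dfin, c ∈ C ∧ c ≠ 0 ∧ rankWeight K c = d := by
      intro c hcm
      rw [hDfin, mem_filter] at hcm
      refine ⟨hcm.2.1, fun h => ?_, hcm.2.2⟩
      rw [h, rankWeight_eq_zero_iff.mpr rfl] at hcm
      exact hd0 hcm.2.2.symm
    have hNsub : ∀ c ∈ Nfin, c ∈ C ∧ c ≠ 0 ∧ rankWeight K c = n := by
      intro c hcm
      rw [hNfin, mem_filter] at hcm
      refine ⟨hcm.2.1, fun h => ?_, hcm.2.2⟩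
      rw [h, rankWeight_eq_zero_iff.mpr rfl] at hcm
      exact hn0 hcm.2.2.symm
    have hunion : Dfin ∪ Nfin = Cfin := by
      ext c
      simp only [hDfin, hNfin, hCfin, mem_union, mem_filter, mem_univ, true_and]
      constructor
      · rintro (h | h)
        · have := hDsub c (by rw [hDfin, mem_filter]; exact ⟨mem_univ _, h⟩)
          exact ⟨this.1, this.2.1⟩
        · have := hNsub c (by rw [hNfin, mem_filter]; exact ⟨mem_univ _, h⟩)
          exact ⟨this.1, this.2.1⟩
      · rintro ⟨h1, h2⟩
        rcases htw c h1 h2 with h | h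
        · exact Or.inl ⟨h1, h⟩
        · exact Or.inr ⟨h1, h⟩
    have hdisj : Disjoint Dfin Nfin := by
      rw [Finset.disjoint_left]
      intro c hcd hcn
      rw [hDfin, mem_filter] at hcd
      rw [hNfin, mem_filter] at hcn
      omega
    -- the per-codeword count
    have hgc : ∀ c : Fin n → L,
        (Afin.filter fun a => ∑ i, c i * algebraMap K L (a i) = 0).card
          = q ^ (n - rankWeight K c) - 1 := by
      intro c
      rw [hAfin, filter_filter]
      have hrw : (univ.filter fun a : Fin n → K =>
          a ≠ 0 ∧ ∑ i, c i * algebraMap K L (a i) = 0)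
          = (univ.filter fun a : Fin n → K =>
              ∑ i, c i * algebraMap K L (a i) = 0).erase 0 := by
        ext a
        simp [mem_erase, and_comm]
      rw [hrw, card_erase_of_mem (by simp), countA]
    -- the per-functional count
    have hha : ∀ a ∈ Afin,
        (Cfin.filter fun c => ∑ i, c i * algebraMap K L (a i) = 0).card
          = q ^ m - 1 := by
      intro a ham
      rw [hAfin, mem_filter] at ham
      rw [hCfin, filter_filter]
      have hrw : (univ.filter fun c : Fin n → L =>
          (c ∈ C ∧ c ≠ 0) ∧ ∑ i, c i * algebraMap K L (a i) = 0)
          = (univ.filter fun c : Fin n → L =>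
              c ∈ C ∧ ∑ i, c i * algebraMap K L (a i) = 0).erase 0 := by
        ext c
        simp only [mem_filter, mem_univ, true_and, mem_erase]
        constructor
        · rintro ⟨⟨h1, h2⟩, h3⟩; exact ⟨h2, h1, h3⟩
        · rintro ⟨h2, h1, h3⟩; exact ⟨⟨h1, h2⟩, h3⟩
      rw [hrw, card_erase_of_mem (by simp [C.zero_mem]),
        countC hdim a (hnondeg a ham.2), hcardL]
    -- double counting
    have hkey : ∑ c ∈ Cfin, (Afin.filter fun a =>
          ∑ i, c i * algebraMap K L (a i) = 0).card
        = ∑ a ∈ Afin, (Cfin.filter fun c =>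
          ∑ i, c i * algebraMap K L (a i) = 0).card := by
      simp_rw [Finset.card_filter]
      exact Finset.sum_comm
    have hAcard : Afin.card = q ^ n - 1 := by
      rw [hAfin, filter_ne', card_erase_of_mem (mem_univ _), card_univ,
        Fintype.card_fun, Fintype.card_fin]
    have hrhs : ∑ a ∈ Afin, (Cfin.filter fun c =>
          ∑ i, c i * algebraMap K L (a i) = 0).card = (q ^ n - 1) * (q ^ m - 1) := by
      rw [Finset.sum_congr rfl hha, Finset.sum_const, smul_eq_mul, hAcard]
    have hlhs : ∑ c ∈ Cfin, (Afin.filter fun a =>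
          ∑ i, c i * algebraMap K L (a i) = 0).card
        = Dfin.card * (q ^ (n - d) - 1) := by
      rw [← hunion, Finset.sum_union hdisj]
      have h1 : ∑ c ∈ Dfin, (Afin.filter fun a =>
            ∑ i, c i * algebraMap K L (a i) = 0).card = Dfin.card * (q ^ (n - d) - 1) := by
        rw [Finset.sum_congr rfl fun c hcm => by rw [hgc c, (hDsub c hcm).2.2],
          Finset.sum_const, smul_eq_mul]
      have h2 : ∑ c ∈ Nfin, (Afin.filter fun a =>
            ∑ i, c i * algebraMap K L (a i) = 0).card = 0 := by
        rw [Finset.sum_congr rfl fun c hcm => by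
          rw [hgc c, (hNsub c hcm).2.2, Nat.sub_self, pow_zero]]
        simp
      rw [h1, h2, add_zero]
    have hmain : Dfin.card * (q ^ (n - d) - 1) = (q ^ m - 1) * (q ^ n - 1) := by
      rw [← hlhs, hkey, hrhs, Nat.mul_comm]
    -- identification of sets with finsets
    have hDset : {c : Fin n → L | c ∈ C ∧ rankWeight K c = d} = ↑Dfin := by
      ext c; simp [hDfin]
    have hNset : {c : Fin n → L | c ∈ C ∧ rankWeight K c = n} = ↑Nfin := by
      ext c; simp [hNfin]
    -- cardinality of the code
    have hCcard : Cfin.card = q ^ (2 * m) - 1 := by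
      have h0 : (univ.filter fun c : Fin n → L => c ∈ C).card = q ^ (2 * m) := by
        rw [← Fintype.card_subtype, Module.card_eq_pow_finrank (K := L) (V := C), hdim, hcardL,
          ← pow_mul, mul_comm]
      have hrw : Cfin = (univ.filter fun c : Fin n → L => c ∈ C).erase 0 := by
        ext c
        simp [hCfin, and_comm]
      rw [hrw, card_erase_of_mem (by simp [C.zero_mem]), h0]
    have hsum : Dfin.card + Nfin.card = Cfin.card := by
      rw [← hunion, card_union_of_disjoint hdisj]
    constructor
    · rw [hDset, Set.ncard_coe_finset]
      exact hmain
    · rw [hDset, hNset, Set.ncard_coe_finset, Set.ncard_coe_finset,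
        ← hCcard, ← hsum, Nat.add_sub_cancel_left]
  · -- infinite-dimensional case
    have hm0 : m = 0 := by
      rw [← hm, Module.finrank_of_infinite_dimensional hFD]
    haveI : Infinite L := by
      by_contra h
      rw [not_infinite_iff_finite] at h
      exact hFD (Module.finite_iff_finite.mpr h)
    obtain ⟨c₁, hc₁C, hc₁r⟩ := hfull
    have hc₁0 : c₁ ≠ 0 := by
      rintro rfl
      rw [rankWeight_eq_zero_iff.mpr rfl] at hc₁r
      omega
    have hD := (infinite_rank_set hc₀C hc₀0 hc₀r).ncard
    have hN := (infinite_rank_set hc₁C hc₁0 hc₁r).ncard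
    rw [hD, hN]
    subst hm0
    simp
end

section
/- Let C be a non-degenerate [n,2,d] antipodal two-weight rank metric code over F_{q^m}/F_q with associated q-system X ⊆ F_{q^m}², and write n = l(n−d). Then there exist l pairwise distinct 1-dimensional F_{q^m}-subspaces H₁,…,H_l of F_{q^m}² such that each X ∩ Hᵢ has F_q-dimension n − d and X is the internal direct sum X = (X ∩ H₁) ⊕ ⋯ ⊕ (X ∩ H_l). -/
open Module Submodule

lemma aux_ncard_finset_biUnion_le {α ι : Type*} [DecidableEq ι] (s : Finset ι)
    (f : ι → Set α) (B : ℕ) (hf : ∀ i ∈ s, (f i).ncard ≤ B) :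
    (⋃ i ∈ s, f i).ncard ≤ s.card * B := by
  induction s using Finset.induction_on with
  | empty => simp
  | @insert a s ha ih =>
    rw [Finset.set_biUnion_insert, Finset.card_insert_of_notMem ha]
    calc (f a ∪ ⋃ i ∈ s, f i).ncard ≤ (f a).ncard + (⋃ i ∈ s, f i).ncard :=
          Set.ncard_union_le _ _
      _ ≤ B + s.card * B :=
          add_le_add (hf a (Finset.mem_insert_self a s))
            (ih fun i hi => hf i (Finset.mem_insert_of_mem hi))
      _ = (s.card + 1) * B := by ring

lemma aux_ncard_biUnion_le {α ι : Type*} {s : Set ι} (hs : s.Finite) (f : ι → Set α) (B : ℕ)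
    (hf : ∀ i ∈ s, (f i).ncard ≤ B) : (⋃ i ∈ s, f i).ncard ≤ s.ncard * B := by
  classical
  have h1 : (⋃ i ∈ s, f i) = ⋃ i ∈ hs.toFinset, f i := by
    ext z; simp
  rw [h1, Set.ncard_eq_toFinset_card s hs]
  exact aux_ncard_finset_biUnion_le hs.toFinset f B (fun i hi => hf i (hs.mem_toFinset.mp hi))

lemma aux_finrank_finsetSup_le {K V : Type*} [Field K] [AddCommGroup V] [Module K V]
    {ι : Type*} [DecidableEq ι] (f : ι → Submodule K V)
    [∀ i, FiniteDimensional K (f i)] (s : Finset ι) :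
    finrank K ↥(s.sup f) ≤ ∑ i ∈ s, finrank K ↥(f i) := by
  induction s using Finset.induction_on with
  | empty => simp
  | @insert a s ha ih =>
    rw [Finset.sup_insert, Finset.sum_insert ha]
    have h := Submodule.finrank_sup_add_finrank_inf_eq (f a) (s.sup f)
    omega

lemma aux_iSupIndep_of_finrank {K V : Type*} [Field K] [AddCommGroup V] [Module K V]
    {l : ℕ} (f : Fin l → Submodule K V) [∀ i, FiniteDimensional K (f i)]
    (h : finrank K ↥(⨆ i, f i) = ∑ i, finrank K ↥(f i)) : iSupIndep f := by
  classical
  rw [iSupIndep_def]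
  intro i
  rw [disjoint_iff]
  have hb : (⨆ (j) (_ : j ≠ i), f j) = (Finset.univ.erase i).sup f := by
    rw [Finset.sup_eq_iSup]
    apply iSup_congr
    intro j
    exact iSup_congr_Prop (by simp) (fun _ => rfl)
  have hid := Submodule.finrank_sup_add_finrank_inf_eq (f i) ((Finset.univ.erase i).sup f)
  have hsup : f i ⊔ (Finset.univ.erase i).sup f = ⨆ j, f j := by
    rw [← Finset.sup_insert, Finset.insert_erase (Finset.mem_univ i), Finset.sup_univ_eq_iSup]
  have hle := aux_finrank_finsetSup_le f (Finset.univ.erase i)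
  have hsum : finrank K ↥(f i) + ∑ j ∈ Finset.univ.erase i, finrank K ↥(f j)
      = ∑ j, finrank K ↥(f j) :=
    Finset.add_sum_erase _ (fun j => finrank K ↥(f j)) (Finset.mem_univ i)
  rw [hsup] at hid
  have h0 : finrank K ↥(f i ⊓ (Finset.univ.erase i).sup f) = 0 := by omega
  haveI : FiniteDimensional K ↥(f i ⊓ (Finset.univ.erase i).sup f) :=
    Submodule.finiteDimensional_of_le inf_le_left
  rw [hb]
  exact Submodule.finrank_eq_zero.mp h0

set_option maxHeartbeats 1600000 in
/-- If `C` is a non-degenerate `[n,2,d]` antipodal two-weight rank metric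
code with `q`-system `X ⊆ F_{q^m}²` and `n = l(n-d)`, then there are `l` pairwise distinct
`1`-dimensional `F_{q^m}`-subspaces `H₁,…,H_l` of `F_{q^m}²` with each `X ∩ Hᵢ` of
`F_q`-dimension `n - d` and `X = (X ∩ H₁) ⊕ ⋯ ⊕ (X ∩ H_l)` (internal direct sum). -/
theorem atw_qsystem_decomposition
    {K L : Type*} [Field K] [Fintype K] [Field L] [Algebra K L]
    {n d l : ℕ} (hl : n = l * (n - d))
    (C : Submodule L (Fin n → L)) (hdim : Module.finrank L C = 2)
    (G : Matrix (Fin 2) (Fin n) L)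
    (hG : C = Submodule.span L (Set.range fun i => G i))
    (hnondeg : ∀ a : Fin n → K, a ≠ 0 → ∃ c ∈ C, ∑ i, c i * algebraMap K L (a i) ≠ 0)
    (hmin : ∀ c ∈ C, c ≠ 0 → d ≤ rankWeight K c)
    (hdex : ∃ c ∈ C, c ≠ 0 ∧ rankWeight K c = d)
    (hdn : d < n)
    (htw : ∀ c ∈ C, c ≠ 0 → rankWeight K c = d ∨ rankWeight K c = n)
    (hfull : ∃ c ∈ C, rankWeight K c = n)
    (X : Submodule K (Fin 2 → L))
    (hX : X = Submodule.span K (Set.range fun j => fun i => G i j)) :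
    ∃ H : Fin l → Submodule L (Fin 2 → L),
      Function.Injective H ∧
      (∀ i, Module.finrank L ↥(H i) = 1) ∧
      (∀ i, Module.finrank K ↥(X ⊓ (H i).restrictScalars K) = n - d) ∧
      (⨆ i, X ⊓ (H i).restrictScalars K) = X ∧
      iSupIndep (fun i => X ⊓ (H i).restrictScalars K) := by
  classical
  set e := n - d with he_def
  have he1 : 1 ≤ e := by omega
  have hl1 : 1 ≤ l := by
    rcases Nat.eq_zero_or_pos l with h | h
    · rw [h, zero_mul] at hl; omega
    · exact h
  -- columns of G
  set x : Fin n → (Fin 2 → L) := fun j i => G i j with hx_def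
  have hXspan : X = Submodule.span K (Set.range x) := hX
  -- dot product linear maps
  set dp : (Fin 2 → L) → ((Fin 2 → L) →ₗ[L] L) :=
    fun v => ∑ i, v i • LinearMap.proj i with hdp_def
  have hdp : ∀ v w : Fin 2 → L, dp v w = ∑ i, v i * w i := by
    intro v w
    simp [hdp_def, LinearMap.sum_apply, LinearMap.smul_apply, LinearMap.proj_apply,
      smul_eq_mul]
  -- codewords
  set cw : (Fin 2 → L) → (Fin n → L) := fun v j => dp v (x j) with hcw_def
  have hkey : ∀ v : Fin 2 → L, (∑ i, v i • G i) = cw v := by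
    intro v
    funext j
    simp [hcw_def, hdp, Finset.sum_apply, hx_def]
  have hmemC : ∀ c, c ∈ C ↔ ∃ v, cw v = c := by
    intro c
    rw [hG, mem_span_range_iff_exists_fun]
    constructor
    · rintro ⟨v, hv⟩; exact ⟨v, by rw [← hkey]; exact hv⟩
    · rintro ⟨v, hv⟩; exact ⟨v, by rw [hkey]; exact hv⟩
  have hXfd : FiniteDimensional K ↥X := by
    rw [hXspan]; exact FiniteDimensional.span_of_finite K (Set.finite_range x)
  haveI := hXfd
  -- linear independence of the columns
  have hli : LinearIndependent K x := by
    rw [Fintype.linearIndependent_iff]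
    intro a ha
    by_contra hcon
    have hane : a ≠ 0 := by
      intro h0
      exact hcon fun i => by rw [h0]; rfl
    obtain ⟨c, hcC, hcne⟩ := hnondeg a hane
    obtain ⟨v, hv⟩ := (hmemC c).mp hcC
    apply hcne
    have hcalc : ∑ i, c i * algebraMap K L (a i) = dp v (∑ j, a j • x j) := by
      rw [map_sum]
      apply Finset.sum_congr rfl
      intro j _
      rw [← hv]
      rw [LinearMap.map_smul_of_tower, Algebra.smul_def, mul_comm]
    rw [hcalc, ha, map_zero]
  have hXrank : finrank K ↥X = n := by
    rw [hXspan, finrank_span_eq_card hli, Fintype.card_fin]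
  -- the rank formula
  have hrank : ∀ v : Fin 2 → L,
      rankWeight K (cw v) + finrank K ↥(X ⊓ (LinearMap.ker (dp v)).restrictScalars K) = n := by
    intro v
    set f := (dp v).restrictScalars K with hf_def
    have h1 : Submodule.map f X = Submodule.span K (Set.range (cw v)) := by
      rw [hXspan, Submodule.map_span, ← Set.range_comp]
      rfl
    have h2 := LinearMap.finrank_range_add_finrank_ker (f.domRestrict X)
    rw [LinearMap.range_domRestrict, LinearMap.ker_domRestrict] at h2
    have h3 : (LinearMap.ker f).comap X.subtype
        = ((X ⊓ (LinearMap.ker (dp v)).restrictScalars K).comap X.subtype) := by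
      ext z
      simp only [Submodule.mem_comap, LinearMap.mem_ker, Submodule.mem_inf,
        Submodule.restrictScalars_mem]
      exact ⟨fun h => ⟨z.2, h⟩, fun h => h.2⟩
    have h4 : finrank K ↥((X ⊓ (LinearMap.ker (dp v)).restrictScalars K).comap X.subtype)
        = finrank K ↥(X ⊓ (LinearMap.ker (dp v)).restrictScalars K) :=
      (Submodule.comapSubtypeEquivOfLe inf_le_left).finrank_eq
    rw [h3, h4] at h2
    unfold rankWeight
    rw [← h1]
    omega
  -- X is not contained in any line
  have hnotline : ∀ y : Fin 2 → L, ¬ X ≤ (Submodule.span L {y}).restrictScalars K := by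
    intro y hsub
    obtain ⟨c₀, hc₀C, hc₀ne, hc₀d⟩ := hdex
    obtain ⟨w, hw⟩ := (hmemC c₀).mp hc₀C
    have hj : ∃ j, dp w (x j) ≠ 0 := by
      by_contra hc
      push_neg at hc
      exact hc₀ne (by rw [← hw]; funext j; simpa using hc j)
    obtain ⟨j, hj⟩ := hj
    have hxjX : x j ∈ X := by
      rw [hXspan]; exact Submodule.subset_span (Set.mem_range_self j)
    have hxjy : x j ∈ Submodule.span L {y} := hsub hxjX
    obtain ⟨μ, hμ⟩ := Submodule.mem_span_singleton.mp hxjy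
    have hdwy : dp w y ≠ 0 := by
      intro h0
      apply hj
      rw [← hμ, LinearMap.map_smul, h0, smul_zero]
    have hinf : X ⊓ (LinearMap.ker (dp w)).restrictScalars K = ⊥ := by
      rw [eq_bot_iff]
      intro z hz
      obtain ⟨hzX, hzk⟩ := hz
      have hzy : z ∈ Submodule.span L {y} := hsub hzX
      obtain ⟨lam, hlam⟩ := Submodule.mem_span_singleton.mp hzy
      have : dp w z = lam * dp w y := by rw [← hlam, LinearMap.map_smul, smul_eq_mul]
      have hzk' : dp w z = 0 := by simpa using hzk
      have hlam0 : lam = 0 := by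
        by_contra hlne
        apply hdwy
        have h0 : lam * dp w y = 0 := by rw [← this]; exact hzk'
        rcases mul_eq_zero.mp h0 with h | h
        · exact absurd h hlne
        · exact h
      rw [Submodule.mem_bot]
      rw [← hlam, hlam0, zero_smul]
    have hr := hrank w
    rw [hinf, finrank_bot, hw, hc₀d] at hr
    omega
  -- the key "piece" dimension lemma
  have hpiece : ∀ y : Fin 2 → L, y ∈ X → y ≠ 0 →
      finrank K ↥(X ⊓ (Submodule.span L {y}).restrictScalars K) = e := by
    intro y hyX hy0
    set v : Fin 2 → L := ![y 1, -y 0] with hv_def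
    have hdvy : dp v y = 0 := by
      rw [hdp, Fin.sum_univ_two]
      show y 1 * y 0 + (-y 0) * y 1 = 0
      ring
    have hvne : ∃ i, v i ≠ 0 := by
      by_contra hc
      push_neg at hc
      have h0 := hc 0
      have h1 := hc 1
      simp [hv_def] at h0 h1
      apply hy0
      funext i
      fin_cases i <;> simp [h0, h1]
    have hsurj : LinearMap.range (dp v) = ⊤ := by
      rw [LinearMap.range_eq_top]
      intro z
      obtain ⟨i, hi⟩ := hvne
      refine ⟨Pi.single i ((v i)⁻¹ * z), ?_⟩
      rw [hdp, Finset.sum_eq_single i]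
      · rw [Pi.single_eq_same]; field_simp
      · intro k _ hk; rw [Pi.single_eq_of_ne hk, mul_zero]
      · intro h; exact absurd (Finset.mem_univ i) h
    have hker1 : finrank L ↥(LinearMap.ker (dp v)) = 1 := by
      have h2 := LinearMap.finrank_range_add_finrank_ker (dp v)
      rw [hsurj, finrank_top, Module.finrank_self, Module.finrank_fin_fun] at h2
      omega
    have hsp_le : Submodule.span L {y} ≤ LinearMap.ker (dp v) := by
      rw [Submodule.span_le, Set.singleton_subset_iff]
      exact hdvy
    have hsp1 : finrank L ↥(Submodule.span L ({y} : Set (Fin 2 → L))) = 1 :=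
      finrank_span_singleton hy0
    have hker_eq : Submodule.span L ({y} : Set (Fin 2 → L)) = LinearMap.ker (dp v) :=
      Submodule.eq_of_le_of_finrank_le hsp_le (by rw [hker1, hsp1])
    have hcwv : cw v ≠ 0 := by
      intro h0
      apply hnotline y
      rw [hXspan, Submodule.span_le]
      rintro _ ⟨j, rfl⟩
      show x j ∈ Submodule.span L {y}
      rw [hker_eq, LinearMap.mem_ker]
      exact congrFun h0 j
    have hCmem : cw v ∈ C := (hmemC _).mpr ⟨v, rfl⟩
    have hne_bot : X ⊓ (Submodule.span L {y}).restrictScalars K ≠ ⊥ := by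
      intro hb
      have hy : y ∈ X ⊓ (Submodule.span L {y}).restrictScalars K :=
        ⟨hyX, Submodule.mem_span_singleton_self y⟩
      rw [hb, Submodule.mem_bot] at hy
      exact hy0 hy
    have hr := hrank v
    rw [← hker_eq] at hr
    rcases htw _ hCmem hcwv with hd' | hn'
    · omega
    · exfalso
      have h0 : finrank K ↥(X ⊓ (Submodule.span L ({y} : Set (Fin 2 → L))).restrictScalars K)
          = 0 := by omega
      haveI : FiniteDimensional K
          ↥(X ⊓ (Submodule.span L ({y} : Set (Fin 2 → L))).restrictScalars K) :=
        Submodule.finiteDimensional_of_le inf_le_left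
      exact hne_bot (Submodule.finrank_eq_zero.mp h0)
  -- cardinality helper
  have hq : 2 ≤ Fintype.card K := Fintype.one_lt_card
  have hcard : ∀ W : Submodule K (Fin 2 → L), W ≤ X →
      (W : Set (Fin 2 → L)).ncard = Fintype.card K ^ finrank K ↥W
        ∧ (W : Set (Fin 2 → L)).Finite := by
    intro W hW
    haveI : FiniteDimensional K ↥W := Submodule.finiteDimensional_of_le hW
    haveI : Finite ↥W := Module.finite_of_finite K
    haveI : Fintype ↥W := Fintype.ofFinite _
    have h1 : Nat.card ↥W = Fintype.card K ^ finrank K ↥W := by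
      rw [Nat.card_eq_fintype_card]; exact card_eq_pow_finrank
    constructor
    · rw [← Nat.card_coe_set_eq]
      exact h1
    · exact Set.toFinite _
  -- the greedy construction
  have main : ∀ j : ℕ, j ≤ l → ∃ H : Fin j → Submodule L (Fin 2 → L),
      Function.Injective H ∧ (∀ i, finrank L ↥(H i) = 1) ∧
      (∀ i, finrank K ↥(X ⊓ (H i).restrictScalars K) = e) ∧
      finrank K ↥(⨆ i, X ⊓ (H i).restrictScalars K) = j * e := by
    intro j
    induction j with
    | zero =>
      intro _
      refine ⟨Fin.elim0, fun i => i.elim0, fun i => i.elim0, fun i => i.elim0, ?_⟩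
      rw [iSup_of_empty]
      simp
    | succ j ih =>
      intro hj
      obtain ⟨H, Hinj, H1, He, Hsup⟩ := ih (by omega)
      set S : Submodule K (Fin 2 → L) := ⨆ i, X ⊓ (H i).restrictScalars K with hS_def
      have hSle : S ≤ X := iSup_le fun i => inf_le_left
      -- find a good vector y
      have hy : ∃ y ∈ X, y ≠ 0 ∧
          (X ⊓ (Submodule.span L {y}).restrictScalars K) ⊓ S = ⊥ := by
        by_contra hcon
        push_neg at hcon
        have hsub : (X : Set (Fin 2 → L)) ⊆ {0} ∪ ⋃ s ∈ (S : Set (Fin 2 → L)) \ {0},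
            ((X ⊓ (Submodule.span L {s}).restrictScalars K :
              Submodule K (Fin 2 → L)) : Set (Fin 2 → L)) := by
          intro y hyX
          rcases eq_or_ne y 0 with rfl | hy0
          · exact Or.inl rfl
          · right
            have hne := hcon y hyX hy0
            obtain ⟨s, hsmem, hs0⟩ := (Submodule.ne_bot_iff _).mp hne
            obtain ⟨⟨hsX, hsy⟩, hsS⟩ := hsmem
            have hsy' : s ∈ Submodule.span L ({y} : Set (Fin 2 → L)) := hsy
            obtain ⟨μ, hμ⟩ := Submodule.mem_span_singleton.mp hsy'
            have hμ0 : IsUnit μ := by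
              rw [isUnit_iff_ne_zero]
              rintro rfl
              rw [zero_smul] at hμ
              exact hs0 hμ.symm
            have hspan : Submodule.span L ({s} : Set (Fin 2 → L))
                = Submodule.span L ({y} : Set (Fin 2 → L)) := by
              rw [← hμ]
              exact Submodule.span_singleton_smul_eq hμ0 y
            refine Set.mem_biUnion ⟨hsS, by simpa using hs0⟩ ?_
            exact ⟨hyX, show y ∈ Submodule.span L ({s} : Set (Fin 2 → L)) by
              rw [hspan]; exact Submodule.mem_span_singleton_self y⟩
        -- cardinalities
        obtain ⟨hXcard, hXfin⟩ := hcard X le_rfl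
        rw [hXrank] at hXcard
        obtain ⟨hScard, hSfin⟩ := hcard S hSle
        rw [Hsup] at hScard
        have hS0fin : ((S : Set (Fin 2 → L)) \ {0}).Finite := hSfin.diff
        have h0S : (0 : Fin 2 → L) ∈ (S : Set (Fin 2 → L)) := S.zero_mem
        have hS0card : ((S : Set (Fin 2 → L)) \ {0}).ncard
            = Fintype.card K ^ (j * e) - 1 := by
          rw [Set.ncard_diff_singleton_of_mem h0S, hScard]
        have hBpieces : ∀ s' ∈ (S : Set (Fin 2 → L)) \ {0},
            (((X ⊓ (Submodule.span L {s'}).restrictScalars K :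
              Submodule K (Fin 2 → L)) : Set (Fin 2 → L))).ncard ≤ Fintype.card K ^ e := by
          intro s' hs'
          obtain ⟨hs'S, hs'0⟩ := hs'
          have hs'X : s' ∈ X := hSle hs'S
          have hs'ne : s' ≠ 0 := by simpa using hs'0
          obtain ⟨hc, _⟩ := hcard (X ⊓ (Submodule.span L {s'}).restrictScalars K) inf_le_left
          rw [hc, hpiece s' hs'X hs'ne]
        have hUle := aux_ncard_biUnion_le hS0fin
          (fun s' => ((X ⊓ (Submodule.span L {s'}).restrictScalars K :
            Submodule K (Fin 2 → L)) : Set (Fin 2 → L))) (Fintype.card K ^ e) hBpieces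
        have hUfin : (⋃ s' ∈ (S : Set (Fin 2 → L)) \ {0},
            ((X ⊓ (Submodule.span L {s'}).restrictScalars K :
              Submodule K (Fin 2 → L)) : Set (Fin 2 → L))).Finite :=
          Set.Finite.biUnion hS0fin fun s' hs' =>
            (hcard (X ⊓ (Submodule.span L {s'}).restrictScalars K) inf_le_left).2
        have hchain : (X : Set (Fin 2 → L)).ncard ≤
            1 + ((S : Set (Fin 2 → L)) \ {0}).ncard * Fintype.card K ^ e := by
          calc (X : Set (Fin 2 → L)).ncard
              ≤ ({0} ∪ ⋃ s' ∈ (S : Set (Fin 2 → L)) \ {0},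
                ((X ⊓ (Submodule.span L {s'}).restrictScalars K :
                  Submodule K (Fin 2 → L)) : Set (Fin 2 → L))).ncard :=
                Set.ncard_le_ncard hsub ((Set.finite_singleton 0).union hUfin)
            _ ≤ ({0} : Set (Fin 2 → L)).ncard + _ := Set.ncard_union_le _ _
            _ ≤ 1 + ((S : Set (Fin 2 → L)) \ {0}).ncard * Fintype.card K ^ e := by
                rw [Set.ncard_singleton]
                exact Nat.add_le_add_left hUle 1
        rw [hXcard, hS0card] at hchain
        set q := Fintype.card K with hq_def
        have harith1 : (q ^ (j * e) - 1) * q ^ e = q ^ (j * e) * q ^ e - q ^ e :=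
          Nat.sub_one_mul _ _
        have harith2 : q ^ (j * e) * q ^ e = q ^ ((j + 1) * e) := by
          rw [← pow_add]
          congr 1
          ring
        have harith3 : q ^ ((j + 1) * e) ≤ q ^ n := by
          apply Nat.pow_le_pow_right (by omega)
          rw [hl]
          exact Nat.mul_le_mul_right e hj
        have harith4 : 2 ≤ q ^ e := by
          calc 2 ≤ q := hq
            _ = q ^ 1 := (pow_one q).symm
            _ ≤ q ^ e := Nat.pow_le_pow_right (by omega) he1
        have harith5 : q ^ e ≤ q ^ ((j + 1) * e) := by
          apply Nat.pow_le_pow_right (by omega)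
          nlinarith
        rw [harith1, harith2] at hchain
        omega
      obtain ⟨y, hyX, hy0, hybot⟩ := hy
      -- the new family
      set P : Submodule L (Fin 2 → L) := Submodule.span L {y} with hP_def
      set H' : Fin (j + 1) → Submodule L (Fin 2 → L) := Fin.snoc H P with hH'_def
      have hH'cast : ∀ i : Fin j, H' i.castSucc = H i := fun i => by simp [hH'_def]
      have hH'last : H' (Fin.last j) = P := by simp [hH'_def]
      have hPnotold : ∀ i : Fin j, H i ≠ P := by
        intro i hip
        have h1' : X ⊓ P.restrictScalars K ≤ S := by
          rw [← hip]
          exact le_iSup (fun i => X ⊓ (H i).restrictScalars K) i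
        have h2' : X ⊓ P.restrictScalars K = ⊥ := by
          rw [← hybot]
          exact le_antisymm (le_inf le_rfl h1') inf_le_left
        have : y ∈ X ⊓ P.restrictScalars K :=
          ⟨hyX, Submodule.mem_span_singleton_self y⟩
        rw [h2', Submodule.mem_bot] at this
        exact hy0 this
      have hinj' : Function.Injective H' := by
        intro a b hab
        rcases Fin.eq_castSucc_or_eq_last a with ⟨a', rfl⟩ | rfl <;>
          rcases Fin.eq_castSucc_or_eq_last b with ⟨b', rfl⟩ | rfl
        · rw [hH'cast, hH'cast] at hab
          exact congrArg Fin.castSucc (Hinj hab)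
        · rw [hH'cast, hH'last] at hab
          exact absurd hab (hPnotold a')
        · rw [hH'last, hH'cast] at hab
          exact absurd hab.symm (hPnotold b')
        · rfl
      have hdim1' : ∀ i, finrank L ↥(H' i) = 1 := by
        intro i
        rcases Fin.eq_castSucc_or_eq_last i with ⟨i', rfl⟩ | rfl
        · rw [hH'cast]; exact H1 i'
        · rw [hH'last]; exact finrank_span_singleton hy0
      have hpiece' : ∀ i, finrank K ↥(X ⊓ (H' i).restrictScalars K) = e := by
        intro i
        rcases Fin.eq_castSucc_or_eq_last i with ⟨i', rfl⟩ | rfl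
        · rw [hH'cast]; exact He i'
        · rw [hH'last]; exact hpiece y hyX hy0
      have hsup_split : (⨆ i, X ⊓ (H' i).restrictScalars K)
          = S ⊔ (X ⊓ P.restrictScalars K) := by
        apply le_antisymm
        · apply iSup_le
          intro i
          rcases Fin.eq_castSucc_or_eq_last i with ⟨i', rfl⟩ | rfl
          · rw [hH'cast]
            exact le_sup_of_le_left (le_iSup (fun k => X ⊓ (H k).restrictScalars K) i')
          · rw [hH'last]
            exact le_sup_right
        · apply sup_le
          · apply iSup_le
            intro i'
            have := le_iSup (fun i => X ⊓ (H' i).restrictScalars K) i'.castSucc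
            rw [hH'cast] at this
            exact this
          · have := le_iSup (fun i => X ⊓ (H' i).restrictScalars K) (Fin.last j)
            rw [hH'last] at this
            exact this
      haveI : FiniteDimensional K ↥S := Submodule.finiteDimensional_of_le hSle
      haveI : FiniteDimensional K ↥(X ⊓ P.restrictScalars K) :=
        Submodule.finiteDimensional_of_le inf_le_left
      have hsuprank : finrank K ↥(⨆ i, X ⊓ (H' i).restrictScalars K) = (j + 1) * e := by
        rw [hsup_split]
        have hid := Submodule.finrank_sup_add_finrank_inf_eq S (X ⊓ P.restrictScalars K)
        have hbot : S ⊓ (X ⊓ P.restrictScalars K) = ⊥ := by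
          rw [inf_comm]; exact hybot
        rw [hbot, finrank_bot, Hsup] at hid
        have hP_e : finrank K ↥(X ⊓ P.restrictScalars K) = e := hpiece y hyX hy0
        rw [hP_e] at hid
        have : (j + 1) * e = j * e + e := by ring
        omega
      exact ⟨H', hinj', hdim1', hpiece', hsuprank⟩
  -- conclude
  obtain ⟨H, Hinj, H1, He, Hsup⟩ := main l le_rfl
  haveI : ∀ i : Fin l, FiniteDimensional K ↥(X ⊓ (H i).restrictScalars K) :=
    fun i => Submodule.finiteDimensional_of_le inf_le_left
  have hsupX : (⨆ i, X ⊓ (H i).restrictScalars K) = X := by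
    apply Submodule.eq_of_le_of_finrank_le (iSup_le fun i => inf_le_left)
    rw [Hsup, hXrank, hl]
  have hindep : iSupIndep (fun i => X ⊓ (H i).restrictScalars K) := by
    apply aux_iSupIndep_of_finrank
    rw [Hsup]
    rw [Finset.sum_congr rfl fun i _ => He i]
    simp [Finset.sum_const, Finset.card_univ, mul_comm]
  exact ⟨H, Hinj, H1, He, hsupX, hindep⟩
end

section
/- Let d, l, m, n be positive integers with l ≥ 2, d < n ≤ m, n = l(n−d) and (n−d) dividing m, and let K be the subfield of F_{q^m} with [K : F_q] = n − d. Fix an F_q-basis a₁,…,a_{n−d} of K. Let C ⊆ F_{q^m}^l be an F_{q^m}-linear subspace of dimension 2 which is non-degenerate over K (for every nonzero a ∈ K^l there exists c ∈ C with c·a ≠ 0) and such that every nonzero codeword c ∈ C has rank_K(c) ≥ l − 1 (i.e. C is an [l,2,l−1] MRD code over F_{q^m}/K). Let C̃ = {(a_j c_i)_{1≤i≤l, 1≤j≤n−d} : c ∈ C} ⊆ F_{q^m}^n. Then C̃ is a non-degenerate [n,2,d] antipodal two-weight rank metric code over F_{q^m}/F_q. -/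
open Pointwise
set_option maxHeartbeats 1000000


/-- Expanding an `[l,2,l-1]` MRD code `C` over `F_{q^m}/K`
(`K = F_{q^{n-d}}`, `n = l(n-d)`, `d < n ≤ m`) with respect to an `F_q`-basis `a₁,…,a_{n-d}`
of `K` yields a non-degenerate `[n,2,d]` antipodal two-weight rank metric code `C̃` over
`F_{q^m}/F_q`. -/
theorem mrd_expansion_is_atw
    {K E L : Type*} [Field K] [Fintype K] [Field E] [Field L]
    [Algebra K E] [Algebra E L] [Algebra K L] [IsScalarTower K E L]
    {d l m n : ℕ} (hl : 2 ≤ l) (hdn : d < n) (hnm : n ≤ m) (hn : n = l * (n - d))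
    (hKE : Module.finrank K E = n - d) (hKL : Module.finrank K L = m)
    (a : Fin (n - d) → E) (hlin : LinearIndependent K a)
    (hspan : Submodule.span K (Set.range a) = ⊤)
    (C : Submodule L (Fin l → L)) (hdim : Module.finrank L C = 2)
    (hndE : ∀ b : Fin l → E, b ≠ 0 → ∃ c ∈ C, ∑ i, c i * algebraMap E L (b i) ≠ 0)
    (hMRD : ∀ c ∈ C, c ≠ 0 →
      l - 1 ≤ Module.finrank E (Submodule.span E (Set.range c))) :
    ∃ D : Submodule L (Fin n → L),
      (D : Set (Fin n → L)) =
        (fun c : Fin l → L => fun j : Fin n =>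
          c ⟨(j : ℕ) / (n - d), Nat.div_lt_of_lt_mul (by rw [Nat.mul_comm]; omega)⟩ *
            algebraMap E L (a ⟨(j : ℕ) % (n - d), Nat.mod_lt _ (by omega)⟩)) ''
          (C : Set (Fin l → L)) ∧
      Module.finrank L D = 2 ∧
      (∀ b : Fin n → K, b ≠ 0 → ∃ v ∈ D, ∑ j, v j * algebraMap K L (b j) ≠ 0) ∧
      (∀ v ∈ D, v ≠ 0 → d ≤ rankWeight K v) ∧
      (∃ v ∈ D, v ≠ 0 ∧ rankWeight K v = d) ∧
      (∀ v ∈ D, v ≠ 0 → rankWeight K v = d ∨ rankWeight K v = n) ∧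
      (∃ v ∈ D, rankWeight K v = n) := by
  classical
  have e_pos : 0 < n - d := Nat.sub_pos_of_lt hdn
  haveI : FiniteDimensional K L := FiniteDimensional.of_finrank_pos (by rw [hKL]; omega)
  haveI : FiniteDimensional K E := FiniteDimensional.of_finrank_pos (by rw [hKE]; omega)
  haveI : FiniteDimensional E L := FiniteDimensional.right K E L
  -- index arithmetic
  have hlt : ∀ (i : Fin l) (t : Fin (n - d)), (i : ℕ) * (n - d) + (t : ℕ) < n := by
    intro i t
    have h1 : (i : ℕ) + 1 ≤ l := i.isLt
    have h2 := Nat.mul_le_mul_right (n - d) h1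
    have h3 : ((i : ℕ) + 1) * (n - d) = (i : ℕ) * (n - d) + (n - d) := by ring
    omega
  have hdiv : ∀ (i : Fin l) (t : Fin (n - d)),
      ((i : ℕ) * (n - d) + (t : ℕ)) / (n - d) = (i : ℕ) := by
    intro i t
    rw [add_comm, Nat.add_mul_div_right _ _ e_pos, Nat.div_eq_of_lt t.isLt, zero_add]
  have hmod : ∀ (i : Fin l) (t : Fin (n - d)),
      ((i : ℕ) * (n - d) + (t : ℕ)) % (n - d) = (t : ℕ) := by
    intro i t
    rw [add_comm, Nat.add_mul_mod_self_right, Nat.mod_eq_of_lt t.isLt]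
  -- the expansion map
  set φ : (Fin l → L) →ₗ[L] (Fin n → L) :=
    { toFun := fun c : Fin l → L => fun j : Fin n =>
        c ⟨(j : ℕ) / (n - d), Nat.div_lt_of_lt_mul (by rw [Nat.mul_comm]; omega)⟩ *
          algebraMap E L (a ⟨(j : ℕ) % (n - d), Nat.mod_lt _ (by omega)⟩)
      map_add' := by intro x y; funext j; simp [add_mul]
      map_smul' := by intro r x; funext j; simp [mul_assoc] } with hφdef
  have hφ : ∀ (c : Fin l → L) (j : Fin n), φ c j =
      c ⟨(j : ℕ) / (n - d), Nat.div_lt_of_lt_mul (by rw [Nat.mul_comm]; omega)⟩ *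
        algebraMap E L (a ⟨(j : ℕ) % (n - d), Nat.mod_lt _ (by omega)⟩) := fun _ _ => rfl
  have hφmem : ∀ (c : Fin l → L) (i : Fin l) (t : Fin (n - d)),
      φ c ⟨(i : ℕ) * (n - d) + (t : ℕ), hlt i t⟩ = algebraMap E L (a t) * c i := by
    intro c i t
    rw [hφ]
    simp only [hdiv, hmod, Fin.eta]
    rw [mul_comm]
  have hφinj : Function.Injective φ := by
    rw [← LinearMap.ker_eq_bot, LinearMap.ker_eq_bot']
    intro c hc
    funext i
    have := congrFun hc ⟨(i : ℕ) * (n - d) + (0 : ℕ), by have := hlt i ⟨0, e_pos⟩; simpa using this⟩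
    rw [show ((⟨(i : ℕ) * (n - d) + (0 : ℕ), _⟩ : Fin n)) =
      (⟨(i : ℕ) * (n - d) + ((⟨0, e_pos⟩ : Fin (n - d)) : ℕ), hlt i ⟨0, e_pos⟩⟩ : Fin n) from rfl,
      hφmem] at this
    have ha0 : algebraMap E L (a ⟨0, e_pos⟩) ≠ 0 := by
      simpa using (hlin.ne_zero ⟨0, e_pos⟩)
    have : algebraMap E L (a ⟨0, e_pos⟩) * c i = 0 := this
    rcases mul_eq_zero.mp this with h | h
    · exact absurd h ha0
    · exact h
  -- range of an expanded codeword
  have hsets : ∀ c : Fin l → L, Set.range (φ c) = Set.range a • Set.range c := by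
    intro c
    ext x
    constructor
    · rintro ⟨j, rfl⟩
      rw [hφ]
      refine Set.mem_smul.mpr ⟨a ⟨(j : ℕ) % (n - d), Nat.mod_lt _ (by omega)⟩,
        Set.mem_range_self _,
        c ⟨(j : ℕ) / (n - d), Nat.div_lt_of_lt_mul (by rw [Nat.mul_comm]; omega)⟩,
        Set.mem_range_self _, ?_⟩
      rw [Algebra.smul_def, mul_comm]
    · intro hx
      obtain ⟨p, ⟨t, rfl⟩, q, ⟨i, rfl⟩, rfl⟩ := Set.mem_smul.mp hx
      exact ⟨⟨(i : ℕ) * (n - d) + (t : ℕ), hlt i t⟩, by rw [hφmem, Algebra.smul_def]⟩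
  -- span identity and the key rank formula
  have hspan2 : ∀ c : Fin l → L, Submodule.span K (Set.range (φ c)) =
      (Submodule.span E (Set.range c)).restrictScalars K := by
    intro c
    rw [hsets c, Submodule.span_smul_of_span_eq_top hspan]
  have hrank : ∀ c : Fin l → L, rankWeight K (φ c) =
      (n - d) * Module.finrank E (Submodule.span E (Set.range c)) := by
    intro c
    have h1 : rankWeight K (φ c) =
        Module.finrank K ((Submodule.span E (Set.range c)).restrictScalars K) := by
      rw [rankWeight, hspan2 c]
    have h2 : Module.finrank K ((Submodule.span E (Set.range c)).restrictScalars K) =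
        Module.finrank K (Submodule.span E (Set.range c)) :=
      ((Submodule.restrictScalarsEquiv K E L (Submodule.span E (Set.range c))).restrictScalars
        K).finrank_eq
    rw [h1, h2, ← Module.finrank_mul_finrank (F := K) (K := E)
      (A := (Submodule.span E (Set.range c))), hKE]
  -- generic rank bounds
  have hrk_le : ∀ c : Fin l → L, Module.finrank E (Submodule.span E (Set.range c)) ≤ l := by
    intro c
    simpa [Set.finrank] using finrank_range_le_card (R := E) c
  have hrk_lt : ∀ c : Fin l → L, ¬ LinearIndependent E c →
      Module.finrank E (Submodule.span E (Set.range c)) ≤ l - 1 := by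
    intro c hc
    have hne : Module.finrank E (Submodule.span E (Set.range c)) ≠ l := by
      intro h
      exact hc (linearIndependent_iff_card_eq_finrank_span.mpr (by
        rw [Set.finrank, h]; simp))
    have := hrk_le c
    omega
  -- a codeword of non-full rank
  have hlow : ∃ c ∈ C, c ≠ 0 ∧
      Module.finrank E (Submodule.span E (Set.range c)) = l - 1 := by
    have hni : ¬ Function.Injective ((LinearMap.proj (⟨0, by omega⟩ : Fin l)).comp
        C.subtype) := by
      intro hinj
      have := LinearMap.finrank_le_finrank_of_injective hinj
      rw [hdim, Module.finrank_self] at this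
      omega
    rw [Function.not_injective_iff] at hni
    obtain ⟨x, y, hxy, hne⟩ := hni
    refine ⟨(x : Fin l → L) - (y : Fin l → L), sub_mem x.2 y.2, ?_, ?_⟩
    · intro h
      exact hne (Subtype.ext (sub_eq_zero.mp h))
    · have h0 : ((x : Fin l → L) - (y : Fin l → L)) ⟨0, by omega⟩ = 0 := by
        have : (x : Fin l → L) ⟨0, by omega⟩ = (y : Fin l → L) ⟨0, by omega⟩ := hxy
        simp [this]
      have hnli : ¬ LinearIndependent E ((x : Fin l → L) - (y : Fin l → L)) := by
        intro hli
        exact hli.ne_zero ⟨0, by omega⟩ h0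
      have h1 := hrk_lt _ hnli
      have h2 := hMRD _ (sub_mem x.2 y.2) (fun h => hne (Subtype.ext (sub_eq_zero.mp h)))
      omega
  -- Fintype instances
  haveI : Finite E := Module.finite_of_finite K
  haveI : Finite L := Module.finite_of_finite K
  haveI : Fintype E := Fintype.ofFinite E
  haveI : Fintype L := Fintype.ofFinite L
  -- a full-rank codeword
  have hfull : ∃ c ∈ C, c ≠ 0 ∧
      Module.finrank E (Submodule.span E (Set.range c)) = l := by
    by_contra hcon
    push_neg at hcon
    have hdep : ∀ c ∈ C, ∃ b : Fin l → E, b ≠ 0 ∧ ∑ i, c i * algebraMap E L (b i) = 0 := by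
      intro c hc
      by_cases hc0 : c = 0
      · exact ⟨fun _ => 1, by
          intro h
          simpa using congrFun h ⟨0, by omega⟩, by simp [hc0]⟩
      have hnli : ¬ LinearIndependent E c := by
        intro hli
        exact hcon c hc hc0 (by
          have := linearIndependent_iff_card_eq_finrank_span.mp hli
          rw [Set.finrank] at this
          simpa using this.symm)
      obtain ⟨g, hsum, i, hgi⟩ := Fintype.not_linearIndependent_iff.mp hnli
      refine ⟨g, fun h0 => hgi (by rw [h0]; rfl), ?_⟩
      rw [← hsum]
      congr 1
      funext i
      rw [Algebra.smul_def, mul_comm]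
    choose! bfun hbne hbsum using hdep
    set β := Module.finBasisOfFinrankEq L C hdim with hβ
    set c0 : Fin l → L := ((β 0 : C) : Fin l → L) with hc0
    set c1 : Fin l → L := ((β 1 : C) : Fin l → L) with hc1
    have hmem : ∀ lam : L, c0 + lam • c1 ∈ C := fun lam =>
      add_mem (β 0).2 (Submodule.smul_mem _ _ (β 1).2)
    have hcard : Fintype.card {v : Fin l → E // v ≠ 0} < Fintype.card L := by
      have h1 : Fintype.card {v : Fin l → E // v ≠ 0} < Fintype.card (Fin l → E) :=
        Fintype.card_subtype_lt (x := 0) (by simp)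
      have h2 : Fintype.card (Fin l → E) = Fintype.card E ^ l := by
        rw [Fintype.card_fun, Fintype.card_fin]
      have h3 : Fintype.card L = Fintype.card E ^ Module.finrank E L := by
        rw [Module.card_fintype (Module.finBasis E L), Fintype.card_fin]
      have h4 : l ≤ Module.finrank E L := by
        have ht : Module.finrank K E * Module.finrank E L = Module.finrank K L :=
          Module.finrank_mul_finrank K E L
        rw [hKE, hKL] at ht
        have : l * (n - d) ≤ (n - d) * Module.finrank E L := by omega
        rw [mul_comm (n - d)] at this
        exact Nat.le_of_mul_le_mul_right this e_pos
      have h5 : Fintype.card E ^ l ≤ Fintype.card E ^ Module.finrank E L :=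
        Nat.pow_le_pow_right Fintype.card_pos h4
      omega
    obtain ⟨x, y, hxy, hfeq⟩ := Fintype.exists_ne_map_eq_of_card_lt
      (fun lam : L => (⟨bfun (c0 + lam • c1), hbne _ (hmem lam)⟩ : {v : Fin l → E // v ≠ 0}))
      hcard
    set b : Fin l → E := bfun (c0 + x • c1) with hb
    have hbeq : bfun (c0 + y • c1) = b := (congrArg Subtype.val hfeq).symm
    -- the linear functional associated to b
    set ψ : (Fin l → L) →ₗ[L] L :=
      { toFun := fun v => ∑ i, v i * algebraMap E L (b i)
        map_add' := by intro v w; simp [add_mul, Finset.sum_add_distrib]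
        map_smul' := by intro r v; simp [Finset.mul_sum, mul_assoc] } with hψ
    have hψx : ψ (c0 + x • c1) = 0 := hbsum _ (hmem x)
    have hψy : ψ (c0 + y • c1) = 0 := by
      have := hbsum _ (hmem y)
      rw [hbeq] at this
      exact this
    have hψc1 : ψ c1 = 0 := by
      have hxx : ψ c0 + x • ψ c1 = 0 := by
        rw [← ψ.map_smul, ← ψ.map_add]; exact hψx
      have hyy : ψ c0 + y • ψ c1 = 0 := by
        rw [← ψ.map_smul, ← ψ.map_add]; exact hψy
      have h2 : (x - y) • ψ c1 = 0 := by
        rw [sub_smul]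
        have := hxx.trans hyy.symm
        have h3 : x • ψ c1 = y • ψ c1 := by
          exact add_left_cancel this
        rw [h3, sub_self]
      rcases smul_eq_zero.mp h2 with h | h
      · exact absurd (sub_eq_zero.mp h) hxy
      · exact h
    have hψc0 : ψ c0 = 0 := by
      have hxx : ψ c0 + x • ψ c1 = 0 := by
        rw [← ψ.map_smul, ← ψ.map_add]; exact hψx
      rw [hψc1, smul_zero, add_zero] at hxx
      exact hxx
    have hψall : ∀ v ∈ C, ψ v = 0 := by
      intro v hv
      have hrepr : (⟨v, hv⟩ : C) = β.repr ⟨v, hv⟩ 0 • β 0 + β.repr ⟨v, hv⟩ 1 • β 1 := by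
        conv_lhs => rw [← β.sum_repr ⟨v, hv⟩]
        rw [Fin.sum_univ_two]
      have hv2 : v = β.repr ⟨v, hv⟩ 0 • c0 + β.repr ⟨v, hv⟩ 1 • c1 := by
        have h := congrArg (Subtype.val) hrepr
        rw [Submodule.coe_add, Submodule.coe_smul, Submodule.coe_smul] at h
        exact h
      rw [hv2, ψ.map_add, ψ.map_smul, ψ.map_smul, hψc0, hψc1, smul_zero, smul_zero, add_zero]
    obtain ⟨c, hcC, hcne⟩ := hndE b (hbne _ (hmem x))
    exact hcne (hψall c hcC)
  -- the index equivalence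
  let σ : Fin l × Fin (n - d) ≃ Fin n :=
    { toFun := fun p => ⟨(p.1 : ℕ) * (n - d) + (p.2 : ℕ), hlt p.1 p.2⟩
      invFun := fun j => (⟨(j : ℕ) / (n - d), Nat.div_lt_of_lt_mul (by rw [Nat.mul_comm]; omega)⟩,
        ⟨(j : ℕ) % (n - d), Nat.mod_lt _ (by omega)⟩)
      left_inv := by
        rintro ⟨i, t⟩
        refine Prod.ext (Fin.ext ?_) (Fin.ext ?_)
        · exact hdiv i t
        · exact hmod i t
      right_inv := by
        intro j
        refine Fin.ext ?_
        show (j : ℕ) / (n - d) * (n - d) + (j : ℕ) % (n - d) = (j : ℕ)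
        rw [mul_comm]
        exact Nat.div_add_mod _ _ }
  -- non-degeneracy over K
  have hnondeg : ∀ b : Fin n → K, b ≠ 0 →
      ∃ v ∈ Submodule.map φ C, ∑ j, v j * algebraMap K L (b j) ≠ 0 := by
    intro b hb
    set b' : Fin l → E := fun i => ∑ t : Fin (n - d), b (σ (i, t)) • a t with hb'
    have hb'ne : b' ≠ 0 := by
      intro h0
      apply hb
      funext j
      have hj := congrFun h0 (σ.symm j).1
      simp only [hb'] at hj
      have hz := Fintype.linearIndependent_iff.mp hlin
        (fun t => b (σ ((σ.symm j).1, t))) (by simpa using hj) (σ.symm j).2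
      have hjj : σ ((σ.symm j).1, (σ.symm j).2) = j := by
        rw [Prod.mk.eta, σ.apply_symm_apply]
      rw [hjj] at hz
      simpa using hz
    obtain ⟨c, hcC, hcne⟩ := hndE b' hb'ne
    refine ⟨φ c, Submodule.mem_map_of_mem hcC, ?_⟩
    have hsum : ∑ j, φ c j * algebraMap K L (b j) = ∑ i, c i * algebraMap E L (b' i) := by
      rw [← Equiv.sum_comp σ (fun j => φ c j * algebraMap K L (b j)), Fintype.sum_prod_type]
      apply Finset.sum_congr rfl
      intro i _
      simp only [hb']
      rw [map_sum (algebraMap E L), Finset.mul_sum]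
      apply Finset.sum_congr rfl
      intro t _
      have hστ : σ (i, t) = ⟨(i : ℕ) * (n - d) + (t : ℕ), hlt i t⟩ := rfl
      rw [hστ, hφmem, Algebra.smul_def, map_mul, ← IsScalarTower.algebraMap_apply]
      ring
    rw [hsum]
    exact hcne
  -- arithmetic identities
  have hndl : (n - d) * l = n := by rw [mul_comm]; omega
  have hndl1 : (n - d) * (l - 1) = d := by
    have h2 : (n - d) * (l - 1) + (n - d) * 1 = (n - d) * l := by
      rw [← Nat.mul_add]
      congr 1
      omega
    omega
  have hφne : ∀ c : Fin l → L, c ≠ 0 → φ c ≠ 0 := by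
    intro c hc h
    exact hc (hφinj (h.trans (map_zero φ).symm))
  -- assemble
  refine ⟨Submodule.map φ C, ?_, ?_, hnondeg, ?_, ?_, ?_, ?_⟩
  · rw [Submodule.map_coe]
    rfl
  · rw [← hdim]
    exact ((Submodule.equivMapOfInjective φ hφinj C).finrank_eq).symm
  · rintro v ⟨c, hc, rfl⟩ hvne
    have hc0 : c ≠ 0 := by rintro rfl; exact hvne (map_zero φ)
    have h1 := hMRD c hc hc0
    rw [hrank c]
    have h3 := Nat.mul_le_mul_left (n - d) h1
    omega
  · obtain ⟨c, hc, hc0, hcr⟩ := hlow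
    exact ⟨φ c, Submodule.mem_map_of_mem hc, hφne c hc0, by rw [hrank c, hcr, hndl1]⟩
  · rintro v ⟨c, hc, rfl⟩ hvne
    have hc0 : c ≠ 0 := by rintro rfl; exact hvne (map_zero φ)
    have h1 := hMRD c hc hc0
    have h2 := hrk_le c
    rw [hrank c]
    rcases Nat.lt_or_ge (Module.finrank E (Submodule.span E (Set.range c))) l with h | h
    · left
      have : Module.finrank E (Submodule.span E (Set.range c)) = l - 1 := by omega
      rw [this, hndl1]
    · right
      have : Module.finrank E (Submodule.span E (Set.range c)) = l := by omega
      rw [this, hndl]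
  · obtain ⟨c, hc, hc0, hcr⟩ := hfull
    exact ⟨φ c, Submodule.mem_map_of_mem hc, by rw [hrank c, hcr, hndl]⟩
end
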